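/- arXiv:1405.2700 — 6 statements merged into one kernel-verified Lean document; each statement's English description precedes it below -/
import Mathlib

section
/- Let (W, S) be a Coxeter system with length function ℓ, and let g, h ∈ W. Then ℓ(gh) + 2·|{t ∈ W : t is a reflection, ℓ(gt) < ℓ(g), and ℓ(h⁻¹t) < ℓ(h⁻¹)}| = ℓ(g) + ℓ(h); in particular the displayed set is finite. -/
namespace CoxAux
open CoxeterSystem List

noncomputable section
open scoped Classical

variable {B W : Type*} [Group W] {M : CoxeterMatrix B} (cs : CoxeterSystem M W)

local prefix:100 "s" => cs.simple
local prefix:100 "π" => cs.wordProd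
local prefix:100 "ℓ" => cs.length

theorem simple_conj_conj (i : B) (y : W) : s i * (s i * y * s i) * s i = y := by
  rw [← mul_assoc, ← mul_assoc, cs.simple_mul_simple_self, one_mul, mul_assoc,
    cs.simple_mul_simple_self, mul_one]

theorem conj_eq_iff (i : B) (x y : W) : s i * x * s i = y ↔ x = s i * y * s i := by
  constructor
  · rintro rfl
    rw [simple_conj_conj]
  · rintro rfl
    rw [simple_conj_conj]

theorem conj_simple_eq_simple_iff (i : B) (t : W) :
    (s i * t * s i = s i) ↔ (t = s i) := by
  rw [conj_eq_iff, cs.simple_mul_simple_self, one_mul]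

/-- The basic permutation of `W × ZMod 2` associated to a simple reflection. -/
def permAux (i : B) : W × ZMod 2 → W × ZMod 2 :=
  fun x => (s i * x.1 * s i, x.2 + if x.1 = s i then 1 else 0)

theorem permAux_involutive (i : B) : Function.Involutive (permAux cs i) := by
  rintro ⟨t, z⟩
  simp only [permAux]
  ext
  · exact simple_conj_conj cs i t
  · show z + (if t = s i then 1 else 0) + (if s i * t * s i = s i then 1 else 0) = z
    rw [if_congr (conj_simple_eq_simple_iff cs i t) rfl rfl, add_assoc,
      CharTwo.add_self_eq_zero, add_zero]

/-- The permutation of `W × ZMod 2` associated to a simple reflection. -/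
def perm (i : B) : Equiv.Perm (W × ZMod 2) := (permAux_involutive cs i).toPerm

@[simp] theorem perm_apply (i : B) (t : W) (z : ZMod 2) :
    perm cs i (t, z) = (s i * t * s i, z + if t = s i then 1 else 0) := rfl

theorem pow_perm_mul_perm (i j : B) (k : ℕ) (t : W) (z : ZMod 2) :
    ((perm cs i * perm cs j) ^ k) (t, z) =
      ((s i * s j) ^ k * t * ((s i * s j) ^ k)⁻¹,
        z + ∑ l ∈ Finset.range (2 * k),
          (if t = π (alternatingWord i j (2 * l + 1)) then 1 else 0)) := by
  have e1 : π (alternatingWord i j 1) = s j := by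
    simp [alternatingWord]
  have estep : ∀ q : ℕ, π (alternatingWord i j (q + 2))
      = π (alternatingWord i j q) * (s i * s j) := by
    intro q
    rw [alternatingWord_succ, alternatingWord_succ, concat_eq_append, concat_eq_append,
      wordProd_append, wordProd_append]
    simp [mul_assoc]
  have e3 : π (alternatingWord i j 3) = s j * (s i * s j) := by
    rw [show (3:ℕ) = 1 + 2 from rfl, estep, e1]
  have e5 : ∀ l : ℕ, π (alternatingWord i j (2 * (l + 2) + 1))
      = s j * (s i * (π (alternatingWord i j (2 * l + 1)) * (s i * s j))) := by
    intro l
    have h1 : 2 * (l + 2) + 1 = (2 * l + 4) + 1 := by ring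
    have h2 : 2 * l + 4 = (2 * l + 3) + 1 := by ring
    have h3 : 2 * l + 3 = (2 * l + 1) + 2 := by ring
    rw [h1, alternatingWord_succ', if_pos (by exact ⟨l + 2, by ring⟩), wordProd_cons,
      h2, alternatingWord_succ', if_neg (by simp [Nat.even_add_one, parity_simps]), wordProd_cons,
      h3, estep]
  induction k generalizing t z with
  | zero => simp
  | succ k ih =>
    rw [pow_succ, Equiv.Perm.mul_apply]
    have h2 : (s j * t * s j = s i) ↔ (t = π (alternatingWord i j 3)) := by
      rw [conj_eq_iff, e3]; simp only [mul_assoc]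
    have hmul : (perm cs i * perm cs j) (t, z)
        = (s i * (s j * t * s j) * s i,
           z + ((if t = π (alternatingWord i j 1) then 1 else 0)
             + (if t = π (alternatingWord i j 3) then 1 else 0))) := by
      rw [Equiv.Perm.mul_apply, perm_apply, perm_apply]
      ext
      · simp [mul_assoc]
      · simp only [e1, if_congr h2 rfl rfl, add_assoc]
    rw [hmul, ih]
    have hconj : ∀ l : ℕ,
        (s i * (s j * t * s j) * s i = π (alternatingWord i j (2 * l + 1)))
          ↔ (t = π (alternatingWord i j (2 * (l + 2) + 1))) := by
      intro l
      rw [conj_eq_iff, conj_eq_iff, e5]; simp only [mul_assoc]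
    ext
    · show (s i * s j) ^ k * (s i * (s j * t * s j) * s i) * ((s i * s j) ^ k)⁻¹ = _
      have hp : s i * (s j * t * s j) * s i = (s i * s j) * t * (s i * s j)⁻¹ := by
        rw [mul_inv_rev, cs.inv_simple, cs.inv_simple]
        simp only [mul_assoc]
      rw [hp, pow_succ']
      generalize s i * s j = p
      group
    · show z + _ + _ = z + _
      rw [add_assoc]
      congr 1
      simp only [if_congr (hconj _) rfl rfl]
      rw [show 2 * (k+1) = (2 * k + 1) + 1 from by ring, Finset.sum_range_succ',
        Finset.sum_range_succ']
      have hsum : ∀ x : ℕ, (if t = π (alternatingWord i j (2 * (x + 2) + 1)) then (1:ZMod 2) else 0)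
          = (if t = π (alternatingWord i j (2 * (x + 1 + 1) + 1)) then (1:ZMod 2) else 0) := by
        intro x; norm_num
      simp only [hsum]
      norm_num
      ring


theorem perm_liftable : M.IsLiftable (perm cs) := by
  intro i j
  apply Equiv.ext
  rintro ⟨t, z⟩
  have hpow := pow_perm_mul_perm cs i j (M i j) t z
  rw [cs.simple_mul_simple_pow i j] at hpow
  set m := M i j with hm
  have key : ∀ l : ℕ, π (alternatingWord i j (2 * (m + l) + 1)) = π (alternatingWord i j (2 * l + 1)) := by
    intro l
    rw [prod_alternatingWord_eq_mul_pow, prod_alternatingWord_eq_mul_pow]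
    have h1 : ¬ Even (2 * (m + l) + 1) := by simp [parity_simps]
    have h2 : ¬ Even (2 * l + 1) := by simp [parity_simps]
    rw [if_neg h1, if_neg h2]
    have e1 : (2 * (m + l) + 1) / 2 = m + l := by omega
    have e2 : (2 * l + 1) / 2 = l := by omega
    rw [e1, e2, add_comm m l, pow_add]
    rw [hm, cs.simple_mul_simple_pow i j, mul_one]
  have hsum : ∑ l ∈ Finset.range (2 * m),
      (if t = π (alternatingWord i j (2 * l + 1)) then (1 : ZMod 2) else 0) = 0 := by
    rw [two_mul, Finset.sum_range_add]
    have : ∀ l, (if t = π (alternatingWord i j (2 * (m + l) + 1)) then (1 : ZMod 2) else 0)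
        = (if t = π (alternatingWord i j (2 * l + 1)) then (1 : ZMod 2) else 0) := by
      intro l; rw [key l]
    simp only [this]
    exact CharTwo.add_self_eq_zero _
  rw [hsum] at hpow
  rw [hpow]
  simp

/-- The permutation representation of `W` on `W × ZMod 2`. -/
def phi : W →* Equiv.Perm (W × ZMod 2) := cs.lift ⟨perm cs, perm_liftable cs⟩

@[simp] theorem phi_simple (i : B) : phi cs (s i) = perm cs i :=
  cs.lift_apply_simple (perm_liftable cs) i

theorem phi_wordProd_inv (ω : List B) (t : W) (z : ZMod 2) :
    phi cs (π ω)⁻¹ (t, z)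
      = ((π ω)⁻¹ * t * π ω, z + ((cs.leftInvSeq ω).count t : ZMod 2)) := by
  induction ω generalizing t z with
  | nil => simp
  | cons i ω ih =>
    rw [wordProd_cons, mul_inv_rev, cs.inv_simple, map_mul, Equiv.Perm.mul_apply, phi_simple,
      perm_apply, ih]
    have hcount : ((cs.leftInvSeq (i :: ω)).count t : ZMod 2)
        = (if t = s i then 1 else 0) + ((cs.leftInvSeq ω).count (s i * t * s i) : ZMod 2) := by
      show ((s i :: List.map (MulAut.conj (s i)) (cs.leftInvSeq ω)).count t : ZMod 2) = _
      rw [List.count_cons]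
      have himg : t = (MulAut.conj (s i)) (s i * t * s i) := by
        simp only [MulAut.conj_apply, cs.inv_simple]
        rw [simple_conj_conj]
      have : (List.map (MulAut.conj (s i)) (cs.leftInvSeq ω)).count t
          = (cs.leftInvSeq ω).count (s i * t * s i) := by
        nth_rw 1 [himg]
        exact List.count_map_of_injective _ _ (MulAut.conj (s i)).injective _
      rw [this]
      by_cases h : t = s i
      · subst h
        simp [add_comm]
      · have hbeq : (s i == t) = false := by
          simp [Ne.symm h]
        simp [hbeq, h]
    rw [hcount]
    ext
    · show (π ω)⁻¹ * (s i * t * s i) * π ω = (π ω)⁻¹ * s i * t * (s i * π ω)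
      simp only [mul_assoc]
    · show z + (if t = s i then 1 else 0) + ((cs.leftInvSeq ω).count (s i * t * s i) : ZMod 2)
        = z + ((if t = s i then 1 else 0) + ((cs.leftInvSeq ω).count (s i * t * s i) : ZMod 2))
      ring

/-- The sign of `t` with respect to `w`: this is `1` iff `t` is a left inversion of `w`. -/
def nn (w t : W) : ZMod 2 := (phi cs w⁻¹ (t, (0 : ZMod 2))).2

theorem phi_inv_apply (w t : W) (z : ZMod 2) :
    phi cs w⁻¹ (t, z) = (w⁻¹ * t * w, z + nn cs w t) := by
  obtain ⟨ω, -, rfl⟩ := cs.exists_reduced_word w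
  rw [phi_wordProd_inv, nn, phi_wordProd_inv]
  simp

theorem phi_apply (w t : W) (z : ZMod 2) :
    phi cs w (t, z) = (w * t * w⁻¹, z + nn cs w⁻¹ t) := by
  have := phi_inv_apply cs w⁻¹ t z
  rwa [inv_inv] at this

theorem nn_wordProd (ω : List B) (t : W) :
    nn cs (π ω) t = ((cs.leftInvSeq ω).count t : ZMod 2) := by
  rw [nn, phi_wordProd_inv]
  simp

theorem nn_inv_conj (u t : W) : nn cs u⁻¹ (u⁻¹ * t * u) = nn cs u t := by
  have h0 : phi cs u (phi cs u⁻¹ (t, (0:ZMod 2))) = (t, 0) := by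
    rw [← Equiv.Perm.mul_apply, ← map_mul, mul_inv_cancel, map_one]
    rfl
  rw [phi_inv_apply, phi_apply] at h0
  have h2 := congrArg Prod.snd h0
  simp only at h2
  linear_combination h2 - CharTwo.add_self_eq_zero (nn cs u t)

theorem phi_reflection_apply {t : W} (ht : cs.IsReflection t) (z : ZMod 2) :
    phi cs t (t, z) = (t, z + 1) := by
  obtain ⟨u, i, rfl⟩ := ht
  set t := u * s i * u⁻¹ with hdef
  have h1 : u⁻¹ * t * u = s i := by
    rw [hdef]; group
  have step1 : phi cs u⁻¹ (t, z) = (s i, z + nn cs u t) := by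
    rw [phi_inv_apply, h1]
  have step2 : phi cs (s i) (s i, z + nn cs u t) = (s i, z + nn cs u t + 1) := by
    rw [phi_simple, perm_apply, if_pos rfl]
    ext
    · show s i * s i * s i = s i
      rw [cs.simple_mul_simple_self, one_mul]
    · rfl
  have step3 : phi cs u (s i, z + nn cs u t + 1) = (t, z + nn cs u t + 1 + nn cs u⁻¹ (s i)) := by
    rw [phi_apply, hdef]
  have hnn : nn cs u⁻¹ (s i) = nn cs u t := by
    rw [← h1]
    exact nn_inv_conj cs u t
  have : phi cs t (t, z) = phi cs u (phi cs (s i) (phi cs u⁻¹ (t, z))) := by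
    rw [← Equiv.Perm.mul_apply, ← Equiv.Perm.mul_apply, ← map_mul, ← map_mul, hdef]
  rw [this, step1, step2, step3, hnn]
  ext
  · rfl
  · show z + nn cs u t + 1 + nn cs u t = z + 1
    have := CharTwo.add_self_eq_zero (nn cs u t)
    linear_combination this

theorem isLeftInversion_iff_nn {w t : W} (ht : cs.IsReflection t) :
    cs.IsLeftInversion w t ↔ nn cs w t = 1 := by
  have hback : ∀ v : W, nn cs v t = 1 → cs.IsLeftInversion v t := by
    intro v hv
    obtain ⟨ω, hred, rfl⟩ := cs.exists_reduced_word' v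
    rw [nn_wordProd] at hv
    have hmem : t ∈ cs.leftInvSeq ω := by
      by_contra hmem
      rw [List.count_eq_zero_of_not_mem hmem] at hv
      simp at hv
    exact cs.isLeftInversion_of_mem_leftInvSeq hred hmem
  constructor
  · intro hli
    rcases (by decide : ∀ x : ZMod 2, x = 0 ∨ x = 1) (nn cs w t) with h0 | h1
    · exfalso
      have hnn : nn cs (t * w) t = 1 := by
        rw [nn, mul_inv_rev, map_mul, Equiv.Perm.mul_apply, ht.inv,
          phi_reflection_apply cs ht, phi_inv_apply]
        show (0 : ZMod 2) + 1 + nn cs w t = 1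
        rw [h0, add_zero, zero_add]
      have := (hback _ hnn).2
      rw [← mul_assoc, ht.mul_self, one_mul] at this
      exact absurd hli.2 (by omega)
    · exact h1
  · exact hback w

theorem isLeftInversion_simple_mul_iff {w t : W} (i : B) (ht : cs.IsReflection t)
    (hne : t ≠ s i) :
    cs.IsLeftInversion (s i * w) t ↔ cs.IsLeftInversion w (s i * t * s i) := by
  have ht' : cs.IsReflection (s i * t * s i) := by
    have := CoxeterSystem.IsReflection.conj ht (s i)
    rwa [cs.inv_simple] at this
  rw [isLeftInversion_iff_nn cs ht, isLeftInversion_iff_nn cs ht']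
  have : nn cs (s i * w) t = nn cs w (s i * t * s i) := by
    rw [nn, mul_inv_rev, cs.inv_simple, map_mul, Equiv.Perm.mul_apply, phi_simple, perm_apply,
      if_neg hne, nn, phi_inv_apply, phi_inv_apply]
    show (0 : ZMod 2) + 0 + nn cs w (s i * t * s i) = 0 + nn cs w (s i * t * s i)
    ring
  rw [this]

theorem isRightInversion_mul_simple_iff {w t : W} (i : B) (ht : cs.IsReflection t)
    (hne : t ≠ s i) :
    cs.IsRightInversion (w * s i) t ↔ cs.IsRightInversion w (s i * t * s i) := by
  rw [← cs.isLeftInversion_inv_iff, ← cs.isLeftInversion_inv_iff, mul_inv_rev, cs.inv_simple]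
  exact isLeftInversion_simple_mul_iff cs i ht hne


/-- The intersection of the right inversion sets of `g` and `h⁻¹`, as a set. -/
def Aset (g h : W) : Set W :=
  {t : W | cs.IsReflection t ∧ ℓ (g * t) < ℓ g ∧ ℓ (h⁻¹ * t) < ℓ h⁻¹}

theorem mem_Aset_iff (g h t : W) :
    t ∈ Aset cs g h ↔ cs.IsRightInversion g t ∧ cs.IsRightInversion h⁻¹ t := by
  unfold Aset CoxeterSystem.IsRightInversion
  constructor
  · rintro ⟨h1, h2, h3⟩; exact ⟨⟨h1, h2⟩, ⟨h1, h3⟩⟩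
  · rintro ⟨⟨h1, h2⟩, ⟨-, h3⟩⟩; exact ⟨h1, h2, h3⟩

theorem aux (n : ℕ) : ∀ (g h : W), ℓ g = n →
    (Aset cs g h).Finite ∧ ℓ (g * h) + 2 * (Aset cs g h).ncard = ℓ g + ℓ h := by
  induction n using Nat.strong_induction_on with
  | _ n ihn =>
  intro g h hg
  rcases eq_or_ne g 1 with rfl | hg1
  · have hempty : Aset cs 1 h = ∅ := by
      ext t
      simp only [Aset, Set.mem_setOf_eq, Set.mem_empty_iff_false, iff_false, not_and]
      intro _ h2
      rw [one_mul, cs.length_one] at h2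
      omega
    rw [hempty]
    simp
  · obtain ⟨i, hi⟩ := cs.exists_rightDescent_of_ne_one hg1
    have hlen : ℓ (g * s i) + 1 = ℓ g := cs.isRightDescent_iff.mp hi
    set g' := g * s i with hg'
    set h' := s i * h with hh'
    have hgg : g' * s i = g := by rw [hg', cs.simple_mul_simple_cancel_right]
    have hhh : h'⁻¹ * s i = h⁻¹ := by
      rw [hh', mul_inv_rev, cs.inv_simple, cs.simple_mul_simple_cancel_right]
    have hgh : g' * h' = g * h := by
      rw [hg', hh', mul_assoc, cs.simple_mul_simple_cancel_left]
    obtain ⟨hfin', heq'⟩ := ihn (ℓ g') (by omega) g' h' rfl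
    -- the conjugation map
    set c : W → W := fun t => s i * t * s i with hc
    have hcinj : Function.Injective c := by
      intro a b hab
      have := congrArg (fun x => s i * x * s i) hab
      simpa only [hc, simple_conj_conj] using this
    have hclaim1 : ∀ t : W, t ≠ s i → (t ∈ Aset cs g h ↔ c t ∈ Aset cs g' h') := by
      intro t hne
      by_cases ht : cs.IsReflection t
      · rw [mem_Aset_iff, mem_Aset_iff, ← hgg, ← hhh] at *
        rw [isRightInversion_mul_simple_iff cs i ht hne,
          isRightInversion_mul_simple_iff cs i ht hne]
      · constructor
        · intro hmem
          exact absurd ((mem_Aset_iff cs g h t).mp hmem).1.1 ht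
        · intro hmem
          exfalso
          have h1 : cs.IsReflection (c t) := ((mem_Aset_iff cs g' h' (c t)).mp hmem).1.1
          have h2 : cs.IsReflection (s i * (c t) * (s i)⁻¹) := h1.conj (s i)
          rw [cs.inv_simple, hc] at h2
          simp only at h2
          rw [simple_conj_conj] at h2
          exact ht h2
    have hclaim2 : s i ∉ Aset cs g' h' := by
      rw [mem_Aset_iff]
      rintro ⟨⟨-, habs⟩, -⟩
      rw [hgg] at habs
      omega
    have hci : c (s i) = s i := by
      rw [hc]
      simp only [cs.simple_mul_simple_self, one_mul]
    have hcc : ∀ t, c (c t) = t := fun t => simple_conj_conj cs i t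
    by_cases hcase : ℓ (h⁻¹ * s i) < ℓ h⁻¹
    · -- s i ∈ Aset g h
      have hseteq : Aset cs g h = insert (s i) (c '' Aset cs g' h') := by
        ext t
        constructor
        · intro hmem
          rcases eq_or_ne t (s i) with rfl | hne
          · exact Set.mem_insert _ _
          · exact Set.mem_insert_of_mem _ ⟨c t, (hclaim1 t hne).mp hmem, hcc t⟩
        · intro hmem
          rcases hmem with rfl | ⟨t', ht', rfl⟩
          · rw [mem_Aset_iff]
            exact ⟨⟨cs.isReflection_simple i, hi⟩, ⟨cs.isReflection_simple i, hcase⟩⟩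
          · have hne : c t' ≠ s i := by
              intro habs
              have := congrArg c habs
              rw [hcc, hci] at this
              exact hclaim2 (this ▸ ht')
            rw [hclaim1 _ hne, hcc]
            exact ht'
      have hnmem : s i ∉ c '' Aset cs g' h' := by
        rintro ⟨t', ht', habs⟩
        have := congrArg c habs
        rw [hcc, hci] at this
        exact hclaim2 (this ▸ ht')
      have hfin : (Aset cs g h).Finite := by
        rw [hseteq]
        exact ((hfin'.image c).insert _)
      have hcard : (Aset cs g h).ncard = (Aset cs g' h').ncard + 1 := by
        rw [hseteq, Set.ncard_insert_of_notMem hnmem (hfin'.image c),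
          Set.ncard_image_of_injective _ hcinj]
      -- lengths
      have hinv : h'⁻¹ = h⁻¹ * s i := by rw [hh', mul_inv_rev, cs.inv_simple]
      have hlh : ℓ h' + 1 = ℓ h := by
        have hd := cs.length_mul_simple h⁻¹ i
        have e1 : ℓ (h⁻¹ * s i) + 1 = ℓ h⁻¹ := by omega
        rw [← cs.length_inv h', ← cs.length_inv h, hinv]
        exact e1
      refine ⟨hfin, ?_⟩
      rw [hcard]
      rw [hgh] at heq'
      omega
    · have hseteq : Aset cs g h = c '' Aset cs g' h' := by
        ext t
        constructor
        · intro hmem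
          have hne : t ≠ s i := by
            rintro rfl
            exact hcase ((mem_Aset_iff cs g h _).mp hmem).2.2
          exact ⟨c t, (hclaim1 t hne).mp hmem, hcc t⟩
        · rintro ⟨t', ht', rfl⟩
          have hne : c t' ≠ s i := by
            intro habs
            have := congrArg c habs
            rw [hcc, hci] at this
            exact hclaim2 (this ▸ ht')
          rw [hclaim1 _ hne, hcc]
          exact ht'
      have hfin : (Aset cs g h).Finite := by
        rw [hseteq]
        exact hfin'.image c
      have hcard : (Aset cs g h).ncard = (Aset cs g' h').ncard := by
        rw [hseteq, Set.ncard_image_of_injective _ hcinj]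
      have hinv : h'⁻¹ = h⁻¹ * s i := by rw [hh', mul_inv_rev, cs.inv_simple]
      have hlh : ℓ h' = ℓ h + 1 := by
        have hd := cs.length_mul_simple h⁻¹ i
        have e1 : ℓ (h⁻¹ * s i) = ℓ h⁻¹ + 1 := by omega
        rw [← cs.length_inv h', ← cs.length_inv h, hinv]
        exact e1
      refine ⟨hfin, ?_⟩
      rw [hcard]
      rw [hgh] at heq'
      omega

end
end CoxAux

/-- For `g, h` in a Coxeter group,
`ℓ(gh) = ℓ(g) + ℓ(h) - 2 |N(g) ∩ N(h⁻¹)|`, where the intersection is realized as the set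
of reflections `t` with `ℓ(gt) < ℓ(g)` and `ℓ(h⁻¹t) < ℓ(h⁻¹)`; in particular this set is
finite. -/
theorem length_mul_add_two_mul_card_eq
    {B W : Type*} [Group W] {M : CoxeterMatrix B}
    (cs : CoxeterSystem M W) (g h : W) :
    ∃ hfin : {t : W | cs.IsReflection t ∧ cs.length (g * t) < cs.length g ∧
        cs.length (h⁻¹ * t) < cs.length h⁻¹}.Finite,
      cs.length (g * h) + 2 * hfin.toFinset.card = cs.length g + cs.length h := by
  obtain ⟨hfin, heq⟩ := CoxAux.aux cs (cs.length g) g h rfl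
  refine ⟨hfin, ?_⟩
  exact (congrArg (fun n => cs.length (g * h) + 2 * n) (Set.ncard_eq_toFinset_card _ hfin).symm).trans heq
end

section
/- Let (W, S) be a Coxeter system with length function ℓ, let J ⊆ S, let W_J be the subgroup of W generated by J, and let w ∈ W_J. Then min{ℓ(h⁻¹wh) : h ∈ W_J} = min{ℓ(g⁻¹wg) : g ∈ W}. -/
open List
open scoped Classical
set_option linter.unusedSectionVars false
namespace MyCox
open CoxeterSystem
variable {B W : Type*} [Group W] {M : CoxeterMatrix B} (cs : CoxeterSystem M W)
local prefix:100 "s" => cs.simple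
local prefix:100 "π" => cs.wordProd
local prefix:100 "ℓ" => cs.length

theorem inv_pow_mul_sj (i j : B) (n : ℕ) :
    ((s i * s j) ^ n)⁻¹ * s j = s j * (s i * s j) ^ n := by
  have key : (s i * s j)⁻¹ * s j = s j * (s i * s j) := by
    rw [mul_inv_rev, cs.inv_simple, cs.inv_simple, mul_assoc]
  induction n with
  | zero => simp
  | succ n ih =>
    rw [pow_succ, mul_inv_rev, mul_assoc, ih, ← mul_assoc, key, mul_assoc, ← pow_succ', pow_succ]

theorem wordProd_aw_inv_mul (i j : B) (e : ℕ) :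
    (π (alternatingWord i j e))⁻¹ * π (alternatingWord i j (e+1)) =
      s j * (s i * s j) ^ e := by
  rw [cs.prod_alternatingWord_eq_mul_pow, cs.prod_alternatingWord_eq_mul_pow]
  rcases Nat.even_or_odd e with he | he
  · obtain ⟨r, rfl⟩ := he
    have h1 : ¬ Even (r + r + 1) := by simp [Nat.even_add_one]
    have h2 : (r + r + 1)/2 = (r+r)/2 := Nat.succ_div_of_not_dvd (by omega)
    have h3 : (r + r) / 2 = r := by omega
    rw [if_pos ⟨r, rfl⟩, if_neg h1, h2, h3, one_mul, ← mul_assoc, inv_pow_mul_sj,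
      mul_assoc, ← pow_add]
  · obtain ⟨r, rfl⟩ := he
    have h1 : ¬ Even (2*r+1) := by simp [Nat.even_add_one]
    have h2 : Even (2*r+1+1) := ⟨r+1, by ring⟩
    have h3 : (2*r+1)/2 = r := by omega
    have h4 : (2*r+1+1)/2 = r+1 := by omega
    have h5 : r + (r+1) = 2*r+1 := by omega
    rw [if_neg h1, if_pos h2, h3, h4, one_mul, mul_inv_rev, cs.inv_simple, inv_pow_mul_sj,
      mul_assoc, ← pow_add, h5]

theorem rightInvSeq_cons' (i : B) (ω : List B) :
    cs.rightInvSeq (i :: ω) = ((π ω)⁻¹ * s i * π ω) :: cs.rightInvSeq ω := rfl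

theorem rightInvSeq_alternatingWord (i j : B) (n : ℕ) :
    cs.rightInvSeq (alternatingWord i j n) =
      ((range n).reverse).map (fun d => s j * (s i * s j) ^ d) := by
  induction n with
  | zero => simp [alternatingWord]
  | succ n ih =>
    rw [alternatingWord_succ', rightInvSeq_cons', ih]
    have hhead : (π (alternatingWord i j n))⁻¹ * s (if Even n then j else i)
        * π (alternatingWord i j n) = s j * (s i * s j) ^ n := by
      have : s (if Even n then j else i) * π (alternatingWord i j n)
          = π (alternatingWord i j (n+1)) := by
        rw [alternatingWord_succ' i j n, cs.wordProd_cons]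
      rw [mul_assoc, this, wordProd_aw_inv_mul]
    rw [hhead]
    simp [range_succ]

/-- sum over a list of indicator values in `ZMod 2` -/
noncomputable def ctr (l : List W) (t : W) : ZMod 2 :=
  (l.map (fun x => if x = t then (1 : ZMod 2) else 0)).sum

theorem ctr_nil (t : W) : ctr ([] : List W) t = 0 := rfl

theorem ctr_cons (x : W) (l : List W) (t : W) :
    ctr (x :: l) t = (if x = t then (1:ZMod 2) else 0) + ctr l t := by
  simp [ctr]

theorem ctr_append (l l' : List W) (t : W) :
    ctr (l ++ l') t = ctr l t + ctr l' t := by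
  simp [ctr]

theorem ctr_eq_zero_of_not_mem {l : List W} {t : W} (h : t ∉ l) : ctr l t = 0 := by
  induction l with
  | nil => rfl
  | cons x l ih =>
    rw [ctr_cons, if_neg (by rintro rfl; exact h mem_cons_self),
      ih (fun hm => h (mem_cons_of_mem _ hm)), add_zero]

theorem ctr_ris_aw_eq_zero (i j : B) (t : W) :
    ctr (cs.rightInvSeq (alternatingWord i j (2 * M i j))) t = 0 := by
  rw [rightInvSeq_alternatingWord]
  have h2m : 2 * M i j = M i j + M i j := by ring
  rw [h2m, range_add, reverse_append, map_append, ctr_append]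
  have : map (fun d => s j * (s i * s j) ^ d) ((map (fun x => M i j + x) (range (M i j))).reverse)
      = map (fun d => s j * (s i * s j) ^ d) ((range (M i j)).reverse) := by
    rw [map_reverse, map_reverse, map_map]
    congr 1
    apply map_congr_left
    intro d _
    simp only [Function.comp]
    rw [pow_add, cs.simple_mul_simple_pow, one_mul]
  rw [this, CharTwo.add_self_eq_zero]

noncomputable def swapApply (i : B) : W × ZMod 2 → W × ZMod 2 :=
  fun p => (s i * p.1 * s i, p.2 + if p.1 = s i then 1 else 0)

theorem simple_conj_eq_simple_iff (i : B) (t : W) :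
    (s i * t * s i = s i) ↔ (t = s i) := by
  constructor
  · intro h
    calc t = (s i * s i) * t * (s i * s i) := by rw [cs.simple_mul_simple_self]; group
    _ = s i * (s i * t * s i) * s i := by group
    _ = s i * s i * s i := by rw [h]
    _ = s i := by rw [cs.simple_mul_simple_self, one_mul]
  · rintro rfl; rw [cs.simple_mul_simple_self, one_mul]

theorem swapApply_involutive (i : B) : Function.Involutive (swapApply cs i) := by
  rintro ⟨t, ε⟩
  simp only [swapApply]
  have h1 : s i * (s i * t * s i) * s i = t := by
    calc s i * (s i * t * s i) * s i = (s i * s i) * t * (s i * s i) := by group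
    _ = t := by rw [cs.simple_mul_simple_self]; group
  rw [h1, Prod.mk.injEq]
  refine ⟨rfl, ?_⟩
  rcases em (t = s i) with h | h
  · rw [if_pos h]; show (ε + 1 + if s i * t * s i = s i then (1:ZMod 2) else 0) = ε; rw [if_pos ((simple_conj_eq_simple_iff cs i t).mpr h), add_assoc,
      show (1:ZMod 2)+1 = 0 from rfl, add_zero]
  · rw [if_neg h]; show (ε + 0 + if s i * t * s i = s i then (1:ZMod 2) else 0) = ε; rw [if_neg (fun hc => h ((simple_conj_eq_simple_iff cs i t).mp hc)),
      add_zero, add_zero]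

noncomputable def swapPerm (i : B) : Equiv.Perm (W × ZMod 2) :=
  (swapApply_involutive cs i).toPerm

theorem swapPerm_apply (i : B) (t : W) (ε : ZMod 2) :
    swapPerm cs i (t, ε) = (s i * t * s i, ε + if t = s i then 1 else 0) := rfl

theorem prod_map_aw {G : Type*} [Monoid G] (g : B → G) (i j : B) (m : ℕ) :
    ((alternatingWord i j (2*m)).map g).prod = (g i * g j) ^ m := by
  induction m with
  | zero => simp [alternatingWord]
  | succ m ih =>
    have h1 : 2 * (m+1) = (2*m+1)+1 := by ring
    have he : ¬ Even (2*m+1) := by simp [Nat.even_add_one]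
    have he2 : Even (2*m) := ⟨m, by ring⟩
    rw [h1, alternatingWord_succ', alternatingWord_succ', if_neg he, if_pos he2]
    rw [map_cons, map_cons, prod_cons, prod_cons, ih, ← mul_assoc, ← pow_succ']

theorem wordProd_eq_prod_map (ω : List B) : π ω = (ω.map cs.simple).prod := rfl

theorem swap_prod_apply (ω : List B) (t : W) (ε : ZMod 2) :
    ((ω.map (swapPerm cs)).prod) (t, ε) =
      (π ω * t * (π ω)⁻¹, ε + ctr (cs.rightInvSeq ω) t) := by
  induction ω generalizing t ε with
  | nil => simp [ctr_nil]
  | cons i ω ih =>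
    rw [map_cons, prod_cons, Equiv.Perm.mul_apply, ih, swapPerm_apply, cs.wordProd_cons,
      rightInvSeq_cons', ctr_cons, Prod.mk.injEq]
    constructor
    · rw [mul_inv_rev, cs.inv_simple]; group
    · rcases em ((π ω)⁻¹ * s i * π ω = t) with h | h
      · rw [if_pos h, if_pos (by rw [← h]; group)]
        ring
      · rw [if_neg h, if_neg (fun hc => h (by rw [← hc]; group))]
        ring

theorem swapLiftable : M.IsLiftable (fun i => swapPerm cs i) := by
  intro i j
  show (swapPerm cs i * swapPerm cs j) ^ (M i j) = 1
  rw [← prod_map_aw (swapPerm cs) i j (M i j)]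
  apply Equiv.ext
  rintro ⟨t, ε⟩
  rw [swap_prod_apply]
  have hπ : π (CoxeterSystem.alternatingWord i j (2 * M i j)) = 1 := by
    rw [wordProd_eq_prod_map, prod_map_aw, cs.simple_mul_simple_pow]
  rw [hπ, ctr_ris_aw_eq_zero, add_zero, one_mul, inv_one, mul_one]
  simp

noncomputable def stdPerm : W →* Equiv.Perm (W × ZMod 2) :=
  cs.lift ⟨fun i => swapPerm cs i, swapLiftable cs⟩

theorem stdPerm_simple (i : B) : stdPerm cs (s i) = swapPerm cs i :=
  cs.lift_apply_simple (swapLiftable cs) i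

theorem stdPerm_wordProd (ω : List B) (t : W) (ε : ZMod 2) :
    stdPerm cs (π ω) (t, ε) = (π ω * t * (π ω)⁻¹, ε + ctr (cs.rightInvSeq ω) t) := by
  have : stdPerm cs (π ω) = ((ω.map (swapPerm cs)).prod) := by
    induction ω with
    | nil => rw [cs.wordProd_nil, map_one]; simp
    | cons i ω ih => rw [cs.wordProd_cons, map_mul, ih, map_cons, prod_cons, stdPerm_simple]
  rw [this, swap_prod_apply]

noncomputable def eta (w t : W) : ZMod 2 := (stdPerm cs w (t, 0)).2

theorem eta_wordProd (ω : List B) (t : W) : eta cs (π ω) t = ctr (cs.rightInvSeq ω) t := by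
  rw [eta, stdPerm_wordProd, zero_add]

theorem stdPerm_apply (w t : W) (ε : ZMod 2) :
    stdPerm cs w (t, ε) = (w * t * w⁻¹, ε + eta cs w t) := by
  obtain ⟨ω, rfl⟩ := cs.wordProd_surjective w
  rw [stdPerm_wordProd, eta_wordProd]

theorem eta_mul (u v t : W) : eta cs (u * v) t = eta cs v t + eta cs u (v * t * v⁻¹) := by
  have h : stdPerm cs (u * v) (t, 0) = stdPerm cs u (stdPerm cs v (t, 0)) := by
    rw [map_mul]; rfl
  rw [stdPerm_apply cs v t 0, zero_add, stdPerm_apply, stdPerm_apply] at h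
  have := congrArg Prod.snd h
  simpa [eta] using this

theorem zmod2_eq_of_add_eq_zero : ∀ x y : ZMod 2, x + y = 0 → x = y := by decide

theorem zmod2_eq_zero_of_ne_one : ∀ x : ZMod 2, x ≠ 1 → x = 0 := by decide

theorem eta_one (t : W) : eta cs 1 t = 0 := by
  rw [eta, map_one]; rfl

theorem eta_inv (v t : W) : eta cs v⁻¹ t = eta cs v (v⁻¹ * t * v) := by
  apply zmod2_eq_of_add_eq_zero
  have := eta_mul cs v v⁻¹ t
  rw [mul_inv_cancel, eta_one, inv_inv] at this
  exact this.symm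

theorem eta_simple_self (i : B) : eta cs (s i) (s i) = 1 := by
  rw [eta, stdPerm_simple, swapPerm_apply, if_pos rfl]
  simp

theorem eta_self {t : W} (ht : cs.IsReflection t) : eta cs t t = 1 := by
  obtain ⟨v, i, rfl⟩ := ht
  have h1 : v * s i * v⁻¹ = v * (s i * v⁻¹) := by group
  rw [h1, eta_mul, eta_mul, eta_inv]
  have e2 : s i * v⁻¹ * (v * (s i * v⁻¹)) * (s i * v⁻¹)⁻¹ = s i := by group
  have e3 : v⁻¹ * (v * (s i * v⁻¹)) * (v⁻¹)⁻¹ = s i := by group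
  have e4 : v⁻¹ * (v * (s i * v⁻¹)) * v = s i := by group
  rw [e2, e3, e4, eta_simple_self]
  generalize eta cs v (s i) = a
  revert a
  decide

theorem lt_of_eta_eq_one {w t : W} (ht : cs.IsReflection t) (h : eta cs w t = 1) :
    ℓ (w * t) < ℓ w := by
  obtain ⟨ω, hred, rfl⟩ := cs.exists_reduced_word' w
  rw [eta_wordProd] at h
  have hmem : t ∈ cs.rightInvSeq ω := by
    by_contra hmem
    rw [ctr_eq_zero_of_not_mem hmem] at h
    exact (by decide : (0:ZMod 2) ≠ 1) h
  exact (cs.isRightInversion_of_mem_rightInvSeq hred hmem).2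

theorem eta_eq_one_of_lt {w t : W} (ht : cs.IsReflection t) (hlt : ℓ (w * t) < ℓ w) :
    eta cs w t = 1 := by
  by_contra h
  have h0 := zmod2_eq_zero_of_ne_one _ h
  have h2 : eta cs (w * t) t = 1 := by
    rw [eta_mul, eta_self cs ht, show t * t * t⁻¹ = t by group, h0, add_zero]
  have h3 := lt_of_eta_eq_one cs ht h2
  rw [mul_assoc, ht.mul_self, mul_one] at h3
  omega

theorem mem_ris_of_lt {ω : List B} {t : W} (ht : cs.IsReflection t)
    (hlt : ℓ (π ω * t) < ℓ (π ω)) : t ∈ cs.rightInvSeq ω := by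
  have h := eta_eq_one_of_lt cs ht hlt
  rw [eta_wordProd] at h
  by_contra hmem
  rw [ctr_eq_zero_of_not_mem hmem] at h
  exact (by decide : (0:ZMod 2) ≠ 1) h

/-- Left exchange property, valid for arbitrary (not necessarily reduced) words. -/
theorem exists_eraseIdx_of_simple_mul_lt (ω : List B) (i : B)
    (hlt : ℓ (s i * π ω) < ℓ (π ω)) :
    ∃ k, k < ω.length ∧ s i * π ω = π (ω.eraseIdx k) := by
  have h1 : ℓ (π ω.reverse * s i) < ℓ (π ω.reverse) := by
    rw [cs.wordProd_reverse]
    have e : (π ω)⁻¹ * s i = (s i * π ω)⁻¹ := by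
      rw [mul_inv_rev, cs.inv_simple]
    rw [e, cs.length_inv, cs.length_inv]
    exact hlt
  have hmem := mem_ris_of_lt cs (cs.isReflection_simple i) h1
  rw [cs.rightInvSeq_reverse, List.mem_reverse] at hmem
  obtain ⟨k, hk, hkt⟩ := List.mem_iff_getElem.mp hmem
  have hk' : k < ω.length := by simpa using hk
  refine ⟨k, hk', ?_⟩
  have h2 := cs.getD_leftInvSeq_mul_wordProd ω k
  rw [List.getD_eq_getElem _ 1 hk, hkt] at h2
  exact h2

theorem exists_word_of_mem_closure {J : Set B} {x : W}
    (hx : x ∈ Subgroup.closure (cs.simple '' J)) :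
    ∃ ω : List B, (∀ b ∈ ω, b ∈ J) ∧ x = π ω := by
  induction hx using Subgroup.closure_induction with
  | mem x hxm =>
    obtain ⟨b, hb, rfl⟩ := hxm
    exact ⟨[b], by simpa using hb, (cs.wordProd_singleton b).symm⟩
  | one => exact ⟨[], by simp, (cs.wordProd_nil).symm⟩
  | mul x y hxc hyc hx hy =>
    obtain ⟨ωx, hωxJ, rfl⟩ := hx
    obtain ⟨ωy, hωyJ, rfl⟩ := hy
    exact ⟨ωx ++ ωy, by
      intro b hb
      rcases List.mem_append.mp hb with h | h
      exacts [hωxJ b h, hωyJ b h], (cs.wordProd_append ωx ωy).symm⟩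
  | inv x hxc hx =>
    obtain ⟨ωx, hωxJ, rfl⟩ := hx
    exact ⟨ωx.reverse, fun b hb => hωxJ b (List.mem_reverse.mp hb),
      (cs.wordProd_reverse ωx).symm⟩

theorem wordProd_mem_closure {J : Set B} {ω : List B} (hJ : ∀ b ∈ ω, b ∈ J) :
    π ω ∈ Subgroup.closure (cs.simple '' J) := by
  induction ω with
  | nil => rw [cs.wordProd_nil]; exact Subgroup.one_mem _
  | cons i ω ih =>
    rw [cs.wordProd_cons]
    exact Subgroup.mul_mem _
      (Subgroup.subset_closure ⟨i, hJ i List.mem_cons_self, rfl⟩)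
      (ih fun b hb => hJ b (List.mem_cons_of_mem _ hb))

theorem key_length_add {J : Set B} {u : W}
    (humin : ∀ x ∈ Subgroup.closure (cs.simple '' J), ℓ u ≤ ℓ (x * u)) :
    ∀ (n : ℕ) (ωh : List B), ωh.length ≤ n → (∀ b ∈ ωh, b ∈ J) →
      ℓ (π ωh) + ℓ u ≤ ℓ (π ωh * u) := by
  intro n
  induction n with
  | zero =>
    intro ωh hlen _
    rw [List.length_eq_zero_iff.mp (Nat.le_zero.mp hlen)]
    simp
  | succ n ih =>
    intro ωh hlen hJ
    match ωh with
    | [] => simp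
    | i :: ω' =>
      have hJ' : ∀ b ∈ ω', b ∈ J := fun b hb => hJ b (List.mem_cons_of_mem _ hb)
      have hiJ : i ∈ J := hJ i List.mem_cons_self
      have hlen' : ω'.length ≤ n := by simpa using hlen
      have ih' := ih ω' hlen' hJ'
      have heq : ℓ (π ω' * u) = ℓ (π ω') + ℓ u :=
        le_antisymm (cs.length_mul_le _ _) ih'
      rw [cs.wordProd_cons, mul_assoc]
      have hsib : ℓ (s i * π ω') ≤ ℓ (π ω') + 1 := by
        have := cs.length_mul_le (s i) (π ω')
        rwa [cs.length_simple, add_comm 1] at this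
      rcases cs.length_simple_mul (π ω' * u) i with hup | hdown
      · omega
      · -- descent case
        have hne := cs.length_simple_mul_ne (π ω' * u) i
        obtain ⟨ωu, hωulen, hωu⟩ := cs.exists_reduced_word u
        have hωprod : π (ω' ++ ωu) = π ω' * u := by
          rw [cs.wordProd_append, ← hωu]
        have hlt : ℓ (s i * π (ω' ++ ωu)) < ℓ (π (ω' ++ ωu)) := by
          rw [hωprod]; omega
        obtain ⟨k, hk, hkeq⟩ := exists_eraseIdx_of_simple_mul_lt cs (ω' ++ ωu) i hlt
        rcases lt_or_ge k ω'.length with hkl | hkr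
        · have herase : (ω' ++ ωu).eraseIdx k = ω'.eraseIdx k ++ ωu :=
            List.eraseIdx_append_of_lt_length hkl _
          have h5 : s i * (π ω' * u) = π (ω'.eraseIdx k) * u := by
            rw [← hωprod, hkeq, herase, cs.wordProd_append, ← hωu]
          have h6 := ih (ω'.eraseIdx k)
            (by rw [List.length_eraseIdx]; split <;> omega)
            (fun b hb => hJ' b (List.eraseIdx_subset hb))
          have h9 : s i * π ω' = π (ω'.eraseIdx k) := by
            apply mul_right_cancel (b := u)
            rw [mul_assoc]; exact h5
          rw [← mul_assoc, h9]
          exact h6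
        · exfalso
          have herase : (ω' ++ ωu).eraseIdx k = ω' ++ ωu.eraseIdx (k - ω'.length) :=
            List.eraseIdx_append_of_length_le hkr _
          have hkub : k - ω'.length < ωu.length := by
            have := hk
            rw [List.length_append] at this
            omega
          have h5 : s i * (π ω' * u) = π ω' * π (ωu.eraseIdx (k - ω'.length)) := by
            rw [← hωprod, hkeq, herase, cs.wordProd_append]
          have hx : (π ω')⁻¹ * s i * π ω' ∈ Subgroup.closure (cs.simple '' J) := by
            have hω'mem : π ω' ∈ Subgroup.closure (cs.simple '' J) :=
              wordProd_mem_closure cs hJ'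
            have hsi : s i ∈ Subgroup.closure (cs.simple '' J) :=
              Subgroup.subset_closure ⟨i, hiJ, rfl⟩
            exact Subgroup.mul_mem _ (Subgroup.mul_mem _ (Subgroup.inv_mem _ hω'mem) hsi) hω'mem
          have h6 : ((π ω')⁻¹ * s i * π ω') * u = π (ωu.eraseIdx (k - ω'.length)) := by
            rw [show ((π ω')⁻¹ * s i * π ω') * u = (π ω')⁻¹ * (s i * (π ω' * u)) by group, h5]
            group
          have h7 : ℓ (((π ω')⁻¹ * s i * π ω') * u) ≤ ωu.length - 1 := by
            rw [h6]
            have := cs.length_wordProd_le (ωu.eraseIdx (k - ω'.length))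
            rw [List.length_eraseIdx, if_pos hkub] at this
            exact this
          have h8 := humin _ hx
          have hωulen' := hωulen.eq; rw [← hωu] at hωulen'
          omega

theorem length_mul_of_min {J : Set B} {u h : W}
    (humin : ∀ x ∈ Subgroup.closure (cs.simple '' J), ℓ u ≤ ℓ (x * u))
    (hh : h ∈ Subgroup.closure (cs.simple '' J)) :
    ℓ (h * u) = ℓ h + ℓ u := by
  obtain ⟨ω, hωJ, rfl⟩ := exists_word_of_mem_closure cs hh
  exact le_antisymm (cs.length_mul_le _ _)
    (key_length_add cs humin ω.length ω le_rfl hωJ)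

end MyCox

/-- If `J ⊆ S` and `w ∈ W_J`, then the minimal length of a `W_J`-conjugate of `w` equals
the minimal length of a `W`-conjugate of `w`. -/
theorem min_length_conj_parabolic_eq_min_length_conj
    {B W : Type*} [Group W] {M : CoxeterMatrix B}
    (cs : CoxeterSystem M W) (J : Set B) (w : W)
    (hw : w ∈ Subgroup.closure (cs.simple '' J)) :
    sInf {n : ℕ | ∃ h ∈ Subgroup.closure (cs.simple '' J), n = cs.length (h⁻¹ * w * h)} =
      sInf {n : ℕ | ∃ g : W, n = cs.length (g⁻¹ * w * g)} := by
  classical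
  set cl := Subgroup.closure (cs.simple '' J) with hcl
  set A : Set ℕ := {n | ∃ h ∈ cl, n = cs.length (h⁻¹ * w * h)} with hA
  set Bs : Set ℕ := {n | ∃ g : W, n = cs.length (g⁻¹ * w * g)} with hBs
  have hAne : A.Nonempty := ⟨cs.length (1⁻¹ * w * 1), 1, Subgroup.one_mem _, rfl⟩
  have hBne : Bs.Nonempty := ⟨cs.length (1⁻¹ * w * 1), 1, rfl⟩
  apply _root_.le_antisymm
  · -- sInf A ≤ sInf Bs
    obtain ⟨g, hg⟩ := Nat.sInf_mem hBne
    -- find minimal coset representative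
    set T : Set ℕ := {n | ∃ x ∈ cl, n = cs.length (x * g)} with hT
    have hTne : T.Nonempty := ⟨cs.length (1 * g), 1, Subgroup.one_mem _, rfl⟩
    obtain ⟨x₀, hx₀cl, hx₀⟩ := Nat.sInf_mem hTne
    set u : W := x₀ * g with hu
    have humin : ∀ y ∈ cl, cs.length u ≤ cs.length (y * u) := by
      intro y hy
      have : cs.length (y * u) ∈ T := ⟨y * x₀, Subgroup.mul_mem _ hy hx₀cl, by
        rw [hu, mul_assoc]⟩
      have h1 := Nat.sInf_le this
      omega
    set w' : W := x₀ * w * x₀⁻¹ with hw'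
    have hw'cl : w' ∈ cl := Subgroup.mul_mem _ (Subgroup.mul_mem _ hx₀cl hw)
      (Subgroup.inv_mem _ hx₀cl)
    have hkey : cs.length (w' * u) = cs.length w' + cs.length u :=
      MyCox.length_mul_of_min cs humin hw'cl
    have htri : cs.length (w' * u) ≤ cs.length u + cs.length (u⁻¹ * w' * u) := by
      have := cs.length_mul_le u (u⁻¹ * w' * u)
      rw [show u * (u⁻¹ * w' * u) = w' * u by group] at this
      exact this
    have hconj : u⁻¹ * w' * u = g⁻¹ * w * g := by
      rw [hu, hw']; group
    have hA1 : cs.length w' ∈ A := ⟨x₀⁻¹, Subgroup.inv_mem _ hx₀cl, by rw [hw']; group⟩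
    have h2 : cs.length w' ≤ cs.length (g⁻¹ * w * g) := by
      rw [← hconj]; omega
    calc sInf A ≤ cs.length w' := Nat.sInf_le hA1
      _ ≤ cs.length (g⁻¹ * w * g) := h2
      _ = sInf Bs := hg.symm
  · -- sInf Bs ≤ sInf A
    obtain ⟨h, hhcl, hh⟩ := Nat.sInf_mem hAne
    rw [hh]
    exact Nat.sInf_le ⟨h, rfl⟩
end

section
/- Let (W, S) be a finite Coxeter system with simple reflections s₁, s₂, …, sₙ (listed without repetition, exhausting S), and let w = s₁s₂⋯sₙ. Then the minimal length of an element in the conjugacy class of w equals n; that is, ℓ(w) = n and every conjugate of w has length at least n. -/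
set_option linter.unusedSectionVars false

open Real CoxeterSystem

namespace CoxMinConj

variable {B : Type*} [Fintype B] [DecidableEq B] (M : CoxeterMatrix B)

noncomputable def kk (a b : B) : ℝ := -Real.cos (Real.pi / M a b)

noncomputable def ee (b : B) : B → ℝ := fun a => if b = a then 1 else 0

noncomputable def ff (b : B) : (B → ℝ) →ₗ[ℝ] ℝ where
  toFun x := ∑ a, kk M b a * x a
  map_add' x y := by simp [mul_add, Finset.sum_add_distrib]
  map_smul' c x := by simp [Finset.mul_sum]; ring_nf; simp [mul_assoc, mul_comm, mul_left_comm]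

@[simp] lemma ff_ee (a b : B) : ff M a (ee b) = kk M a b := by
  simp [ff, ee, mul_ite]

noncomputable def sg (b : B) : Module.End ℝ (B → ℝ) :=
  LinearMap.id - ((2:ℝ) • ff M b).smulRight (ee b)

lemma sg_apply (b : B) (x : B → ℝ) : sg M b x = x - (2 * ff M b x) • ee b := by
  simp [sg, LinearMap.smulRight_apply, smul_smul]

-- ### the complex model of the dihedral plane

noncomputable def jj (a b : B) (c s : ℝ) (z : ℂ) : B → ℝ :=
  (z.re + c * z.im / s) • ee a + (z.im / s) • ee b

section dihedral

variable {a b : B} {c s : ℝ}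
  (hADa : kk M a a = 1) (hADb : kk M b b = 1)
  (hab : kk M a b = -c) (hba : kk M b a = -c)
  (hs : s ≠ 0) (hcs : c ^ 2 + s ^ 2 = 1)

include hADa hab in
lemma ff_a_jj (z : ℂ) : ff M a (jj a b c s z) = z.re := by
  simp [jj, map_add, map_smul, smul_eq_mul, hADa, hab]
  ring

include hADb hba in
lemma ff_b_jj (z : ℂ) : ff M b (jj a b c s z) = -(c * z.re) + (1 - c ^ 2) * z.im / s := by
  simp [jj, map_add, map_smul, smul_eq_mul, hADb, hba]
  ring

include hADa hab in
lemma sg_a_jj (z : ℂ) : sg M a (jj a b c s z) = jj a b c s (-((starRingEnd ℂ) z)) := by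
  rw [sg_apply, ff_a_jj M hADa hab]
  simp only [jj, Complex.neg_re, Complex.neg_im, Complex.conj_re, Complex.conj_im, neg_neg]
  match_scalars <;> ring

include hADb hba hs hcs in
lemma sg_b_jj (z : ℂ) : sg M b (jj a b c s z) =
    jj a b c s ((((1 - 2 * c ^ 2 : ℝ) : ℂ) + ((2 * c * s : ℝ) : ℂ) * Complex.I)
      * (starRingEnd ℂ) z) := by
  rw [sg_apply, ff_b_jj M hADb hba]
  simp only [jj, Complex.add_re, Complex.add_im, Complex.mul_re, Complex.mul_im,
    Complex.ofReal_re, Complex.ofReal_im, Complex.I_re, Complex.I_im, Complex.conj_re,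
    Complex.conj_im]
  match_scalars
  · field_simp
    linear_combination (-(2 * c * z.im)) * hcs
  · field_simp
    ring


noncomputable def tau (c s : ℝ) : ℂ := ((2 * c ^ 2 - 1 : ℝ) : ℂ) + ((2 * c * s : ℝ) : ℂ) * Complex.I

include hADa hADb hab hba hs hcs in
lemma sg_mul_sg_jj (z : ℂ) :
    (sg M a * sg M b) (jj a b c s z) = jj a b c s (tau c s * z) := by
  rw [Module.End.mul_apply, sg_b_jj M hADb hba hs hcs, sg_a_jj M hADa hab]
  rw [map_mul, Complex.conj_conj, tau]
  simp only [map_add, map_mul, Complex.conj_ofReal, Complex.conj_I]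
  push_cast
  ring_nf

include hADa hADb hab hba hs hcs in
lemma sg_mul_sg_pow_jj (k : ℕ) (z : ℂ) :
    ((sg M a * sg M b) ^ k) (jj a b c s z) = jj a b c s (tau c s ^ k * z) := by
  induction k with
  | zero => simp
  | succ k ih =>
      rw [pow_succ', Module.End.mul_apply, ih, sg_mul_sg_jj M hADa hADb hab hba hs hcs,
        ← mul_assoc, ← pow_succ']

lemma tau_eq {m : ℕ} (hc : c = Real.cos (Real.pi / m)) (hsv : s = Real.sin (Real.pi / m)) :
    tau c s = Complex.exp ((2 * (Real.pi / m) : ℝ) * Complex.I) := by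
  rw [Complex.exp_mul_I, tau]
  rw [← Complex.ofReal_cos, ← Complex.ofReal_sin, Real.cos_two_mul, Real.sin_two_mul,
    hc, hsv]
  push_cast
  ring

lemma tau_pow {m : ℕ} (hm : m ≠ 0) (hc : c = Real.cos (Real.pi / m))
    (hsv : s = Real.sin (Real.pi / m)) : tau c s ^ m = 1 := by
  rw [tau_eq hc hsv, ← Complex.exp_nat_mul]
  have : ((m : ℂ)) * ((2 * (Real.pi / m) : ℝ) * Complex.I) = 2 * Real.pi * Complex.I := by
    push_cast
    have : (m : ℂ) ≠ 0 := Nat.cast_ne_zero.mpr hm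
    field_simp
  rw [this, Complex.exp_two_pi_mul_I]

end dihedral

lemma kk_self (b : B) : kk M b b = 1 := by
  simp [kk, M.diagonal b]

lemma ff_sg (a b : B) (x : B → ℝ) :
    ff M a (sg M b x) = ff M a x - 2 * ff M b x * kk M a b := by
  simp [sg_apply, map_sub, map_smul, smul_eq_mul]

lemma sg_sg (b : B) (x : B → ℝ) : sg M b (sg M b x) = x := by
  rw [sg_apply (x := sg M b x), ff_sg, sg_apply]
  simp only [kk_self, mul_one]
  module

lemma sg_fix {b : B} {x : B → ℝ} (h : ff M b x = 0) : sg M b x = x := by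
  simp [sg_apply, h]

lemma liftable : M.IsLiftable (sg M) := by
  intro a b
  rcases eq_or_ne a b with rfl | hne
  · rw [M.diagonal a, pow_one]
    apply LinearMap.ext; intro x
    rw [Module.End.mul_apply, sg_sg, Module.End.one_apply]
  rcases Nat.eq_zero_or_pos (M a b) with h0 | hpos
  · rw [h0, pow_zero]
  have hm2 : 2 ≤ M a b := by
    have := M.off_diagonal a b hne; omega
  set m := M a b with hmdef
  set c := Real.cos (Real.pi / m) with hcdef
  set s := Real.sin (Real.pi / m) with hsdef
  have hmR : (1 : ℝ) < (m : ℝ) := by exact_mod_cast by omega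
  have hpim_pos : 0 < Real.pi / m := by positivity
  have hpim_lt : Real.pi / m < Real.pi := div_lt_self Real.pi_pos hmR
  have hs : s ≠ 0 := ne_of_gt (Real.sin_pos_of_pos_of_lt_pi hpim_pos hpim_lt)
  have hcs : c ^ 2 + s ^ 2 = 1 := by
    rw [hcdef, hsdef]; exact Real.cos_sq_add_sin_sq _
  have hADa : kk M a a = 1 := kk_self M a
  have hADb : kk M b b = 1 := kk_self M b
  have hab : kk M a b = -c := by rw [hcdef]; simp [kk, hmdef]
  have hba : kk M b a = -c := by rw [hcdef]; simp [kk, ← hmdef, M.symmetric b a]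
  have htau : tau c s ^ m = 1 := tau_pow (by omega) hcdef hsdef
  have h1c : 1 - c ^ 2 ≠ 0 := by
    have : 1 - c ^ 2 = s ^ 2 := by linarith
    rw [this]; exact pow_ne_zero 2 hs
  apply LinearMap.ext; intro x
  set zi : ℝ := s * (ff M b x + c * ff M a x) / (1 - c ^ 2) with hzidef
  set z : ℂ := (ff M a x : ℝ) + (zi : ℝ) * Complex.I with hzdef
  have hzre : z.re = ff M a x := by simp [hzdef]
  have hzim : z.im = zi := by simp [hzdef]
  have hfa : ff M a (x - jj a b c s z) = 0 := by
    rw [map_sub, ff_a_jj M hADa hab, hzre]; ring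
  have hfb : ff M b (x - jj a b c s z) = 0 := by
    rw [map_sub, ff_b_jj M hADb hba, hzre, hzim, hzidef]
    field_simp
    ring
  have hfix : ∀ k : ℕ, ((sg M a * sg M b) ^ k) (x - jj a b c s z) = x - jj a b c s z := by
    intro k
    induction k with
    | zero => simp
    | succ k ih =>
        rw [pow_succ', Module.End.mul_apply, ih, Module.End.mul_apply,
          sg_fix M hfb, sg_fix M hfa]
  have hx : x = (x - jj a b c s z) + jj a b c s z := by abel
  rw [Module.End.one_apply]
  conv_lhs => rw [hx]
  rw [map_add, hfix m, sg_mul_sg_pow_jj M hADa hADb hab hba hs hcs, htau, one_mul]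
  exact hx.symm



@[simp] lemma ee_self (b : B) : ee b b = 1 := by simp [ee]
lemma ee_ne {a b : B} (h : b ≠ a) : ee b a = 0 := by simp [ee, h]

variable {W : Type*} [Group W] (cs : CoxeterSystem M W)

noncomputable def rho : W →* Module.End ℝ (B → ℝ) := cs.lift ⟨sg M, liftable M⟩

lemma rho_simple (b : B) : rho M cs (cs.simple b) = sg M b :=
  cs.lift_apply_simple (liftable M) b

lemma fix_wordProd (ω : List B) (x : B → ℝ) (h : ∀ b ∈ ω, ff M b x = 0) :
    rho M cs (cs.wordProd ω) x = x := by
  induction ω with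
  | nil => simp [CoxeterSystem.wordProd_nil]
  | cons hd tl ih =>
      rw [CoxeterSystem.wordProd_cons, map_mul, Module.End.mul_apply,
        ih (fun b hb => h b (List.mem_cons_of_mem _ hb)), rho_simple,
        sg_fix M (h hd (List.mem_cons_self (a := hd) (l := tl)))]

lemma coord_wordProd (ω : List B) (x : B → ℝ) {b : B} (hb : b ∉ ω) :
    rho M cs (cs.wordProd ω) x b = x b := by
  induction ω with
  | nil => simp [CoxeterSystem.wordProd_nil]
  | cons hd tl ih =>
      have hbtl : b ∉ tl := fun h => hb (List.mem_cons_of_mem _ h)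
      have hbhd : hd ≠ b := fun h => hb (h ▸ List.mem_cons_self (a := hd) (l := tl))
      rw [CoxeterSystem.wordProd_cons, map_mul, Module.End.mul_apply, rho_simple, sg_apply]
      simp [ee_ne hbhd, ih hbtl]

lemma eval_zero {y : B → ℝ} :
    ∀ ω : List B, ω.Nodup → rho M cs (cs.wordProd ω) y = y → ∀ b ∈ ω, ff M b y = 0 := by
  intro ω
  induction ω with
  | nil => intro _ _ b hb; simp at hb
  | cons hd tl ih =>
      intro hnd hfix b hb
      rw [CoxeterSystem.wordProd_cons, map_mul, Module.End.mul_apply, rho_simple] at hfix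
      have htail : rho M cs (cs.wordProd tl) y = sg M hd y := by
        have := congrArg (sg M hd) hfix
        rwa [sg_sg] at this
      have hhd : ff M hd y = 0 := by
        have h1 : rho M cs (cs.wordProd tl) y hd = y hd :=
          coord_wordProd M cs tl y ((List.nodup_cons.mp hnd).1)
        rw [htail, sg_apply] at h1
        simp only [Pi.sub_apply, Pi.smul_apply, ee_self, smul_eq_mul, mul_one] at h1
        linarith
      have htail' : rho M cs (cs.wordProd tl) y = y := by
        rw [htail, sg_fix M hhd]
      rcases List.mem_cons.mp hb with rfl | hbtl
      · exact hhd
      · exact ih (List.nodup_cons.mp hnd).2 htail' b hbtl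

include cs in
lemma eq_zero_of_all_ff_zero [Fintype W] {y : B → ℝ} (hy : ∀ b, ff M b y = 0) : y = 0 := by
  set ip : (B → ℝ) → (B → ℝ) → ℝ :=
    fun u v => ∑ g : W, ∑ i, (rho M cs g u i) * (rho M cs g v i) with hip
  have inv : ∀ (h : W) (u v : B → ℝ), ip (rho M cs h u) (rho M cs h v) = ip u v := by
    intro h u v
    refine Fintype.sum_equiv (Equiv.mulRight h) _ _ fun g => ?_
    have h1 : ∀ w : B → ℝ, rho M cs g (rho M cs h w) = rho M cs (g * h) w := by
      intro w; rw [map_mul, Module.End.mul_apply]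
    simp only [h1, Equiv.coe_mulRight]
  have ip_add : ∀ u u' v, ip (u + u') v = ip u v + ip u' v := by
    intro u u' v
    simp [hip, map_add, add_mul, Finset.sum_add_distrib]
  have ip_smul : ∀ (r : ℝ) u v, ip (r • u) v = r * ip u v := by
    intro r u v
    simp [hip, map_smul, Finset.mul_sum, mul_assoc]
  have key : ∀ b, ip (ee b) y = 0 := by
    intro b
    have h1 : rho M cs (cs.simple b) y = y := by rw [rho_simple]; exact sg_fix M (hy b)
    have h2 : rho M cs (cs.simple b) (ee b) = (-1 : ℝ) • ee b := by
      rw [rho_simple, sg_apply]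
      simp only [ff_ee, kk_self, mul_one]
      module
    have h3 := inv (cs.simple b) (ee b) y
    rw [h1, h2, ip_smul] at h3
    linarith
  have hyy : ip y y = 0 := by
    let L : (B → ℝ) →ₗ[ℝ] ℝ :=
      { toFun := fun u => ip u y
        map_add' := fun u u' => ip_add u u' y
        map_smul' := fun r u => ip_smul r u y }
    have hrep : y = ∑ b, y b • ee b := pi_eq_sum_univ y
    have : L y = 0 := by
      conv_lhs => rw [hrep]
      rw [map_sum]
      simp only [map_smul, smul_eq_mul]
      have : ∀ b, L (ee b) = 0 := key
      simp [this]
    exact this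
  have h1 : ∀ g : W, (0:ℝ) ≤ ∑ i, rho M cs g y i * rho M cs g y i :=
    fun g => Finset.sum_nonneg fun i _ => mul_self_nonneg _
  have h2 : ∑ i, rho M cs (1 : W) y i * rho M cs (1 : W) y i = 0 :=
    (Finset.sum_eq_zero_iff_of_nonneg (fun g _ => h1 g)).mp hyy 1 (Finset.mem_univ 1)
  rw [map_one] at h2
  simp only [Module.End.one_apply] at h2
  funext i
  have := (Finset.sum_eq_zero_iff_of_nonneg
    (fun i _ => mul_self_nonneg (y i))).mp h2 i (Finset.mem_univ i)
  simpa [mul_self_eq_zero] using this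

end CoxMinConj

open CoxMinConj in
/-- In a finite Coxeter group, the minimal length in the conjugacy class of a Coxeter
element `s₁ s₂ ⋯ sₙ` is `n`: the Coxeter element itself has length `n` and every
conjugate has length at least `n`. -/
theorem length_coxeterElement_and_min_length_conj
    {B W : Type*} [Group W] [Finite W] {M : CoxeterMatrix B}
    (cs : CoxeterSystem M W) (l : List B) (hnd : l.Nodup) (hall : ∀ b : B, b ∈ l) :
    cs.length (l.map cs.simple).prod = l.length ∧
      ∀ v : W, IsConj (l.map cs.simple).prod v → l.length ≤ cs.length v := by
  classical
  haveI : Fintype B := Fintype.ofList l hall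
  haveI : Fintype W := Fintype.ofFinite W
  have hprod : (l.map cs.simple).prod = cs.wordProd l := rfl
  have huniv : l.toFinset = Finset.univ :=
    Finset.eq_univ_iff_forall.mpr fun b => List.mem_toFinset.mpr (hall b)
  have hcard : l.length = Fintype.card B := by
    rw [← Finset.card_univ, ← huniv]
    exact (List.toFinset_card_of_nodup hnd).symm
  have key : ∀ v : W, IsConj (cs.wordProd l) v → l.length ≤ cs.length v := by
    intro v hconj
    by_contra hlt
    push_neg at hlt
    obtain ⟨ω, hωlen, hωv⟩ := cs.exists_reduced_word v
    set F : (B → ℝ) →ₗ[ℝ] (Fin ω.length → ℝ) := LinearMap.pi (fun i => ff M (ω.get i)) with hF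
    have hnotinj : ¬ Function.Injective F := by
      intro hinj
      have hle := LinearMap.finrank_le_finrank_of_injective hinj
      rw [Module.finrank_fintype_fun_eq_card, Module.finrank_fintype_fun_eq_card,
        Fintype.card_fin] at hle
      have := hωlen.eq; rw [← hωv] at this
      omega
    have hker : LinearMap.ker F ≠ ⊥ := fun h => hnotinj (LinearMap.ker_eq_bot.mp h)
    obtain ⟨x, hxmem, hx0⟩ := (Submodule.ne_bot_iff _).mp hker
    have hxff : ∀ b ∈ ω, ff M b x = 0 := by
      intro b hb
      obtain ⟨i, hi⟩ := List.mem_iff_get.mp hb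
      have h := congrFun (LinearMap.mem_ker.mp hxmem) i
      rw [← hi]
      simpa [hF, LinearMap.pi_apply] using h
    have hvx : rho M cs v x = x := by rw [hωv]; exact fix_wordProd M cs ω x hxff
    obtain ⟨cc, hcc⟩ := hconj
    have hcc' : (cc : W) * cs.wordProd l = v * (cc : W) := hcc
    set y := rho M cs ((cc : W))⁻¹ x with hy
    have hcy : rho M cs cc y = x := by
      rw [hy, ← Module.End.mul_apply, ← map_mul, mul_inv_cancel, map_one, Module.End.one_apply]
    have hy0 : y ≠ 0 := fun h => hx0 (by rw [← hcy, h, map_zero])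
    have hwfix : rho M cs (cs.wordProd l) y = y := by
      have hw : cs.wordProd l = ((cc : W))⁻¹ * v * (cc : W) := by
        rw [mul_assoc, ← hcc', inv_mul_cancel_left]
      rw [hw, map_mul, map_mul, Module.End.mul_apply, Module.End.mul_apply, hcy, hvx]
    have hffy : ∀ b, ff M b y = 0 := fun b => eval_zero M cs l hnd hwfix b (hall b)
    exact hy0 (eq_zero_of_all_ff_zero M cs hffy)
  rw [hprod]
  exact ⟨le_antisymm (cs.length_wordProd_le l) (key _ (IsConj.refl _)), key⟩
end

section
/- Let (W, S) be a finite Coxeter system with simple reflections s₁, s₂, …, sₙ (listed without repetition, exhausting S). For every permutation π of {1, …, n}, the element s_{π(1)}s_{π(2)}⋯s_{π(n)} is conjugate in W to s₁s₂⋯sₙ. -/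
open Real

namespace CoxProof

set_option linter.unusedSectionVars false

variable {B : Type*} [Fintype B] [DecidableEq B]

/-- entries of bilinear form -/
noncomputable def kk (M : CoxeterMatrix B) (i j : B) : ℝ :=
  -Real.cos (Real.pi / (M i j : ℕ))

variable (M : CoxeterMatrix B)

lemma kk_diag (i : B) : kk M i i = 1 := by
  simp [kk, M.diagonal i]

lemma kk_symm (i j : B) : kk M i j = kk M j i := by
  rw [kk, kk, M.symmetric]

lemma kk_nonpos {i j : B} (h : i ≠ j) : kk M i j ≤ 0 := by
  rcases Nat.eq_zero_or_pos (M i j) with h0 | h1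
  · simp [kk, h0]
  · have h2 : 2 ≤ M i j := by
      rcases Nat.lt_or_ge (M i j) 2 with h | h
      · interval_cases h' : (M i j) <;> simp_all
        exact absurd h' (M.off_diagonal i j h)
      · exact h
    have hpos : (0:ℝ) < (M i j : ℝ) := by positivity
    have hd : (0:ℝ) ≤ Real.pi / (M i j : ℕ) := by positivity
    have hd2 : Real.pi / (M i j : ℕ) ≤ Real.pi / 2 := by
      apply div_le_div_of_nonneg_left Real.pi_pos.le (by norm_num)
      exact_mod_cast h2
    have : 0 ≤ Real.cos (Real.pi / (M i j : ℕ)) := by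
      apply Real.cos_nonneg_of_mem_Icc
      constructor
      · linarith [Real.pi_pos]
      · exact hd2
    simp only [kk]; linarith

lemma kk_le_neg_half {i j : B} (h : i ≠ j) (h2 : M i j ≠ 2) : kk M i j ≤ -(1/2) := by
  rcases Nat.eq_zero_or_pos (M i j) with h0 | h1
  · simp [kk, h0]; norm_num
  · have h3 : 3 ≤ M i j := by
      rcases Nat.lt_or_ge (M i j) 3 with hl | hl
      · interval_cases hmm : (M i j) <;> simp_all
        exact absurd hmm (M.off_diagonal i j h)
      · exact hl
    have hpos : (0:ℝ) < (M i j : ℝ) := by positivity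
    have hle : Real.pi / (M i j : ℕ) ≤ Real.pi / 3 := by
      apply div_le_div_of_nonneg_left Real.pi_pos.le (by norm_num)
      exact_mod_cast h3
    have : Real.cos (Real.pi/3) ≤ Real.cos (Real.pi / (M i j : ℕ)) := by
      apply Real.cos_le_cos_of_nonneg_of_le_pi
      · positivity
      · nlinarith [Real.pi_pos]
      · exact hle
    rw [Real.cos_pi_div_three] at this
    simp only [kk]; linarith

end CoxProof

namespace CoxProof

set_option linter.unusedSectionVars false

variable {B : Type*} [Fintype B] [DecidableEq B] (M : CoxeterMatrix B)

/-- the linear functional `v ↦ B(e_i, v)` -/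
noncomputable def ph (i : B) (v : B → ℝ) : ℝ := ∑ j, kk M i j * v j

lemma ph_single (i j : B) : ph M i (Pi.single j 1) = kk M i j := by
  rw [ph, Finset.sum_eq_single j]
  · simp
  · intro x _ hx; simp [Pi.single_apply, hx]
  · intro h; exact absurd (Finset.mem_univ j) h

lemma ph_add (i : B) (u v : B → ℝ) : ph M i (u + v) = ph M i u + ph M i v := by
  simp [ph, mul_add, Finset.sum_add_distrib]

lemma ph_smul (i : B) (c : ℝ) (v : B → ℝ) : ph M i (c • v) = c * ph M i v := by
  simp only [ph, Pi.smul_apply, smul_eq_mul, Finset.mul_sum]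
  exact Finset.sum_congr rfl fun x _ => by ring

lemma ph_sub (i : B) (u v : B → ℝ) : ph M i (u - v) = ph M i u - ph M i v := by
  simp [ph, mul_sub, Finset.sum_sub_distrib]

/-- the reflection attached to index `i` -/
noncomputable def sg (i : B) (v : B → ℝ) : B → ℝ :=
  v - (2 * ph M i v) • (Pi.single i 1 : B → ℝ)

lemma sg_apply (i : B) (v : B → ℝ) (x : B) :
    sg M i v x = v x - (2 * ph M i v) * (if x = i then 1 else 0) := by
  simp [sg, Pi.single_apply]

lemma sg_add_smul (i : B) (u v : B → ℝ) (c : ℝ) :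
    sg M i (u + c • v) = sg M i u + c • sg M i v := by
  ext x
  simp only [sg_apply, ph_add, ph_smul, Pi.add_apply, Pi.smul_apply, smul_eq_mul]
  split <;> ring

lemma ph_sg (i : B) (v : B → ℝ) : ph M i (sg M i v) = - ph M i v := by
  simp only [sg, ph_sub, ph_smul, ph_single, kk_diag]
  ring

lemma sg_involutive (i : B) : Function.Involutive (sg M i) := by
  intro v
  ext x
  rw [sg_apply, ph_sg, sg_apply]
  split <;> ring

lemma sg_fixed (i : B) (v : B → ℝ) (h : ph M i v = 0) : sg M i v = v := by
  ext x; rw [sg_apply, h]; ring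

end CoxProof

namespace CoxProof

set_option linter.unusedSectionVars false
set_option maxHeartbeats 1000000

open Complex in
lemma dihedral {B : Type*} [Fintype B] [DecidableEq B] (M : CoxeterMatrix B)
    (i j : B) (hij : i ≠ j) (m : ℕ) (hm : 2 ≤ m) (hMij : M i j = m) (v : B → ℝ) :
    (fun w => sg M i (sg M j w))^[m] v = v := by
  set θ : ℝ := Real.pi / m with hθ
  have hmR : (0:ℝ) < (m:ℝ) := by positivity
  have hθpos : 0 < θ := by positivity
  have hθlt : θ < Real.pi := by
    rw [hθ, div_lt_iff₀ hmR]
    have h2m : (2:ℝ) ≤ (m:ℝ) := by exact_mod_cast hm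
    nlinarith [Real.pi_pos, mul_le_mul_of_nonneg_left h2m Real.pi_pos.le]
  set c : ℝ := Real.cos θ with hcdef
  set s : ℝ := Real.sin θ with hsdef
  have hs : 0 < s := Real.sin_pos_of_pos_of_lt_pi hθpos hθlt
  have hsc : s^2 = 1 - c^2 := by
    have := Real.sin_sq_add_cos_sq θ; linarith
  have hkkij : kk M i j = -c := by rw [kk, hMij]
  have hkkji : kk M j i = -c := by rw [← kk_symm, hkkij]
  -- coordinates
  set α : ℝ := (ph M i v + c * ph M j v)/(s^2) with hα
  set β : ℝ := (ph M j v + c * ph M i v)/(s^2) with hβ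
  set ei : B → ℝ := Pi.single i 1 with hei
  set ej : B → ℝ := Pi.single j 1 with hej
  set v' : B → ℝ := v - α • ei - β • ej with hv'
  have hphv : ∀ (a b : ℝ), ph M i (v' + a • ei + b • ej) = a - c * b ∧
      ph M j (v' + a • ei + b • ej) = -c * a + b := by
    intro a b
    have e1 : ph M i v' = 0 := by
      rw [hv', ph_sub, ph_sub, ph_smul, ph_smul, hei, hej, ph_single, ph_single,
        kk_diag, hkkij, hα, hβ]
      field_simp
      linear_combination (ph M i v) * hsc
    have e2 : ph M j v' = 0 := by
      rw [hv', ph_sub, ph_sub, ph_smul, ph_smul, hei, hej, ph_single, ph_single,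
        kk_diag, hkkji, hα, hβ]
      field_simp
      linear_combination (ph M j v) * hsc
    constructor
    · rw [ph_add, ph_add, ph_smul, ph_smul, e1, hei, hej, ph_single, ph_single,
        kk_diag, hkkij]; ring
    · rw [ph_add, ph_add, ph_smul, ph_smul, e2, hei, hej, ph_single, ph_single,
        kk_diag, hkkji]; ring
  -- coordinate dynamics
  set G : ℝ × ℝ → ℝ × ℝ := fun p => ((4*c^2-1)*p.1 - 2*c*p.2, 2*c*p.1 - p.2) with hG
  have KEY : ∀ (a b : ℝ), sg M i (sg M j (v' + a • ei + b • ej)) =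
      v' + (G (a,b)).1 • ei + (G (a,b)).2 • ej := by
    intro a b
    obtain ⟨h1, h2⟩ := hphv a b
    have step1 : sg M j (v' + a • ei + b • ej) = v' + a • ei + (2*c*a - b) • ej := by
      ext x
      rw [sg_apply, h2]
      simp only [Pi.add_apply, Pi.smul_apply, smul_eq_mul, hei, hej, Pi.single_apply]
      rcases eq_or_ne x i with rfl | hxi
      · rcases eq_or_ne x j with h | hxj
        · exact absurd h hij
        · simp only [if_pos rfl, if_neg hxj]; ring
      · rcases eq_or_ne x j with rfl | hxj
        · simp only [if_pos rfl, if_neg hxi]; ring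
        · simp only [if_neg hxi, if_neg hxj]; ring
    rw [step1]
    obtain ⟨h1', _⟩ := hphv a (2*c*a - b)
    ext x
    rw [sg_apply, h1']
    simp only [Pi.add_apply, Pi.smul_apply, smul_eq_mul, hG, hei, hej, Pi.single_apply]
    rcases eq_or_ne x i with rfl | hxi
    · rcases eq_or_ne x j with h | hxj
      · exact absurd h hij
      · simp only [if_pos rfl, if_neg hxj]; ring
    · rcases eq_or_ne x j with rfl | hxj
      · simp only [if_pos rfl, if_neg hxi]; ring
      · simp only [if_neg hxi, if_neg hxj]; ring
  have ITER : ∀ (n : ℕ) (a b : ℝ), (fun w => sg M i (sg M j w))^[n] (v' + a • ei + b • ej) =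
      v' + (G^[n] (a,b)).1 • ei + (G^[n] (a,b)).2 • ej := by
    intro n
    induction n with
    | zero => intro a b; simp
    | succ n ih =>
      intro a b
      rw [Function.iterate_succ_apply, Function.iterate_succ_apply, KEY a b, ih]
  -- complex rotation
  set T : ℝ × ℝ → ℂ := fun p => Complex.I * p.1 - Complex.I * Complex.exp (θ * Complex.I) * p.2
    with hT
  have hE : Complex.exp ((θ:ℂ) * Complex.I) = (c:ℂ) + (s:ℂ) * Complex.I := by
    rw [Complex.exp_mul_I]
    simp [hcdef, hsdef]
  have hscC : (s:ℂ)^2 = 1 - (c:ℂ)^2 := by exact_mod_cast hsc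
  set R : ℂ := Complex.exp (((-(2*θ) : ℝ) : ℂ) * Complex.I) with hR
  have hE2 : R = ((c:ℂ) - (s:ℂ)*Complex.I)^2 := by
    have h1 : Complex.exp (((2*θ:ℝ):ℂ)*Complex.I) = ((c:ℂ) + (s:ℂ)*Complex.I)^2 := by
      rw [show ((2*θ:ℝ):ℂ)*Complex.I = (θ:ℂ)*Complex.I + (θ:ℂ)*Complex.I by push_cast; ring,
        Complex.exp_add, hE]; ring
    have h2 : (((c:ℂ) - (s:ℂ)*Complex.I)^2) * (((c:ℂ) + (s:ℂ)*Complex.I)^2) = 1 := by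
      linear_combination (1 + (s:ℂ)^2 + (c:ℂ)^2) * hscC + (-(s:ℂ)^4 + (s:ℂ)^4*Complex.I^2 - 2*(c:ℂ)^2*(s:ℂ)^2) * Complex.I_sq
    have h3 : ((-(2*θ):ℝ):ℂ) * Complex.I = -(((2*θ:ℝ):ℂ)*Complex.I) := by push_cast; ring
    rw [hR, h3, Complex.exp_neg, h1]
    exact (eq_inv_of_mul_eq_one_left h2).symm
  have TG : ∀ p : ℝ × ℝ, T (G p) = R * T p := by
    intro p
    rw [hE2, hT]
    simp only [hG]
    push_cast
    rw [hE]
    linear_combination ((p.2:ℂ)*(s:ℂ) + (p.2:ℂ)*(c:ℂ)*Complex.I + (p.1:ℂ)*Complex.I) * hscC + ((p.2:ℂ)*(s:ℂ) - (p.2:ℂ)*(s:ℂ)^3 + (p.2:ℂ)*(s:ℂ)^3*Complex.I^2 - (p.2:ℂ)*(c:ℂ)*(s:ℂ)^2*Complex.I - (p.2:ℂ)*(c:ℂ)^2*(s:ℂ) - (p.1:ℂ)*(s:ℂ)^2*Complex.I) * Complex.I_sq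
  have TITER : ∀ (n : ℕ) (p : ℝ × ℝ), T (G^[n] p) = R^n * T p := by
    intro n
    induction n with
    | zero => intro p; simp
    | succ n ih =>
      intro p
      rw [Function.iterate_succ_apply, ih (G p), TG p, pow_succ]
      ring
  have hRm : R^m = 1 := by
    rw [hR, ← Complex.exp_nat_mul]
    have harg : (m:ℂ) * (((-(2*θ) : ℝ) : ℂ) * Complex.I) = -(2*(Real.pi:ℂ)*Complex.I) := by
      have hmθ : (m:ℝ) * θ = Real.pi := by
        rw [hθ]; field_simp
      have : ((m:ℝ) * θ : ℝ) = Real.pi := hmθ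
      push_cast
      have hC : (m:ℂ) * (θ:ℂ) = (Real.pi:ℂ) := by exact_mod_cast congrArg (fun x:ℝ => (x:ℂ)) hmθ
      linear_combination (-2*Complex.I) * hC
    rw [harg, Complex.exp_neg, Complex.exp_two_pi_mul_I, inv_one]
  have Tform : ∀ p : ℝ × ℝ, T p = ((s*p.2 : ℝ) : ℂ) + ((p.1 - c*p.2 : ℝ):ℂ)*Complex.I := by
    intro p
    rw [hT]
    dsimp only
    rw [hE]
    push_cast
    linear_combination (-(p.2:ℂ)*(s:ℂ)) * Complex.I_sq
  have Tinj : ∀ p q : ℝ × ℝ, T p = T q → p = q := by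
    rintro ⟨p1, p2⟩ ⟨q1, q2⟩ h
    rw [Tform, Tform] at h
    have hre := congrArg Complex.re h
    have him := congrArg Complex.im h
    simp only [Complex.add_re, Complex.ofReal_re, Complex.mul_re, Complex.ofReal_im,
      Complex.I_re, Complex.I_im, Complex.add_im, Complex.mul_im] at hre him
    have h2 : p2 = q2 := by
      apply mul_left_cancel₀ hs.ne'
      simpa using hre
    have h1 : p1 = q1 := by rw [h2] at him; linarith
    simp [h1, h2]
  have hv : v = v' + α • ei + β • ej := by
    rw [hv']
    ext x
    simp only [Pi.sub_apply, Pi.add_apply, Pi.smul_apply, smul_eq_mul]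
    ring
  have hGm : G^[m] (α, β) = (α, β) := by
    apply Tinj
    rw [TITER m, hRm, one_mul]
  conv_lhs => rw [hv]
  rw [ITER m α β, hGm]
  exact hv.symm

end CoxProof

namespace CoxProof

set_option linter.unusedSectionVars false

variable {B : Type*} [Fintype B] [DecidableEq B] (M : CoxeterMatrix B)

/-- the reflection permutation -/
noncomputable def rp (i : B) : Equiv.Perm (B → ℝ) := (sg_involutive M i).toPerm

lemma rp_apply (i : B) (v : B → ℝ) : rp M i v = sg M i v := rfl

lemma pow_apply_eq_iterate (x : Equiv.Perm (B → ℝ)) (n : ℕ) (v : B → ℝ) :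
    (x ^ n) v = (fun w => x w)^[n] v := by
  induction n generalizing v with
  | zero => simp
  | succ n ih =>
    rw [Function.iterate_succ_apply, pow_succ, Equiv.Perm.mul_apply, ih]

lemma liftable : M.IsLiftable (rp M) := by
  intro i j
  by_cases hij : i = j
  · subst hij
    rw [M.diagonal, pow_one]
    refine Equiv.ext fun v => ?_
    simp only [Equiv.Perm.mul_apply, Equiv.Perm.coe_one, id_eq, rp_apply]
    exact sg_involutive M i v
  · rcases Nat.eq_zero_or_pos (M i j) with h0 | h1
    · rw [h0, pow_zero]
    · have h2 : 2 ≤ M i j := by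
        have := M.off_diagonal i j hij
        omega
      refine Equiv.ext fun v => ?_
      rw [Equiv.Perm.coe_one, id_eq, pow_apply_eq_iterate]
      have : (fun w => (rp M i * rp M j) w) = (fun w => sg M i (sg M j w)) := rfl
      rw [this]
      exact dihedral M i j hij (M i j) h2 rfl v

variable {W : Type*} [Group W] (cs : CoxeterSystem M W)

/-- the geometric representation -/
noncomputable def rep : W →* Equiv.Perm (B → ℝ) := cs.lift ⟨rp M, liftable M⟩

lemma rep_simple (i : B) : rep M cs (cs.simple i) = rp M i :=
  cs.lift_apply_simple (liftable M) i

lemma rep_linear (w : W) : ∀ (u v : B → ℝ) (a : ℝ),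
    rep M cs w (u + a • v) = rep M cs w u + a • rep M cs w v := by
  induction w using cs.simple_induction with
  | simple i => intro u v a; rw [rep_simple]; exact sg_add_smul M i u v a
  | one => intro u v a; simp
  | mul w₁ w₂ h1 h2 =>
    intro u v a
    simp only [map_mul, Equiv.Perm.mul_apply, h2 u v a]
    exact h1 _ _ a

/-- the invariant bilinear form -/
noncomputable def bb (x y : B → ℝ) : ℝ := ∑ i, x i * ph M i y

lemma bb_symm (x y : B → ℝ) : bb M x y = bb M y x := by
  simp only [bb, ph, Finset.mul_sum]
  rw [Finset.sum_comm]
  apply Finset.sum_congr rfl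
  intro i _
  apply Finset.sum_congr rfl
  intro j _
  rw [kk_symm]
  ring

lemma bb_single_left (i : B) (y : B → ℝ) : bb M (Pi.single i 1) y = ph M i y := by
  rw [bb, Finset.sum_eq_single i]
  · simp
  · intro x _ hx; simp [Pi.single_apply, hx]
  · intro h; exact absurd (Finset.mem_univ i) h

lemma bb_add_smul_left (u v y : B → ℝ) (a : ℝ) :
    bb M (u + a • v) y = bb M u y + a * bb M v y := by
  simp only [bb, Pi.add_apply, Pi.smul_apply, smul_eq_mul, add_mul, Finset.sum_add_distrib,
    Finset.mul_sum]
  congr 1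
  apply Finset.sum_congr rfl
  intro x _
  ring

lemma bb_add_smul_right (u v y : B → ℝ) (a : ℝ) :
    bb M y (u + a • v) = bb M y u + a * bb M y v := by
  rw [bb_symm, bb_add_smul_left, bb_symm M u, bb_symm M v]

lemma bb_sg (i : B) (x y : B → ℝ) : bb M (sg M i x) (sg M i y) = bb M x y := by
  have hx : sg M i x = x + (-(2 * ph M i x)) • (Pi.single i 1 : B → ℝ) := by
    ext z; rw [sg_apply]; simp only [Pi.add_apply, Pi.smul_apply, smul_eq_mul, Pi.single_apply]; ring
  have hy : sg M i y = y + (-(2 * ph M i y)) • (Pi.single i 1 : B → ℝ) := by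
    ext z; rw [sg_apply]; simp only [Pi.add_apply, Pi.smul_apply, smul_eq_mul, Pi.single_apply]; ring
  rw [hx, hy, bb_add_smul_left, bb_add_smul_right, bb_add_smul_right, bb_single_left,
    bb_symm M _ (Pi.single i 1), bb_single_left, bb_single_left, ph_single, kk_diag]
  ring

lemma bb_rep (w : W) : ∀ (x y : B → ℝ), bb M (rep M cs w x) (rep M cs w y) = bb M x y := by
  induction w using cs.simple_induction with
  | simple i => intro x y; rw [rep_simple]; exact bb_sg M i x y
  | one => intro x y; simp
  | mul w₁ w₂ h1 h2 =>
    intro x y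
    simp only [map_mul, Equiv.Perm.mul_apply, h1, h2]

/-- conjugated reflections act by the reflection formula -/
lemma rep_conj (w : W) (j : B) (x : B → ℝ) :
    rep M cs (w * cs.simple j * w⁻¹) x =
      x - (2 * bb M (rep M cs w (Pi.single j 1)) x) • rep M cs w (Pi.single j 1) := by
  have hx : x = rep M cs w (rep M cs w⁻¹ x) := by
    rw [← Equiv.Perm.mul_apply, ← map_mul, mul_inv_cancel, map_one, Equiv.Perm.coe_one, id_eq]
  simp only [map_mul, Equiv.Perm.mul_apply]
  rw [rep_simple]
  have hsg : sg M j (rep M cs w⁻¹ x) = rep M cs w⁻¹ x +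
      (-(2 * ph M j (rep M cs w⁻¹ x))) • (Pi.single j 1 : B → ℝ) := by
    ext z; rw [sg_apply]; simp only [Pi.add_apply, Pi.smul_apply, smul_eq_mul, Pi.single_apply]; ring
  rw [rp_apply, hsg, rep_linear]
  have hph : ph M j (rep M cs w⁻¹ x) = bb M (rep M cs w (Pi.single j 1)) x := by
    rw [← bb_single_left]
    conv_rhs => rw [hx]
    rw [bb_rep]
  rw [hph]
  conv_lhs => rw [← hx]
  ext z
  simp only [Pi.add_apply, Pi.smul_apply, Pi.sub_apply, smul_eq_mul]
  ring

end CoxProof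

namespace CoxProof

set_option linter.unusedSectionVars false

variable {B : Type*} [Fintype B] [DecidableEq B] {M : CoxeterMatrix B}
variable {W : Type*} [Group W]

lemma rep_zero (cs : CoxeterSystem M W) (w : W) : rep M cs w 0 = 0 := by
  have h := rep_linear M cs w 0 0 (-1)
  have h0 : (0 : B → ℝ) + (-1 : ℝ) • (0 : B → ℝ) = 0 := by ext x; simp
  rw [h0] at h
  have h1 : rep M cs w 0 + (-1 : ℝ) • rep M cs w 0 = 0 := by ext x; simp
  rw [h] at h1 ⊢
  ext x
  have := congrFun h1 x
  simp only [Pi.add_apply, Pi.smul_apply, smul_eq_mul, Pi.zero_apply] at this ⊢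
  linarith

lemma rep_smul (cs : CoxeterSystem M W) (w : W) (a : ℝ) (x : B → ℝ) :
    rep M cs w (a • x) = a • rep M cs w x := by
  have h := rep_linear M cs w 0 x a
  rw [zero_add, rep_zero, zero_add] at h
  exact h

lemma rep_lin2 (cs : CoxeterSystem M W) (w : W) (a b : ℝ) (x y : B → ℝ) :
    rep M cs w (a • x + b • y) = a • rep M cs w x + b • rep M cs w y := by
  rw [rep_linear M cs w (a • x) y b, rep_smul]

/-- chain of vectors along a path -/
noncomputable def chainVec (M : CoxeterMatrix B) (c : ℕ → B) (k : ℕ) : ℕ → (B → ℝ)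
  | 0 => Pi.single (c (k-1)) 1
  | t+1 => sg M (c (k-2-t)) (chainVec M c k t)

/-- chain of group elements along a path -/
noncomputable def chainWrd (cs : CoxeterSystem M W) (c : ℕ → B) (k : ℕ) : ℕ → W
  | 0 => 1
  | t+1 => cs.simple (c (k-2-t)) * chainWrd cs c k t

lemma chainVec_rep (cs : CoxeterSystem M W) (c : ℕ → B) (k : ℕ) (t : ℕ) :
    rep M cs (chainWrd cs c k t) (Pi.single (c (k-1)) 1) = chainVec M c k t := by
  induction t with
  | zero => simp [chainWrd, chainVec]
  | succ t ih =>
    rw [chainWrd, chainVec, map_mul, Equiv.Perm.mul_apply, ih, rep_simple, rp_apply]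

/-- the coefficient sequences -/
noncomputable def seqPQ (b : ℝ) : ℕ → ℝ × ℝ
  | 0 => (1, 0)
  | n+1 => ((4*b^2-1) * (seqPQ b n).1 + 2*b * (seqPQ b n).2,
            -(2*b) * (seqPQ b n).1 - (seqPQ b n).2)

lemma seqPQ_growth (b : ℝ) (hb : b ≤ -1) (n : ℕ) :
    (seqPQ b n).2 + 1 ≤ (seqPQ b n).1 ∧ 2*(n:ℝ) ≤ (seqPQ b n).2 := by
  induction n with
  | zero => simp [seqPQ]
  | succ n ih =>
    obtain ⟨h1, h2⟩ := ih
    have hq0 : (0:ℝ) ≤ (seqPQ b n).2 := le_trans (by positivity) h2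
    have hp0 : (0:ℝ) ≤ (seqPQ b n).1 := by linarith
    simp only [seqPQ]
    push_cast
    constructor
    · nlinarith [mul_nonneg (by nlinarith : (0:ℝ) ≤ (-b)*(-(b+1))) hq0,
        mul_nonneg (by nlinarith : (0:ℝ) ≤ 4*b^2+2*b-1)
          (by linarith : (0:ℝ) ≤ (seqPQ b n).1 - (seqPQ b n).2 - 1)]
    · nlinarith [mul_nonneg (by linarith : (0:ℝ) ≤ -2*b - 2) hp0]

lemma chainVec_inv (c : ℕ → B) (k : ℕ) (hk : 3 ≤ k)
    (hinj : ∀ a, a < k → ∀ b, b < k → c a = c b → a = b)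
    (hedge : ∀ t, t + 1 < k → M (c t) (c (t+1)) ≠ 2)
    (t : ℕ) (ht : t ≤ k-2) :
    (∀ x, 0 ≤ chainVec M c k t x) ∧ chainVec M c k t (c (k-1)) = 1 ∧
    1 ≤ chainVec M c k t (c (k-1-t)) ∧
    (∀ x, chainVec M c k t x ≠ 0 → ∃ s, k-1-t ≤ s ∧ s ≤ k-1 ∧ x = c s) := by
  induction t with
  | zero =>
    refine ⟨fun x => ?_, ?_, ?_, fun x hx => ?_⟩
    · simp only [chainVec, Pi.single_apply]
      split <;> norm_num
    · simp [chainVec]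
    · simp [chainVec]
    · simp only [chainVec, Pi.single_apply] at hx
      refine ⟨k-1, by omega, by omega, ?_⟩
      by_contra hne
      rw [if_neg hne] at hx
      exact hx rfl
  | succ t ih =>
    obtain ⟨ih1, ih2, ih3, ih4⟩ := ih (by omega)
    set q := k-2-t with hq
    have hq1 : k-1-t = q+1 := by omega
    have hq2 : k-1-(t+1) = q := by omega
    have hqk : q < k := by omega
    have hq1k : q+1 < k := by omega
    rw [hq1] at ih3
    have hvq : chainVec M c k t (c q) = 0 := by
      by_contra h
      obtain ⟨s, hs1, hs2, hs3⟩ := ih4 _ h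
      have := hinj q hqk s (by omega) hs3
      omega
    have hcqq1 : c q ≠ c (q+1) := fun h => by have := hinj q hqk (q+1) hq1k h; omega
    have hph : ph M (c q) (chainVec M c k t) ≤ -(1/2) * chainVec M c k t (c (q+1)) := by
      rw [ph, ← Finset.add_sum_erase _ _ (Finset.mem_univ (c (q+1)))]
      have hmain : kk M (c q) (c (q+1)) * chainVec M c k t (c (q+1)) ≤
          -(1/2) * chainVec M c k t (c (q+1)) :=
        mul_le_mul_of_nonneg_right (kk_le_neg_half M hcqq1 (hedge q hq1k)) (ih1 _)
      have hrest : ∑ x ∈ Finset.univ.erase (c (q+1)), kk M (c q) x * chainVec M c k t x ≤ 0 := by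
        apply Finset.sum_nonpos
        intro x hx
        rcases eq_or_ne (chainVec M c k t x) 0 with h0 | h0
        · rw [h0, mul_zero]
        · obtain ⟨s, hs1, hs2, hs3⟩ := ih4 _ h0
          have hne : c q ≠ x := by
            rw [hs3]
            intro h
            have := hinj q hqk s (by omega) h
            omega
          exact mul_nonpos_of_nonpos_of_nonneg (kk_nonpos M hne) (ih1 _)
      linarith
    have hstep : ∀ x, chainVec M c k (t+1) x =
        chainVec M c k t x - (2 * ph M (c q) (chainVec M c k t)) * (if x = c q then 1 else 0) := by
      intro x
      show sg M (c (k-2-t)) (chainVec M c k t) x = _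
      rw [← hq, sg_apply]
    refine ⟨fun x => ?_, ?_, ?_, fun x hx => ?_⟩
    · rw [hstep]
      rcases eq_or_ne x (c q) with rfl | hne
      · rw [if_pos rfl, hvq]
        nlinarith [ih3]
      · rw [if_neg hne]
        have := ih1 x
        linarith
    · rw [hstep]
      have hne : c (k-1) ≠ c q := fun h => by have := hinj (k-1) (by omega) q hqk h; omega
      rw [if_neg hne, ih2]
      ring
    · rw [hq2, hstep, if_pos rfl, hvq]
      nlinarith [ih3]
    · rw [hstep] at hx
      rcases eq_or_ne x (c q) with rfl | hne
      · exact ⟨q, by omega, by omega, rfl⟩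
      · rw [if_neg hne] at hx
        simp only [mul_zero, sub_zero] at hx
        obtain ⟨s, hs1, hs2, hs3⟩ := ih4 _ hx
        exact ⟨s, by omega, hs2, hs3⟩

end CoxProof

namespace CoxProof

set_option linter.unusedSectionVars false

variable {B : Type*} [Fintype B] [DecidableEq B] {M : CoxeterMatrix B}
variable {W : Type*} [Group W]

lemma no_cycle [Finite W] (cs : CoxeterSystem M W) (k : ℕ) (hk : 3 ≤ k) (c : ℕ → B)
    (hinj : ∀ a, a < k → ∀ b, b < k → c a = c b → a = b)
    (hedge : ∀ t, t + 1 < k → M (c t) (c (t+1)) ≠ 2)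
    (hwrap : M (c (k-1)) (c 0) ≠ 2) : False := by
  obtain ⟨inv1, inv2, inv3, inv4⟩ :=
    chainVec_inv (M := M) c k hk hinj hedge (k-2) (le_refl _)
  set θ : B → ℝ := chainVec M c k (k-2) with hθ
  have hk12 : k-1-(k-2) = 1 := by omega
  rw [hk12] at inv3
  set u : B → ℝ := Pi.single (c 0) 1 with hu
  set y : W := chainWrd cs c k (k-2) with hy
  have hrepy : rep M cs y (Pi.single (c (k-1)) 1) = θ := chainVec_rep cs c k (k-2)
  -- the key quantity
  set bv : ℝ := ph M (c 0) θ with hbv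
  have hc01 : c 0 ≠ c 1 := fun h => by have := hinj 0 (by omega) 1 (by omega) h; omega
  have hc0k1 : c 0 ≠ c (k-1) := fun h => by have := hinj 0 (by omega) (k-1) (by omega) h; omega
  have hc1k1 : c 1 ≠ c (k-1) := fun h => by have := hinj 1 (by omega) (k-1) (by omega) h; omega
  have hbv1 : bv ≤ -1 := by
    rw [hbv, ph, ← Finset.add_sum_erase _ _ (Finset.mem_univ (c 1)),
      ← Finset.add_sum_erase _ _ (Finset.mem_erase.mpr ⟨(Ne.symm hc1k1), Finset.mem_univ (c (k-1))⟩)]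
    have h1 : kk M (c 0) (c 1) * θ (c 1) ≤ -(1/2) * 1 := by
      have := mul_le_mul_of_nonneg_right (kk_le_neg_half M hc01 (hedge 0 (by omega))) (inv1 (c 1))
      nlinarith [inv3, kk_le_neg_half M hc01 (hedge 0 (by omega))]
    have h2 : kk M (c 0) (c (k-1)) * θ (c (k-1)) ≤ -(1/2) := by
      rw [inv2, mul_one, kk_symm]
      exact kk_le_neg_half M (Ne.symm hc0k1) hwrap
    have h3 : ∑ x ∈ (Finset.univ.erase (c 1)).erase (c (k-1)), kk M (c 0) x * θ x ≤ 0 := by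
      apply Finset.sum_nonpos
      intro x hx
      rcases eq_or_ne (θ x) 0 with h0 | h0
      · rw [h0, mul_zero]
      · obtain ⟨s, hs1, hs2, hs3⟩ := inv4 _ h0
        have hne : c 0 ≠ x := by
          rw [hs3]
          intro h
          have := hinj 0 (by omega) s (by omega) h
          omega
        exact mul_nonpos_of_nonpos_of_nonneg (kk_nonpos M hne) (inv1 _)
    linarith
  -- the group element of infinite order
  set w0 : W := cs.simple (c 0) * (y * cs.simple (c (k-1)) * y⁻¹) with hw0
  have hbbθθ : bb M θ θ = 1 := by
    rw [← hrepy, bb_rep, bb_single_left, ph_single, kk_diag]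
  have hbbuθ : bb M u θ = bv := by rw [hu, bb_single_left, hbv]
  have hτ : ∀ x, rep M cs (y * cs.simple (c (k-1)) * y⁻¹) x = x - (2 * bb M θ x) • θ := by
    intro x
    rw [rep_conj, hrepy]
  have hgu : rep M cs w0 u = (4*bv^2-1) • u + (2*bv) • ((-1 : ℝ) • θ) := by
    rw [hw0, map_mul, Equiv.Perm.mul_apply, hτ u, rep_simple, rp_apply]
    have hsub : u - (2 * bb M θ u) • θ = u + (2 * (bb M θ u)) • ((-1 : ℝ) • θ) := by
      ext z; simp only [Pi.sub_apply, Pi.add_apply, Pi.smul_apply, smul_eq_mul]; ring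
    rw [hsub]
    have hbbθu : bb M θ u = bv := by rw [bb_symm]; exact hbbuθ
    rw [hbbθu]
    ext z
    rw [sg_apply]
    have hph : ph M (c 0) (u + (2*bv) • ((-1:ℝ) • θ)) = 1 - 2*bv^2 := by
      rw [ph_add, ph_smul, ph_smul, hu, ph_single, kk_diag, ← hbv]
      ring
    rw [hph]
    simp only [Pi.add_apply, Pi.smul_apply, smul_eq_mul, hu, Pi.single_apply]
    rcases eq_or_ne z (c 0) with rfl | hne
    · rw [if_pos rfl]; ring
    · rw [if_neg hne]; ring
  have hgθ : rep M cs w0 θ = (2*bv) • u + (-1 : ℝ) • θ := by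
    rw [hw0, map_mul, Equiv.Perm.mul_apply, hτ θ, rep_simple, rp_apply]
    ext z
    rw [sg_apply]
    have hph : ph M (c 0) (θ - (2 * bb M θ θ) • θ) = -bv := by
      rw [ph_sub, ph_smul, hbbθθ, ← hbv]; ring
    rw [hph]
    simp only [Pi.add_apply, Pi.sub_apply, Pi.smul_apply, smul_eq_mul, hu, Pi.single_apply, hbbθθ]
    rcases eq_or_ne z (c 0) with rfl | hne
    · rw [if_pos rfl]; ring
    · rw [if_neg hne]; ring
  -- iterate
  have hiter : ∀ n : ℕ, rep M cs (w0 ^ n) u = (seqPQ bv n).1 • u + (seqPQ bv n).2 • θ := by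
    intro n
    induction n with
    | zero =>
      simp only [pow_zero, map_one, Equiv.Perm.coe_one, id_eq, seqPQ]
      ext z; simp
    | succ n ihn =>
      rw [pow_succ', map_mul, Equiv.Perm.mul_apply, ihn, rep_lin2, hgu, hgθ]
      show _ = ((4*bv^2-1) * (seqPQ bv n).1 + 2*bv * (seqPQ bv n).2) • u +
        (-(2*bv) * (seqPQ bv n).1 - (seqPQ bv n).2) • θ
      ext z
      simp only [Pi.add_apply, Pi.smul_apply, smul_eq_mul]
      ring
  -- contradiction
  obtain ⟨n, hn, hw0n⟩ := (isOfFinOrder_of_finite w0).exists_pow_eq_one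
  have h1 : rep M cs (w0 ^ n) u = u := by rw [hw0n, map_one, Equiv.Perm.coe_one, id_eq]
  have huk1 : u (c (k-1)) = 0 := by
    rw [hu, Pi.single_apply, if_neg (Ne.symm hc0k1)]
  have h2 : (seqPQ bv n).1 * u (c (k-1)) + (seqPQ bv n).2 * θ (c (k-1)) = u (c (k-1)) := by
    have h3 := congrFun ((hiter n).symm.trans h1) (c (k-1))
    simpa using h3
  rw [huk1, inv2] at h2
  have hgrow := (seqPQ_growth bv hbv1 n).2
  have hn1 : (1:ℝ) ≤ (n:ℝ) := by exact_mod_cast hn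
  nlinarith [h2, hgrow, hn1]

end CoxProof

namespace CoxProof

set_option linter.unusedSectionVars false

variable {B : Type*} [Fintype B] [DecidableEq B] {M : CoxeterMatrix B}
variable {W : Type*} [Group W]

lemma leaf_exists [Finite W] (cs : CoxeterSystem M W) (l : List B) (hne : l ≠ []) :
    ∃ b ∈ l, ∀ x ∈ l, ∀ y ∈ l, x ≠ b → y ≠ b → M b x ≠ 2 → M b y ≠ 2 → x = y := by
  by_contra hcon
  push_neg at hcon
  have H : ∀ b ∈ l, ∃ x ∈ l, ∃ y ∈ l, x ≠ b ∧ y ≠ b ∧ M b x ≠ 2 ∧ M b y ≠ 2 ∧ x ≠ y := by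
    intro b hb
    obtain ⟨x, hx, y, hy, hxb, hyb, hbx, hby, hxy⟩ := hcon b hb
    exact ⟨x, hx, y, hy, hxb, hyb, hbx, hby, hxy⟩
  classical
  -- the type of directed edges
  let T := {p : B × B // p.1 ∈ l ∧ p.2 ∈ l ∧ p.1 ≠ p.2 ∧ M p.1 p.2 ≠ 2}
  have hstep : ∀ t : T, ∃ z, z ∈ l ∧ z ≠ t.1.2 ∧ M t.1.2 z ≠ 2 ∧ z ≠ t.1.1 := by
    intro t
    obtain ⟨x, hx, y, hy, hxb, hyb, hbx, hby, hxy⟩ := H t.1.2 t.2.2.1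
    rcases eq_or_ne x t.1.1 with rfl | hxne
    · exact ⟨y, hy, hyb, hby, fun h => hxy h.symm⟩
    · exact ⟨x, hx, hxb, hbx, hxne⟩
  let step : T → T := fun t =>
    ⟨(t.1.2, Classical.choose (hstep t)), t.2.2.1, (Classical.choose_spec (hstep t)).1,
      fun h => (Classical.choose_spec (hstep t)).2.1 h.symm,
      (Classical.choose_spec (hstep t)).2.2.1⟩
  have hstep_ne : ∀ t : T, (step t).1.2 ≠ t.1.1 := fun t =>
    (Classical.choose_spec (hstep t)).2.2.2
  have hstep_fst : ∀ t : T, (step t).1.1 = t.1.2 := fun t => rfl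
  obtain ⟨b₀, hb₀⟩ := List.exists_mem_of_ne_nil l hne
  obtain ⟨x₀, hx₀, _, _, hxb₀, _, hbx₀, _, _⟩ := H b₀ hb₀
  let t₀ : T := ⟨(b₀, x₀), hb₀, hx₀, fun h => hxb₀ h.symm, hbx₀⟩
  let seqT : ℕ → T := fun n => step^[n] t₀
  let seq : ℕ → B := fun n => (seqT n).1.1
  have hs1 : ∀ n, seq (n+1) = (seqT n).1.2 := by
    intro n
    show (step^[n+1] t₀).1.1 = _
    rw [Function.iterate_succ_apply']
  have hedge : ∀ n, M (seq n) (seq (n+1)) ≠ 2 := by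
    intro n
    rw [hs1 n]
    exact (seqT n).2.2.2.2
  have hne1 : ∀ n, seq n ≠ seq (n+1) := by
    intro n
    rw [hs1 n]
    exact (seqT n).2.2.2.1
  have hne2 : ∀ n, seq (n+2) ≠ seq n := by
    intro n
    rw [hs1 (n+1)]
    show (step^[n+1] t₀).1.2 ≠ _
    rw [Function.iterate_succ_apply']
    exact hstep_ne (seqT n)
  -- find a repetition
  obtain ⟨a, b, hab, heq⟩ := Finite.exists_ne_map_eq_of_infinite seq
  have hP : ∃ j, ∃ i, i < j ∧ seq i = seq j := by
    rcases Nat.lt_or_ge a b with h | h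
    · exact ⟨b, a, h, heq⟩
    · exact ⟨a, b, lt_of_le_of_ne h (Ne.symm hab), heq.symm⟩
  let N := Nat.find hP
  obtain ⟨i, hiN, hieq⟩ : ∃ i, i < N ∧ seq i = seq N := Nat.find_spec hP
  have hmin : ∀ m, m < N → ¬ ∃ i, i < m ∧ seq i = seq m := fun m hm => Nat.find_min hP hm
  set k := N - i with hkdef
  have hk3 : 3 ≤ k := by
    have h1 : N ≠ i + 1 := by
      intro h
      exact hne1 i (by rw [← h]; exact hieq)
    have h2 : N ≠ i + 2 := by
      intro h
      exact hne2 i (by rw [h] at hieq; exact hieq.symm)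
    omega
  let c : ℕ → B := fun t => seq (i + t)
  have hinj : ∀ a, a < k → ∀ b, b < k → c a = c b → a = b := by
    intro a ha b hb hc
    by_contra hne
    rcases Nat.lt_or_ge a b with h | h
    · exact hmin (i + b) (by omega) ⟨i + a, by omega, hc⟩
    · have h' : b < a := by omega
      exact hmin (i + a) (by omega) ⟨i + b, by omega, hc.symm⟩
  have hedge' : ∀ t, t + 1 < k → M (c t) (c (t+1)) ≠ 2 := by
    intro t _
    have : i + (t + 1) = (i + t) + 1 := by omega
    show M (seq (i + t)) (seq (i + (t+1))) ≠ 2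
    rw [this]
    exact hedge (i + t)
  have hwrap : M (c (k-1)) (c 0) ≠ 2 := by
    have h1 : i + (k - 1) = N - 1 := by omega
    have h2 : (N - 1) + 1 = N := by omega
    show M (seq (i + (k-1))) (seq (i + 0)) ≠ 2
    rw [h1, Nat.add_zero, hieq]
    have h3 := hedge (N - 1)
    rwa [h2] at h3
  exact no_cycle cs k hk3 c hinj hedge' hwrap

end CoxProof

namespace CoxProof

set_option linter.unusedSectionVars false

/-- elementary moves on lists of simple reflection indices -/
inductive Move {B : Type*} (M : CoxeterMatrix B) : List B → List B → Prop
  | swap (u v : List B) (a b : B) (h : M a b = 2) : Move M (u ++ a :: b :: v) (u ++ b :: a :: v)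
  | rot (a : B) (t : List B) : Move M (a :: t) (t ++ [a])

/-- equivalence generated by the moves -/
def Star {B : Type*} (M : CoxeterMatrix B) : List B → List B → Prop := Relation.EqvGen (Move M)

variable {B : Type*} {M : CoxeterMatrix B}

lemma move_perm {l l' : List B} (h : Move M l l') : l.Perm l' := by
  cases h with
  | swap u v a b _ => exact List.Perm.append_left u (List.Perm.swap b a v)
  | rot a t => exact (List.perm_append_singleton a t).symm

lemma star_perm {l l' : List B} (h : Star M l l') : l.Perm l' := by
  induction h with
  | rel _ _ hm => exact move_perm hm
  | refl _ => exact List.Perm.refl _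
  | symm _ _ _ ih => exact ih.symm
  | trans _ _ _ _ _ ih1 ih2 => exact ih1.trans ih2

variable {W : Type*} [Group W] (cs : CoxeterSystem M W)

lemma simple_comm {a b : B} (h : M a b = 2) :
    cs.simple a * cs.simple b = cs.simple b * cs.simple a := by
  have h2 := cs.simple_mul_simple_pow a b
  rw [h, sq] at h2
  have h3 : cs.simple a * cs.simple b = (cs.simple a * cs.simple b)⁻¹ :=
    eq_inv_of_mul_eq_one_left h2
  rw [h3, mul_inv_rev, cs.inv_simple, cs.inv_simple]

lemma move_isConj {l l' : List B} (h : Move M l l') :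
    IsConj ((l.map cs.simple).prod) ((l'.map cs.simple).prod) := by
  cases h with
  | swap u v a b hab =>
    have heq : ((u ++ a :: b :: v).map cs.simple).prod = ((u ++ b :: a :: v).map cs.simple).prod := by
      simp only [List.map_append, List.prod_append, List.map_cons, List.prod_cons]
      rw [← mul_assoc (cs.simple a), simple_comm cs hab, mul_assoc]
    rw [heq]
  | rot a t =>
    rw [isConj_iff]
    refine ⟨(cs.simple a)⁻¹, ?_⟩
    simp only [List.map_cons, List.prod_cons, List.map_append, List.prod_append,
      List.map_singleton, List.prod_singleton, List.map_nil, List.prod_nil, mul_one]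
    group

lemma star_isConj {l l' : List B} (h : Star M l l') :
    IsConj ((l.map cs.simple).prod) ((l'.map cs.simple).prod) := by
  induction h with
  | rel _ _ hm => exact move_isConj cs hm
  | refl _ => exact IsConj.refl _
  | symm _ _ _ ih => exact ih.symm
  | trans _ _ _ _ _ ih1 ih2 => exact ih1.trans ih2

lemma star_slide (b : B) : ∀ (t : List B), (∀ x ∈ t, M b x = 2) →
    ∀ (u r : List B), Star M (u ++ b :: (t ++ r)) (u ++ (t ++ (b :: r))) := by
  intro t
  induction t with
  | nil =>
    intro _ u r
    simp only [List.nil_append]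
    exact Relation.EqvGen.refl _
  | cons x t ih =>
    intro hcomm u r
    have hx : M b x = 2 := hcomm x List.mem_cons_self
    have m1 : Move M (u ++ b :: x :: (t ++ r)) (u ++ x :: b :: (t ++ r)) :=
      Move.swap u (t ++ r) b x hx
    have s2 := ih (fun z hz => hcomm z (List.mem_cons_of_mem x hz)) (u ++ [x]) r
    have e1 : (u ++ [x]) ++ b :: (t ++ r) = u ++ x :: b :: (t ++ r) := by simp
    have e2 : (u ++ [x]) ++ (t ++ (b :: r)) = u ++ ((x :: t) ++ (b :: r)) := by simp
    rw [e1, e2] at s2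
    exact Relation.EqvGen.trans _ _ _ (Relation.EqvGen.rel _ _ m1) s2

lemma star_lift (b : B) {v v' : List B} (h : Star M v v') :
    v.Perm v' ∧ ((v.Nodup ∧ b ∉ v ∧
      (∀ x ∈ v, ∀ y ∈ v, M b x ≠ 2 → M b y ≠ 2 → x = y)) →
      Star M (v ++ [b]) (v' ++ [b])) := by
  induction h with
  | rel p p' hm =>
    refine ⟨move_perm hm, fun ⟨hnd, hbv, hleaf⟩ => ?_⟩
    cases hm with
    | swap u w x y hxy =>
      have e1 : (u ++ x :: y :: w) ++ [b] = u ++ x :: y :: (w ++ [b]) := by simp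
      have e2 : (u ++ y :: x :: w) ++ [b] = u ++ y :: x :: (w ++ [b]) := by simp
      rw [e1, e2]
      exact Relation.EqvGen.rel _ _ (Move.swap u (w ++ [b]) x y hxy)
    | rot a t =>
      -- goal : Star ((a :: t) ++ [b]) ((t ++ [a]) ++ [b])
      have m1 : Move M (a :: (t ++ [b])) ((t ++ [b]) ++ [a]) := Move.rot a (t ++ [b])
      have e1 : (a :: t) ++ [b] = a :: (t ++ [b]) := by simp
      have e2 : (t ++ [b]) ++ [a] = t ++ [b, a] := by simp
      by_cases hab : M b a = 2
      · have m2 : Move M (t ++ b :: a :: []) (t ++ a :: b :: []) := Move.swap t [] b a hab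
        have e3 : t ++ b :: a :: [] = t ++ [b, a] := by simp
        have e4 : t ++ a :: b :: [] = (t ++ [a]) ++ [b] := by simp
        rw [e3, e4] at m2
        rw [e1]
        exact Relation.EqvGen.trans _ _ _ (Relation.EqvGen.rel _ _ (by rw [← e2]; exact m1))
          (Relation.EqvGen.rel _ _ m2)
      · have hat : a ∉ t := (List.nodup_cons.mp hnd).1
        have hcomm : ∀ x ∈ t, M b x = 2 := by
          intro x hx
          by_contra hbx
          have := hleaf x (List.mem_cons_of_mem a hx) a List.mem_cons_self hbx hab
          exact hat (this ▸ hx)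
        have s3 := star_slide b t hcomm [] [a]
        simp only [List.nil_append] at s3
        -- s3 : Star (b :: (t ++ [a])) (t ++ (b :: [a]))
        have m4 : Move M (b :: (t ++ [a])) ((t ++ [a]) ++ [b]) := Move.rot b (t ++ [a])
        rw [e1]
        refine Relation.EqvGen.trans _ (t ++ [b, a]) _ (Relation.EqvGen.rel _ _ (e2 ▸ m1)) ?_
        exact Relation.EqvGen.trans _ _ _ (Relation.EqvGen.symm _ _ s3)
          (Relation.EqvGen.rel _ _ m4)
  | refl p => exact ⟨List.Perm.refl _, fun _ => Relation.EqvGen.refl _⟩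
  | symm p p' _ ih =>
    refine ⟨ih.1.symm, fun ⟨hnd, hbv, hleaf⟩ => ?_⟩
    have hperm := ih.1
    refine Relation.EqvGen.symm _ _ (ih.2 ⟨hperm.nodup_iff.mpr hnd, fun hb => hbv (hperm.mem_iff.mp hb), ?_⟩)
    intro x hx y hy hbx hby
    exact hleaf x (hperm.mem_iff.mp hx) y (hperm.mem_iff.mp hy) hbx hby
  | trans p q p' _ _ ih1 ih2 =>
    refine ⟨ih1.1.trans ih2.1, fun ⟨hnd, hbv, hleaf⟩ => ?_⟩
    have hperm := ih1.1
    refine Relation.EqvGen.trans _ _ _ (ih1.2 ⟨hnd, hbv, hleaf⟩) (ih2.2 ⟨hperm.nodup_iff.mp hnd,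
      fun hb => hbv (hperm.mem_iff.mpr hb), ?_⟩)
    intro x hx y hy hbx hby
    exact hleaf x (hperm.mem_iff.mpr hx) y (hperm.mem_iff.mpr hy) hbx hby

end CoxProof

namespace CoxProof

variable {B : Type*} {M : CoxeterMatrix B}

lemma star_of_perm
    (HL : ∀ l : List B, l ≠ [] →
      ∃ b ∈ l, ∀ x ∈ l, ∀ y ∈ l, x ≠ b → y ≠ b → M b x ≠ 2 → M b y ≠ 2 → x = y) :
    ∀ (n : ℕ) (l l' : List B), l.length = n → l.Nodup → l.Perm l' → Star M l l' := by
  intro n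
  induction n with
  | zero =>
    intro l l' hlen _ hperm
    rw [List.length_eq_zero_iff] at hlen
    subst hlen
    have : l' = [] := hperm.symm.eq_nil
    subst this
    exact Relation.EqvGen.refl _
  | succ n ih =>
    intro l l' hlen hnd hperm
    have hlne : l ≠ [] := by intro h; rw [h] at hlen; simp at hlen
    obtain ⟨b, hb, hleaf⟩ := HL l hlne
    obtain ⟨u, t, rfl⟩ := List.append_of_mem hb
    have hb' : b ∈ l' := hperm.mem_iff.mp hb
    obtain ⟨u', t', rfl⟩ := List.append_of_mem hb'
    -- step A : move b to the end
    have stepA : ∀ (p q : List B), (p ++ b :: q).Nodup →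
        (∀ x ∈ p ++ b :: q, ∀ y ∈ p ++ b :: q, x ≠ b → y ≠ b → M b x ≠ 2 → M b y ≠ 2 → x = y) →
        Star M (p ++ b :: q) ((p ++ q) ++ [b]) := by
      intro p q hndpq hleafpq
      have hnd3 := List.nodup_append'.mp hndpq
      have hbp : b ∉ p := fun hbp => hnd3.2.2 hbp List.mem_cons_self
      have hbq : b ∉ q := (List.nodup_cons.mp hnd3.2.1).1
      by_cases hcase : ∀ x ∈ q, M b x = 2
      · have s1 := star_slide b q hcase p []
        rw [List.append_nil] at s1
        have e1 : p ++ (q ++ (b :: [])) = (p ++ q) ++ [b] := by simp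
        rw [e1] at s1
        exact s1
      · push_neg at hcase
        obtain ⟨x₀, hx₀, hbx₀⟩ := hcase
        have hp : ∀ x ∈ p, M b x = 2 := by
          intro x hx
          by_contra hbx
          have hxb : x ≠ b := fun h => hbp (h ▸ hx)
          have hx₀b : x₀ ≠ b := fun h => hbq (h ▸ hx₀)
          have := hleafpq x (List.mem_append_left _ hx) x₀
            (List.mem_append_right _ (List.mem_cons_of_mem b hx₀)) hxb hx₀b hbx hbx₀
          exact hnd3.2.2 hx (List.mem_cons_of_mem b (this ▸ hx₀))
        have s2 := star_slide b p hp [] q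
        simp only [List.nil_append] at s2
        -- s2 : Star (b :: (p ++ q)) (p ++ (b :: q))
        have m1 : Move M (b :: (p ++ q)) ((p ++ q) ++ [b]) := Move.rot b (p ++ q)
        exact Relation.EqvGen.trans _ _ _ (Relation.EqvGen.symm _ _ s2)
          (Relation.EqvGen.rel _ _ m1)
    have hndl' : (u' ++ b :: t').Nodup := hperm.nodup_iff.mp hnd
    have hleaf' : ∀ x ∈ u' ++ b :: t', ∀ y ∈ u' ++ b :: t',
        x ≠ b → y ≠ b → M b x ≠ 2 → M b y ≠ 2 → x = y := by
      intro x hx y hy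
      exact hleaf x (hperm.mem_iff.mpr hx) y (hperm.mem_iff.mpr hy)
    have sA := stepA u t hnd hleaf
    have sB := stepA u' t' hndl' hleaf'
    -- middle step
    have hpm : (u ++ b :: t).Perm (b :: (u ++ t)) := List.perm_middle
    have hpm' : (u' ++ b :: t').Perm (b :: (u' ++ t')) := List.perm_middle
    have hmid : (u ++ t).Perm (u' ++ t') :=
      ((hpm.symm.trans hperm).trans hpm').cons_inv
    have hndm : (b :: (u ++ t)).Nodup := hpm.nodup_iff.mp hnd
    have hndut : (u ++ t).Nodup := (List.nodup_cons.mp hndm).2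
    have hbut : b ∉ u ++ t := (List.nodup_cons.mp hndm).1
    have hlenut : (u ++ t).length = n := by
      have := hpm.length_eq
      simp only [List.length_cons] at this
      omega
    have sMid := ih (u ++ t) (u' ++ t') hlenut hndut hmid
    have sLift := (star_lift b sMid).2 ⟨hndut, hbut, ?_⟩
    · exact Relation.EqvGen.trans _ _ _ sA
        (Relation.EqvGen.trans _ _ _ sLift (Relation.EqvGen.symm _ _ sB))
    · intro x hx y hy hbx hby
      have hxb : x ≠ b := fun h => hbut (h ▸ hx)
      have hyb : y ≠ b := fun h => hbut (h ▸ hy)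
      have hmem : ∀ z, z ∈ u ++ t → z ∈ u ++ b :: t := by
        intro z hz
        rcases List.mem_append.mp hz with h | h
        · exact List.mem_append_left _ h
        · exact List.mem_append_right _ (List.mem_cons_of_mem b h)
      exact hleaf x (hmem x hx) y (hmem y hy) hxb hyb hbx hby

end CoxProof

/-- In a finite Coxeter group, the product of all the simple reflections, each occurring
exactly once, in any order, is conjugate to the product in any other order. -/
theorem coxeterElement_isConj_of_perm
    {B W : Type*} [Group W] [Finite W] {M : CoxeterMatrix B}
    (cs : CoxeterSystem M W) (l₁ l₂ : List B) (hnd : l₁.Nodup) (hall : ∀ b : B, b ∈ l₁)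
    (hperm : l₁.Perm l₂) :
    IsConj (l₁.map cs.simple).prod (l₂.map cs.simple).prod := by
  have hBfin : Finite B := by
    refine Finite.of_surjective (fun i : Fin l₁.length => l₁.get i) ?_
    intro b
    obtain ⟨i, hi⟩ := List.get_of_mem (hall b)
    exact ⟨i, hi⟩
  haveI := hBfin
  haveI := Fintype.ofFinite B
  haveI : DecidableEq B := Classical.decEq B
  exact CoxProof.star_isConj cs
    (CoxProof.star_of_perm (fun l hl => CoxProof.leaf_exists cs l hl) l₁.length l₁ l₂ rfl hnd hperm)
end

section
/- Let W be a finite Coxeter group and w ∈ W. Then e(w) and E(w) are both nonnegative even integers; equivalently, for every factorization w = xy with x² = y² = 1, the integer ℓ(x) + ℓ(y) − ℓ(w) is nonnegative and even. -/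
/-- The reflection length of `w`: the least `n` such that `w` is a product of `n`
reflections of the Coxeter system `cs`. -/
noncomputable def CoxeterSystem.reflLength {B W : Type*} [Group W] {M : CoxeterMatrix B}
    (cs : CoxeterSystem M W) (w : W) : ℕ :=
  sInf {n : ℕ | ∃ l : List W, (∀ t ∈ l, cs.IsReflection t) ∧ l.length = n ∧ l.prod = w}

/-- The excess `e(w) = min {ℓ(x) + ℓ(y) - ℓ(w) : w = x y, x² = y² = 1}`. -/
noncomputable def CoxeterSystem.excess {B W : Type*} [Group W] {M : CoxeterMatrix B}
    (cs : CoxeterSystem M W) (w : W) : ℕ :=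
  sInf {n : ℕ | ∃ x y : W, x * x = 1 ∧ y * y = 1 ∧ w = x * y ∧
    cs.length x + cs.length y = cs.length w + n}

/-- The reflection excess
`E(w) = min {ℓ(x) + ℓ(y) - ℓ(w) : w = x y, x² = y² = 1, L(w) = L(x) + L(y)}`. -/
noncomputable def CoxeterSystem.reflExcess {B W : Type*} [Group W] {M : CoxeterMatrix B}
    (cs : CoxeterSystem M W) (w : W) : ℕ :=
  sInf {n : ℕ | ∃ x y : W, x * x = 1 ∧ y * y = 1 ∧ w = x * y ∧
    cs.reflLength w = cs.reflLength x + cs.reflLength y ∧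
    cs.length x + cs.length y = cs.length w + n}

/-- An element of `W` is *cuspidal* if its conjugacy class has empty intersection with
every proper standard parabolic subgroup `W_J`, `J ⊊ S`. -/
def CoxeterSystem.IsCuspidal {B W : Type*} [Group W] {M : CoxeterMatrix B}
    (cs : CoxeterSystem M W) (w : W) : Prop :=
  ∀ J : Set B, J ≠ Set.univ →
    ∀ v : W, IsConj w v → v ∉ Subgroup.closure (cs.simple '' J)

private lemma even_aux {B W : Type*} [Group W] {M : CoxeterMatrix B}
    (cs : CoxeterSystem M W) {w x y : W} {n : ℕ}
    (h : w = x * y) (hn : cs.length x + cs.length y = cs.length w + n) : Even n := by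
  have := cs.length_mul_mod_two x y
  rw [← h, hn] at this
  have : n % 2 = 0 := by omega
  exact Nat.even_iff.mpr this

/-- For `w` in a finite Coxeter group, both the excess `e(w)` and the reflection excess
`E(w)` are (nonnegative) even; equivalently, for every factorization `w = x y` with
`x² = y² = 1`, the quantity `ℓ(x) + ℓ(y) - ℓ(w)` is nonnegative and even. -/
theorem excess_even_and_reflExcess_even
    {B W : Type*} [Group W] [Finite W] {M : CoxeterMatrix B}
    (cs : CoxeterSystem M W) (w : W) :
    Even (cs.excess w) ∧ Even (cs.reflExcess w) ∧
      ∀ x y : W, x * x = 1 → y * y = 1 → w = x * y →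
        cs.length w ≤ cs.length x + cs.length y ∧
          Even (cs.length x + cs.length y - cs.length w) := by
  refine ⟨?_, ?_, ?_⟩
  · rcases Set.eq_empty_or_nonempty {n : ℕ | ∃ x y : W, x * x = 1 ∧ y * y = 1 ∧ w = x * y ∧
      cs.length x + cs.length y = cs.length w + n} with he | hne
    · rw [CoxeterSystem.excess, he, Nat.sInf_empty]; exact Even.zero
    · obtain ⟨x, y, _, _, hxy, hn⟩ := Nat.sInf_mem hne
      exact even_aux cs hxy hn
  · rcases Set.eq_empty_or_nonempty {n : ℕ | ∃ x y : W, x * x = 1 ∧ y * y = 1 ∧ w = x * y ∧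
      cs.reflLength w = cs.reflLength x + cs.reflLength y ∧
      cs.length x + cs.length y = cs.length w + n} with he | hne
    · rw [CoxeterSystem.reflExcess, he, Nat.sInf_empty]; exact Even.zero
    · obtain ⟨x, y, _, _, hxy, _, hn⟩ := Nat.sInf_mem hne
      exact even_aux cs hxy hn
  · intro x y _ _ hxy
    have hle : cs.length w ≤ cs.length x + cs.length y := hxy ▸ cs.length_mul_le x y
    refine ⟨hle, even_aux cs hxy ?_⟩
    omega
end

section
/- Let (W, S) be a finite Coxeter system with simple reflections s₁, …, sₙ, and let X be the conjugacy class of the Coxeter element s₁s₂⋯sₙ. Then there exists w ∈ X of minimal length in X such that e(w) = 0 and E(w) = 0. -/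
set_option linter.unusedSectionVars false
set_option maxHeartbeats 1000000

namespace CPX

open CoxeterSystem Real

variable {B : Type*} [DecidableEq B] [Fintype B]
variable {W : Type*} [Group W] {M : CoxeterMatrix B} (cs : CoxeterSystem M W)

/-- cosine matrix -/
noncomputable def Km (M : CoxeterMatrix B) (i j : B) : ℝ := - Real.cos (Real.pi / (M i j : ℝ))

lemma Km_symm (M : CoxeterMatrix B) (i j : B) : Km M i j = Km M j i := by
  unfold Km; rw [M.symmetric i j]

lemma Km_diag (M : CoxeterMatrix B) (i : B) : Km M i i = 1 := by
  unfold Km; rw [M.diagonal i]; norm_num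

lemma Km_commuting (M : CoxeterMatrix B) {i j : B} (h : M i j = 2) : Km M i j = 0 := by
  unfold Km; rw [h]; norm_num [Real.cos_pi_div_two]

/-- the standard basis vector -/
noncomputable def Ev (i : B) : B → ℝ := Pi.single i 1

/-- the bilinear form -/
noncomputable def kf (M : CoxeterMatrix B) (u v : B → ℝ) : ℝ :=
  ∑ i, ∑ j, u i * v j * Km M i j

lemma kf_symm (M : CoxeterMatrix B) (u v : B → ℝ) : kf M u v = kf M v u := by
  unfold kf; rw [Finset.sum_comm]
  refine Finset.sum_congr rfl fun i _ => Finset.sum_congr rfl fun j _ => ?_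
  rw [Km_symm]; ring

lemma kf_add_left (M : CoxeterMatrix B) (u u' v : B → ℝ) :
    kf M (u + u') v = kf M u v + kf M u' v := by
  unfold kf; rw [← Finset.sum_add_distrib]
  refine Finset.sum_congr rfl fun i _ => ?_
  rw [← Finset.sum_add_distrib]
  refine Finset.sum_congr rfl fun j _ => ?_
  simp [Pi.add_apply]; ring

lemma kf_smul_left (M : CoxeterMatrix B) (a : ℝ) (u v : B → ℝ) :
    kf M (a • u) v = a * kf M u v := by
  unfold kf; rw [Finset.mul_sum]
  refine Finset.sum_congr rfl fun i _ => ?_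
  rw [Finset.mul_sum]
  refine Finset.sum_congr rfl fun j _ => ?_
  simp [Pi.smul_apply, smul_eq_mul]; ring

lemma kf_add_right (M : CoxeterMatrix B) (u v v' : B → ℝ) :
    kf M u (v + v') = kf M u v + kf M u v' := by
  rw [kf_symm, kf_add_left, kf_symm M v u, kf_symm M v' u]

lemma kf_smul_right (M : CoxeterMatrix B) (a : ℝ) (u v : B → ℝ) :
    kf M u (a • v) = a * kf M u v := by
  rw [kf_symm, kf_smul_left, kf_symm M v u]

lemma kf_sub_left (M : CoxeterMatrix B) (u u' v : B → ℝ) :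
    kf M (u - u') v = kf M u v - kf M u' v := by
  have := kf_add_left M (u - u') u' v; simp at this; linarith

lemma kf_sub_right (M : CoxeterMatrix B) (u v v' : B → ℝ) :
    kf M u (v - v') = kf M u v - kf M u v' := by
  rw [kf_symm, kf_sub_left, kf_symm M v u, kf_symm M v' u]

lemma kf_Ev_right (M : CoxeterMatrix B) (u : B → ℝ) (j : B) :
    kf M u (Ev j) = ∑ i, u i * Km M i j := by
  unfold kf Ev
  refine Finset.sum_congr rfl fun i _ => ?_
  rw [Finset.sum_eq_single j]
  · simp
  · intro b _ hb; simp [Pi.single_apply, hb]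
  · intro h; exact absurd (Finset.mem_univ j) h

lemma kf_Ev_Ev (M : CoxeterMatrix B) (i j : B) : kf M (Ev i) (Ev j) = Km M i j := by
  rw [kf_Ev_right]
  rw [Finset.sum_eq_single i]
  · simp [Ev]
  · intro b _ hb; simp [Ev, Pi.single_apply, hb]
  · intro h; exact absurd (Finset.mem_univ i) h

/-- linear functional v ↦ kf v (Ev i) -/
noncomputable def kfun (M : CoxeterMatrix B) (i : B) : (B → ℝ) →ₗ[ℝ] ℝ where
  toFun v := kf M v (Ev i)
  map_add' u v := kf_add_left M u v (Ev i)
  map_smul' a v := by simp [kf_smul_left]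

/-- the reflection σᵢ -/
noncomputable def sig (M : CoxeterMatrix B) (i : B) : Module.End ℝ (B → ℝ) :=
  LinearMap.id - (2:ℝ) • ((kfun M i).smulRight (Ev i))

lemma sig_apply (M : CoxeterMatrix B) (i : B) (v : B → ℝ) :
    sig M i v = v - (2 * kf M v (Ev i)) • Ev i := by
  simp only [sig, LinearMap.sub_apply, LinearMap.id_apply, LinearMap.smul_apply,
    LinearMap.smulRight_apply, kfun, LinearMap.coe_mk, AddHom.coe_mk, smul_smul]

lemma sig_apply_Ev_self (M : CoxeterMatrix B) (i : B) : sig M i (Ev i) = - Ev i := by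
  rw [sig_apply, kf_Ev_Ev, Km_diag]; module

lemma kf_sig_left (M : CoxeterMatrix B) (i : B) (u v : B → ℝ) :
    kf M (sig M i u) v = kf M u v - 2 * kf M u (Ev i) * kf M (Ev i) v := by
  rw [sig_apply, kf_sub_left, kf_smul_left]

lemma kf_sig_sig (M : CoxeterMatrix B) (i : B) (u v : B → ℝ) :
    kf M (sig M i u) (sig M i v) = kf M u v := by
  rw [kf_sig_left]
  rw [sig_apply, kf_sub_right, kf_smul_right, kf_sub_right, kf_smul_right]
  rw [kf_Ev_Ev, Km_diag, kf_symm M (Ev i) v]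
  ring

lemma sig_sq (M : CoxeterMatrix B) (i : B) : sig M i * sig M i = 1 := by
  refine LinearMap.ext fun v => ?_
  show sig M i (sig M i v) = v
  rw [sig_apply M i v, sig_apply]
  rw [kf_sub_left, kf_smul_left, kf_Ev_Ev, Km_diag]
  module

lemma sig_fix (M : CoxeterMatrix B) {i : B} {v : B → ℝ} (h : kf M v (Ev i) = 0) :
    sig M i v = v := by
  rw [sig_apply, h]; module

section Braid

variable (M : CoxeterMatrix B) (i j : B)

/-- plane vector with coordinates x, y -/
noncomputable def Lc (x y : ℝ) : B → ℝ := x • Ev i + y • Ev j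

lemma Lc_congr {x y x' y' : ℝ} (hx : x = x') (hy : y = y') : Lc i j x y = Lc i j x' y' := by
  rw [hx, hy]

lemma smul_Lc (a x y : ℝ) : a • Lc i j x y = Lc i j (a*x) (a*y) := by
  unfold Lc; rw [smul_add, smul_smul, smul_smul]

lemma Lc_sub (x y x' y' : ℝ) : Lc i j x y - Lc i j x' y' = Lc i j (x - x') (y - y') := by
  unfold Lc; rw [sub_smul, sub_smul]; abel

variable {i j}
variable (hij : i ≠ j)

lemma kf_Lc_Ev_i (x y : ℝ) : kf M (Lc i j x y) (Ev i) = x + y * Km M j i := by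
  unfold Lc
  rw [kf_add_left, kf_smul_left, kf_smul_left, kf_Ev_Ev, kf_Ev_Ev, Km_diag]; ring

lemma kf_Lc_Ev_j (x y : ℝ) : kf M (Lc i j x y) (Ev j) = x * Km M i j + y := by
  unfold Lc
  rw [kf_add_left, kf_smul_left, kf_smul_left, kf_Ev_Ev, kf_Ev_Ev, Km_diag]; ring

/-- the key 2-dim computation, with c := cos (π / m). -/
lemma g_Lc (x y : ℝ) :
    (sig M i * sig M j) (Lc i j x y) =
      Lc i j ((4 * (-Km M i j)^2 - 1) * x - 2 * (-Km M i j) * y) (2 * (-Km M i j) * x - y) := by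
  set c : ℝ := -Km M i j with hc
  have hKji : Km M j i = Km M i j := Km_symm M j i
  show sig M i (sig M j (Lc i j x y)) = _
  rw [sig_apply M j, kf_Lc_Ev_j]
  have h1 : Lc i j x y - (2 * (x * Km M i j + y)) • Ev j
      = Lc i j x (y - 2 * (x * Km M i j + y)) := by
    unfold Lc; rw [sub_smul]; module
  rw [h1, sig_apply, kf_Lc_Ev_i]
  have h2 : Lc i j x (y - 2 * (x * Km M i j + y))
        - (2 * (x + (y - 2 * (x * Km M i j + y)) * Km M j i)) • Ev i
      = Lc i j (x - 2 * (x + (y - 2 * (x * Km M i j + y)) * Km M j i))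
          (y - 2 * (x * Km M i j + y)) := by
    unfold Lc; rw [sub_smul]; module
  rw [h2]
  have hK : Km M i j = -c := by rw [hc]; ring
  refine Lc_congr i j ?_ ?_ <;> simp only [hKji, hK] <;> ring

lemma g_fix_perp {v : B → ℝ} (h1 : kf M v (Ev i) = 0) (h2 : kf M v (Ev j) = 0) (k : ℕ) :
    ((sig M i * sig M j)^k) v = v := by
  induction k with
  | zero => rfl
  | succ n ih =>
    rw [pow_succ, Module.End.mul_apply]
    have : (sig M i * sig M j) v = v := by
      show sig M i (sig M j v) = v
      rw [sig_fix M h2, sig_fix M h1]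
    rw [this, ih]

lemma plane_decomp (m : ℕ) (hm : 2 ≤ m) (hmij : M i j = m) (v : B → ℝ) :
    ∃ x y p, kf M p (Ev i) = 0 ∧ kf M p (Ev j) = 0 ∧ v = Lc i j x y + p := by
  set θ : ℝ := Real.pi / m with hθ
  set c : ℝ := Real.cos θ with hc
  have hKij : Km M i j = -c := by unfold Km; rw [hmij]
  have hθpos : 0 < θ := by
    apply div_pos Real.pi_pos
    exact_mod_cast (by omega : 0 < m)
  have hθlt : θ < Real.pi := by
    rw [hθ]
    apply div_lt_self Real.pi_pos
    exact_mod_cast (by omega : 1 < m)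
  have hsin : Real.sin θ ≠ 0 := ne_of_gt (Real.sin_pos_of_pos_of_lt_pi hθpos hθlt)
  have hden : 1 - c^2 ≠ 0 := by
    have := Real.sin_sq_add_cos_sq θ
    have : 1 - c^2 = Real.sin θ ^ 2 := by rw [hc]; nlinarith [this]
    rw [this]
    exact pow_ne_zero 2 hsin
  set X := kf M v (Ev i) with hX
  set Y := kf M v (Ev j) with hY
  refine ⟨(X + c*Y)/(1-c^2), (Y + c*X)/(1-c^2), v - Lc i j ((X + c*Y)/(1-c^2)) ((Y + c*X)/(1-c^2)), ?_, ?_, by abel⟩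
  · rw [kf_sub_left, kf_Lc_Ev_i, Km_symm M j i, hKij, ← hX]
    field_simp
    ring
  · rw [kf_sub_left, kf_Lc_Ev_j, hKij, ← hY]
    field_simp
    ring

end Braid

section Braid2
variable {B : Type*} [DecidableEq B] [Fintype B]

lemma g_pow_plane (M : CoxeterMatrix B) {i j : B} (m : ℕ) (hm : 3 ≤ m) (hmij : M i j = m)
    (x y : ℝ) : ((sig M i * sig M j)^m) (Lc i j x y) = Lc i j x y := by
  set g := sig M i * sig M j with hg
  set θ : ℝ := Real.pi / m with hθ
  set c : ℝ := Real.cos θ with hc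
  have hK : Km M i j = -c := by unfold Km; rw [hmij]
  have hmR : (m:ℝ) ≠ 0 := by exact_mod_cast (by omega : m ≠ 0)
  have hmθ : (m:ℝ) * θ = Real.pi := by rw [hθ]; field_simp
  have h2θpos : 0 < 2*θ := by
    have : 0 < θ := div_pos Real.pi_pos (by exact_mod_cast (by omega : 0 < m))
    linarith
  have hmR3 : (3:ℝ) ≤ (m:ℝ) := by exact_mod_cast hm
  have hmpos : (0:ℝ) < (m:ℝ) := by linarith
  have h2θlt : 2*θ < Real.pi := by
    rw [hθ, show 2*(Real.pi/(m:ℝ)) = 2*Real.pi/(m:ℝ) from by ring, div_lt_iff₀ hmpos]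
    nlinarith [Real.pi_pos]
  have hsin2 : Real.sin (2*θ) ≠ 0 := ne_of_gt (Real.sin_pos_of_pos_of_lt_pi h2θpos h2θlt)
  set τ : ℝ := 4*c^2 - 2 with hτdef
  have hτ : τ = 2 * Real.cos (2*θ) := by rw [Real.cos_two_mul]; ring
  set u : ℕ → ℝ := fun k => Real.sin (2*k*θ) / Real.sin (2*θ) with hu
  have u0 : u 0 = 0 := by simp [hu]
  have u1 : u 1 = 1 := by simp [hu]; exact hsin2
  have urec : ∀ k : ℕ, u (k+2) = τ * u (k+1) - u k := by
    intro k
    have key : Real.sin (2*((k:ℝ)+2)*θ) + Real.sin (2*(k:ℝ)*θ)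
        = 2 * Real.cos (2*θ) * Real.sin (2*((k:ℝ)+1)*θ) := by
      rw [show 2*((k:ℝ)+2)*θ = 2*((k:ℝ)+1)*θ + 2*θ by ring,
          show 2*(k:ℝ)*θ = 2*((k:ℝ)+1)*θ - 2*θ by ring, Real.sin_add, Real.sin_sub]
      ring
    simp only [hu]
    push_cast
    rw [div_eq_iff hsin2, hτ]
    rw [show Real.sin (2*((k:ℝ)+2)*θ) = (2 * Real.cos (2*θ) * Real.sin (2*((k:ℝ)+1)*θ)) - Real.sin (2*(k:ℝ)*θ) from by linarith [key]]
    field_simp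
    try ring
  have gL : ∀ a b : ℝ, g (Lc i j a b) = Lc i j ((4*c^2-1)*a - 2*c*b) (2*c*a - b) := by
    intro a b
    rw [hg, g_Lc M]
    refine Lc_congr i j ?_ ?_ <;> rw [hK] <;> ring
  have CH : ∀ a b : ℝ, g (g (Lc i j a b)) = τ • g (Lc i j a b) - Lc i j a b := by
    intro a b
    rw [gL, gL, smul_Lc, Lc_sub]
    refine Lc_congr i j ?_ ?_ <;> simp only [hτdef] <;> ring
  have main : ∀ k : ℕ, ∀ a b : ℝ, (g^(k+1)) (Lc i j a b)
      = u (k+1) • (g (Lc i j a b)) - u k • Lc i j a b := by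
    intro k
    induction k with
    | zero => intro a b; rw [pow_one, u1, u0, one_smul, zero_smul, sub_zero]
    | succ n ih =>
      intro a b
      have h1 : (g^(n+1+1)) (Lc i j a b) = (g^(n+1)) (g (Lc i j a b)) := by
        rw [pow_succ, Module.End.mul_apply]
      have e1 : (g^(n+1)) (g (Lc i j a b))
          = u (n+1) • (g (g (Lc i j a b))) - u n • (g (Lc i j a b)) := by
        rw [gL a b]; exact ih _ _
      rw [h1, e1, CH a b]
      rw [show n + 1 + 1 = n + 2 from rfl, urec n]
      module
  have hmm : m - 1 + 1 = m := by omega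
  have um : u m = 0 := by
    simp only [hu]
    rw [show 2*(m:ℝ)*θ = 2*Real.pi from by rw [← hmθ]; ring, Real.sin_two_pi, zero_div]
  have um1 : u (m-1) = -1 := by
    simp only [hu]
    have hcast : ((m-1:ℕ):ℝ) = (m:ℝ) - 1 := by
      have : (1:ℕ) ≤ m := by omega
      push_cast [this]; ring
    rw [hcast, show 2*((m:ℝ)-1)*θ = 2*Real.pi - 2*θ from by rw [← hmθ]; ring]
    rw [Real.sin_sub, Real.sin_two_pi, Real.cos_two_pi]
    field_simp
    ring
  calc (g^m) (Lc i j x y) = (g^(m-1+1)) (Lc i j x y) := by rw [hmm]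
    _ = u (m-1+1) • (g (Lc i j x y)) - u (m-1) • Lc i j x y := main (m-1) x y
    _ = Lc i j x y := by rw [hmm, um, um1]; module

lemma g_pow_two (M : CoxeterMatrix B) {i j : B} (hmij : M i j = 2)
    (x y : ℝ) : ((sig M i * sig M j)^2) (Lc i j x y) = Lc i j x y := by
  have hK : Km M i j = 0 := Km_commuting M hmij
  have gL : ∀ a b : ℝ, (sig M i * sig M j) (Lc i j a b) = Lc i j (-a) (-b) := by
    intro a b
    rw [g_Lc M]
    refine Lc_congr i j ?_ ?_ <;> rw [hK] <;> ring
  rw [pow_two, Module.End.mul_apply, gL, gL]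
  refine Lc_congr i j ?_ ?_ <;> ring

theorem sig_liftable (M : CoxeterMatrix B) : M.IsLiftable (fun i => sig M i) := by
  intro i j
  by_cases hij : i = j
  · subst hij
    rw [M.diagonal i, pow_one]
    exact sig_sq M i
  · rcases Nat.lt_or_ge (M i j) 3 with h3 | h3
    · interval_cases h : (M i j)
      · rw [pow_zero]
      · exact absurd h (M.off_diagonal i j hij)
      · -- M i j = 2
        refine LinearMap.ext fun v => ?_
        obtain ⟨x, y, p, hp1, hp2, rfl⟩ := plane_decomp M 2 le_rfl h v
        rw [map_add, g_pow_two M h, g_fix_perp M hp1 hp2]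
        rfl
    · refine LinearMap.ext fun v => ?_
      obtain ⟨x, y, p, hp1, hp2, rfl⟩ := plane_decomp M (M i j) (by omega) rfl v
      rw [map_add, g_pow_plane M (M i j) h3 rfl, g_fix_perp M hp1 hp2]
      rfl

end Braid2

section Rep
variable {B : Type*} [DecidableEq B] [Fintype B]
variable {W : Type*} [Group W] {M : CoxeterMatrix B} (cs : CoxeterSystem M W)

/-- the geometric representation -/
noncomputable def rho : W →* Module.End ℝ (B → ℝ) :=
  cs.lift ⟨fun i => sig M i, sig_liftable M⟩

lemma rho_simple (i : B) : rho cs (cs.simple i) = sig M i :=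
  cs.lift_apply_simple (sig_liftable M) i

lemma kf_rho (w : W) (u v : B → ℝ) : kf M (rho cs w u) (rho cs w v) = kf M u v := by
  have key : ∀ ω : List B, ∀ u v : B → ℝ,
      kf M (rho cs (cs.wordProd ω) u) (rho cs (cs.wordProd ω) v) = kf M u v := by
    intro ω
    induction ω with
    | nil => intro u v; simp [CoxeterSystem.wordProd_nil]
    | cons i ω ih =>
      intro u v
      rw [CoxeterSystem.wordProd_cons, map_mul]
      simp only [Module.End.mul_apply, rho_simple]
      rw [kf_sig_sig]
      exact ih u v
  obtain ⟨ω, _, hw⟩ := cs.exists_reduced_word w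
  rw [hw]; exact key ω u v

lemma expand_basis (v : B → ℝ) : v = ∑ b, v b • Ev b := by
  ext a
  rw [Finset.sum_apply]
  rw [Finset.sum_eq_single a]
  · simp [Ev]
  · intro b _ hb; simp [Ev, Pi.single_apply, hb.symm]
  · intro h; exact absurd (Finset.mem_univ a) h

lemma kf_sum_left {ι : Type*} (s : Finset ι) (f : ι → (B → ℝ)) (w : B → ℝ) :
    kf M (∑ x ∈ s, f x) w = ∑ x ∈ s, kf M (f x) w := by
  induction s using Finset.cons_induction with
  | empty =>
    simp
    have h0 : (0 : B → ℝ) = (0:ℝ) • (0 : B → ℝ) := by simp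
    rw [h0, kf_smul_left]; ring
  | cons x s hx ih => rw [Finset.sum_cons, Finset.sum_cons, kf_add_left, ih]

lemma kf_expand (u w : B → ℝ) :
    kf M u w = ∑ i, ∑ j, u i * w j * kf M (Ev i) (Ev j) := by
  have h : kf M u w = ∑ i, ∑ j, u i * w j * Km M i j := rfl
  rw [h]
  exact Finset.sum_congr rfl fun i _ => Finset.sum_congr rfl fun j _ => by rw [kf_Ev_Ev]

section Avg
variable [Fintype W]

noncomputable def dotp (u v : B → ℝ) : ℝ := ∑ b, u b * v b

noncomputable def bs (u v : B → ℝ) : ℝ := ∑ w : W, dotp (rho cs w u) (rho cs w v)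

lemma dotp_symm (u v : B → ℝ) : dotp u v = dotp v u := by
  unfold dotp; refine Finset.sum_congr rfl fun b _ => by ring

lemma dotp_add_left (u u' v : B → ℝ) : dotp (u + u') v = dotp u v + dotp u' v := by
  unfold dotp; rw [← Finset.sum_add_distrib]
  refine Finset.sum_congr rfl fun b _ => by simp [Pi.add_apply]; ring

lemma dotp_smul_left (a : ℝ) (u v : B → ℝ) : dotp (a • u) v = a * dotp u v := by
  unfold dotp; rw [Finset.mul_sum]
  refine Finset.sum_congr rfl fun b _ => by simp [Pi.smul_apply]; ring

lemma dotp_nonneg (v : B → ℝ) : 0 ≤ dotp v v :=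
  Finset.sum_nonneg fun b _ => mul_self_nonneg _

lemma dotp_pos {v : B → ℝ} (hv : v ≠ 0) : 0 < dotp v v := by
  obtain ⟨b, hb⟩ : ∃ b, v b ≠ 0 := by
    by_contra h
    push_neg at h
    exact hv (funext fun b => h b)
  exact Finset.sum_pos' (fun b _ => mul_self_nonneg _)
    ⟨b, Finset.mem_univ b, mul_self_pos.mpr hb⟩

lemma bs_symm (u v : B → ℝ) : bs cs u v = bs cs v u := by
  unfold bs; refine Finset.sum_congr rfl fun w _ => dotp_symm _ _

lemma bs_add_left (u u' v : B → ℝ) : bs cs (u + u') v = bs cs u v + bs cs u' v := by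
  unfold bs; rw [← Finset.sum_add_distrib]
  refine Finset.sum_congr rfl fun w _ => by rw [map_add, dotp_add_left]

lemma bs_smul_left (a : ℝ) (u v : B → ℝ) : bs cs (a • u) v = a * bs cs u v := by
  unfold bs; rw [Finset.mul_sum]
  refine Finset.sum_congr rfl fun w _ => by rw [map_smul, dotp_smul_left]

lemma bs_add_right (u v v' : B → ℝ) : bs cs u (v + v') = bs cs u v + bs cs u v' := by
  rw [bs_symm, bs_add_left, bs_symm cs v u, bs_symm cs v' u]

lemma bs_smul_right (a : ℝ) (u v : B → ℝ) : bs cs u (a • v) = a * bs cs u v := by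
  rw [bs_symm, bs_smul_left, bs_symm cs v u]

lemma bs_pos {v : B → ℝ} (hv : v ≠ 0) : 0 < bs cs v v := by
  unfold bs
  refine Finset.sum_pos' (fun w _ => dotp_nonneg _) ⟨1, Finset.mem_univ 1, ?_⟩
  rw [map_one]
  simpa using dotp_pos hv

lemma bs_rho (g : W) (u v : B → ℝ) : bs cs (rho cs g u) (rho cs g v) = bs cs u v := by
  unfold bs
  have := Equiv.sum_comp (Equiv.mulRight g) (fun w : W => dotp (rho cs w u) (rho cs w v))
  rw [← this]
  refine Finset.sum_congr rfl fun w _ => ?_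
  simp only [Equiv.coe_mulRight, map_mul, Module.End.mul_apply]

lemma bs_sum_left {ι : Type*} (s : Finset ι) (f : ι → (B → ℝ)) (w : B → ℝ) :
    bs cs (∑ x ∈ s, f x) w = ∑ x ∈ s, bs cs (f x) w := by
  induction s using Finset.cons_induction with
  | empty =>
    simp
    have h0 : (0 : B → ℝ) = (0:ℝ) • (0 : B → ℝ) := by simp
    rw [h0, bs_smul_left]; ring
  | cons x s hx ih => rw [Finset.sum_cons, Finset.sum_cons, bs_add_left, ih]

lemma bs_expand (u w : B → ℝ) :
    bs cs u w = ∑ i, ∑ j, u i * w j * bs cs (Ev i) (Ev j) := by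
  conv_lhs => rw [expand_basis u]
  rw [bs_sum_left]
  refine Finset.sum_congr rfl fun i _ => ?_
  rw [bs_smul_left]
  conv_lhs => rw [expand_basis w, bs_symm, bs_sum_left]
  rw [Finset.mul_sum]
  refine Finset.sum_congr rfl fun j _ => ?_
  rw [bs_smul_left, bs_symm cs (Ev j) (Ev i)]
  ring

/-- the crucial rescaling identity -/
lemma bs_eq_kf_mul (u : B → ℝ) (i : B) :
    bs cs u (Ev i) = kf M u (Ev i) * bs cs (Ev i) (Ev i) := by
  set a : ℝ := kf M u (Ev i) with ha
  have hperp : kf M (u - a • Ev i) (Ev i) = 0 := by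
    rw [kf_sub_left, kf_smul_left, kf_Ev_Ev, Km_diag]; ring
  have hfix : sig M i (u - a • Ev i) = u - a • Ev i := sig_fix M hperp
  have h1 : bs cs (u - a • Ev i) (Ev i) = - bs cs (u - a • Ev i) (Ev i) := by
    conv_lhs => rw [← bs_rho cs (cs.simple i)]
    simp only [rho_simple]
    rw [hfix, sig_apply_Ev_self]
    rw [show - Ev i = (-1 : ℝ) • Ev i by module, bs_smul_right]
    ring
  have h2 : bs cs (u - a • Ev i) (Ev i) = 0 := by linarith
  have h3 : u = (u - a • Ev i) + a • Ev i := by module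
  calc bs cs u (Ev i) = bs cs ((u - a • Ev i) + a • Ev i) (Ev i) := by rw [← h3]
    _ = bs cs (u - a • Ev i) (Ev i) + a * bs cs (Ev i) (Ev i) := by
        rw [bs_add_left, bs_smul_left]
    _ = a * bs cs (Ev i) (Ev i) := by rw [h2]; ring

theorem kf_posdef {W2 : Type*} [Group W2] [Fintype W2] (cs2 : CoxeterSystem M W2)
    {v : B → ℝ} (hv : v ≠ 0) : 0 < kf M v v := by
  set Bd : B → ℝ := fun b => bs cs2 (Ev b) (Ev b) with hBd
  have hBpos : ∀ b, 0 < Bd b := fun b => bs_pos cs2 (by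
    intro h
    have := congrFun h b
    simp [Ev, Pi.single_apply] at this)
  set cc : B → ℝ := fun b => (Real.sqrt (Bd b))⁻¹ with hcc
  have hccpos : ∀ b, 0 < cc b := fun b => by
    rw [hcc]
    exact inv_pos.mpr (Real.sqrt_pos.mpr (hBpos b))
  have hmatch : ∀ i j, kf M (Ev i) (Ev j) = (cc i * cc j) * bs cs2 (Ev i) (Ev j) := by
    intro i j
    by_cases h0 : bs cs2 (Ev i) (Ev j) = 0
    · have := bs_eq_kf_mul cs2 (Ev i) j
      rw [h0] at this
      have hk : kf M (Ev i) (Ev j) = 0 := by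
        rcases mul_eq_zero.mp this.symm with h | h
        · exact h
        · exact absurd h (ne_of_gt (hBpos j))
      rw [hk, h0]; ring
    · have e1 : bs cs2 (Ev i) (Ev j) = kf M (Ev i) (Ev j) * Bd j := bs_eq_kf_mul cs2 (Ev i) j
      have e2 : bs cs2 (Ev j) (Ev i) = kf M (Ev j) (Ev i) * Bd i := bs_eq_kf_mul cs2 (Ev j) i
      rw [bs_symm, kf_symm] at e2
      have hkne : kf M (Ev i) (Ev j) ≠ 0 := by
        intro h; rw [h] at e1; simp at e1; exact h0 e1
      have hBij : Bd i = Bd j := by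
        have := e1.symm.trans e2
        exact (mul_left_cancel₀ hkne this).symm
      rw [e1]
      simp only [hcc]
      rw [hBij]
      have : (Real.sqrt (Bd j))⁻¹ * (Real.sqrt (Bd j))⁻¹ * (kf M (Ev i) (Ev j) * Bd j)
          = kf M (Ev i) (Ev j) * ((Real.sqrt (Bd j) * Real.sqrt (Bd j))⁻¹ * Bd j) := by
        rw [mul_inv]; ring
      rw [this, Real.mul_self_sqrt (hBpos j).le, inv_mul_cancel₀ (ne_of_gt (hBpos j)), mul_one]
  set Tv : B → ℝ := fun b => cc b * v b with hTv
  have hTveq : kf M v v = bs cs2 Tv Tv := by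
    rw [kf_expand, bs_expand]
    refine Finset.sum_congr rfl fun i _ => Finset.sum_congr rfl fun j _ => ?_
    rw [hmatch i j]
    simp only [hTv]
    ring
  have hTvne : Tv ≠ 0 := by
    obtain ⟨b, hb⟩ : ∃ b, v b ≠ 0 := by
      by_contra h; push_neg at h; exact hv (funext fun b => h b)
    intro h
    have := congrFun h b
    simp only [hTv, Pi.zero_apply] at this
    exact hb (by
      rcases mul_eq_zero.mp this with h' | h'
      · exact absurd h' (ne_of_gt (hccpos b))
      · exact h')
  rw [hTveq]
  exact bs_pos cs2 hTvne

end Avg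
end Rep

section FixRank
variable {B : Type*} [DecidableEq B] [Fintype B]
variable {W : Type*} [Group W] {M : CoxeterMatrix B} (cs : CoxeterSystem M W)

noncomputable def fixSub (g : Module.End ℝ (B → ℝ)) : Submodule ℝ (B → ℝ) :=
  LinearMap.ker (g - LinearMap.id)

lemma mem_fixSub {g : Module.End ℝ (B → ℝ)} {v : B → ℝ} : v ∈ fixSub g ↔ g v = v := by
  simp [fixSub, LinearMap.mem_ker, LinearMap.sub_apply, sub_eq_zero]

lemma fixSub_one : fixSub (1 : Module.End ℝ (B → ℝ)) = ⊤ := by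
  ext v; simp [mem_fixSub]

noncomputable def rhoEquiv (w : W) : (B → ℝ) ≃ₗ[ℝ] (B → ℝ) :=
  LinearEquiv.ofLinear (rho cs w) (rho cs w⁻¹)
    (by rw [← Module.End.mul_eq_comp, ← map_mul, mul_inv_cancel, map_one]; rfl)
    (by rw [← Module.End.mul_eq_comp, ← map_mul, inv_mul_cancel, map_one]; rfl)

lemma rhoEquiv_apply (w : W) (v : B → ℝ) : rhoEquiv cs w v = rho cs w v := rfl

lemma card_le_finrank_fix_refl {t : W} (ht : cs.IsReflection t) :
    Fintype.card B ≤ Module.finrank ℝ (fixSub (rho cs t)) + 1 := by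
  obtain ⟨w, i, rfl⟩ := ht
  have hrank : Fintype.card B ≤ Module.finrank ℝ (LinearMap.ker (kfun M i)) + 1 := by
    have h1 := LinearMap.finrank_range_add_finrank_ker (kfun M i)
    have h2 : Module.finrank ℝ (LinearMap.range (kfun M i)) ≤ 1 := by
      have := Submodule.finrank_le (LinearMap.range (kfun M i))
      simpa using this
    have h3 : Module.finrank ℝ (B → ℝ) = Fintype.card B :=
      Module.finrank_fintype_fun_eq_card ℝ
    omega
  have hmap : Submodule.map (rhoEquiv cs w : (B → ℝ) →ₗ[ℝ] (B → ℝ)) (LinearMap.ker (kfun M i))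
      ≤ fixSub (rho cs (w * cs.simple i * w⁻¹)) := by
    rintro v ⟨u, hu, rfl⟩
    rw [SetLike.mem_coe, LinearMap.mem_ker] at hu
    rw [mem_fixSub]
    have e1 : rho cs (w * cs.simple i * w⁻¹) (rhoEquiv cs w u) = rho cs (w * cs.simple i) u := by
      rw [rhoEquiv_apply, ← Module.End.mul_apply, ← map_mul]
      have : (w * cs.simple i * w⁻¹) * w = w * cs.simple i := by group
      rw [this]
    rw [LinearEquiv.coe_coe, e1, map_mul, Module.End.mul_apply, rho_simple]
    rw [sig_fix M hu]
    rfl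
  calc Fintype.card B ≤ Module.finrank ℝ (LinearMap.ker (kfun M i)) + 1 := hrank
    _ = Module.finrank ℝ (Submodule.map (rhoEquiv cs w : (B → ℝ) →ₗ[ℝ] (B → ℝ)) (LinearMap.ker (kfun M i))) + 1 := by
        rw [LinearEquiv.finrank_map_eq]
    _ ≤ Module.finrank ℝ (fixSub (rho cs (w * cs.simple i * w⁻¹))) + 1 := by
        have := Submodule.finrank_mono hmap
        omega

lemma fix_inter (g h : Module.End ℝ (B → ℝ)) : fixSub g ⊓ fixSub h ≤ fixSub (g * h) := by
  intro v hv
  rw [Submodule.mem_inf] at hv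
  obtain ⟨hg, hh⟩ := hv
  rw [mem_fixSub] at hg hh ⊢
  rw [Module.End.mul_apply, hh, hg]

lemma card_le_finrank_fix_prod (ts : List W) (h : ∀ t ∈ ts, cs.IsReflection t) :
    Fintype.card B ≤ Module.finrank ℝ (fixSub (rho cs ts.prod)) + ts.length := by
  induction ts with
  | nil =>
    simp only [List.prod_nil, List.length_nil, add_zero]
    have key : ∀ g : Module.End ℝ (B → ℝ), g = 1 → Fintype.card B ≤ Module.finrank ℝ (fixSub g) := by
      rintro g rfl; rw [fixSub_one, finrank_top, Module.finrank_fintype_fun_eq_card ℝ]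
    exact key _ (by simp)
  | cons t ts ih =>
    have ht : cs.IsReflection t := h t (List.mem_cons_self)
    have hts : ∀ t' ∈ ts, cs.IsReflection t' := fun t' h' => h t' (List.mem_cons_of_mem t h')
    have h1 := card_le_finrank_fix_refl cs ht
    have h2 := ih hts
    rw [List.prod_cons, map_mul]
    have hint := fix_inter (rho cs t) (rho cs ts.prod)
    have hsum := Submodule.finrank_sup_add_finrank_inf_eq (fixSub (rho cs t)) (fixSub (rho cs ts.prod))
    have hsup : Module.finrank ℝ ↥((fixSub (rho cs t)) ⊔ (fixSub (rho cs ts.prod))) ≤ Fintype.card B := by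
      have := Submodule.finrank_le ((fixSub (rho cs t)) ⊔ (fixSub (rho cs ts.prod)))
      rwa [Module.finrank_fintype_fun_eq_card ℝ] at this
    have hmono := Submodule.finrank_mono hint
    simp only [List.length_cons]
    omega

lemma rho_word_coord (L : List B) (v : B → ℝ) (a : B) (ha : a ∉ L) :
    (rho cs (cs.wordProd L)) v a = v a := by
  induction L with
  | nil => simp [CoxeterSystem.wordProd_nil]
  | cons j L ih =>
    have haj : a ≠ j := fun h => ha (by subst h; exact List.mem_cons_self)
    have haL : a ∉ L := fun h => ha (List.mem_cons_of_mem j h)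
    rw [CoxeterSystem.wordProd_cons, map_mul, Module.End.mul_apply, rho_simple, sig_apply]
    rw [Pi.sub_apply, Pi.smul_apply]
    have : Ev j a = 0 := by simp [Ev, Pi.single_apply, haj]
    rw [this, smul_zero, sub_zero, ih haL]

lemma fix_coef (L : List B) (hnd : L.Nodup) (v : B → ℝ)
    (hfix : rho cs (cs.wordProd L) v = v) : ∀ i ∈ L, kf M v (Ev i) = 0 := by
  induction L with
  | nil => intro i hi; simp at hi
  | cons i L ih =>
    have hiL : i ∉ L := (List.nodup_cons.mp hnd).1
    have hndL : L.Nodup := (List.nodup_cons.mp hnd).2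
    set u := rho cs (cs.wordProd L) v with hu
    have heq : sig M i u = v := by
      rw [hu, ← rho_simple cs i, ← Module.End.mul_apply, ← map_mul, ← CoxeterSystem.wordProd_cons]
      exact hfix
    have hui : u i = v i := rho_word_coord cs L v i hiL
    have hkfu : kf M u (Ev i) = 0 := by
      have := congrFun heq i
      rw [sig_apply, Pi.sub_apply, Pi.smul_apply] at this
      have hEi : Ev i i = 1 := by simp [Ev]
      rw [hEi, smul_eq_mul, mul_one, hui] at this
      linarith
    have huv : u = v := by
      rw [← heq, sig_fix M hkfu]
    have hfixL : rho cs (cs.wordProd L) v = v := by rw [← hu, huv]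
    intro i' hi'
    rcases List.mem_cons.mp hi' with rfl | hmem
    · rw [← huv]; exact hkfu
    · exact ih hndL hfixL i' hmem

theorem fix_cox [Fintype W] (l : List B) (hnd : l.Nodup) (hall : ∀ b : B, b ∈ l) :
    fixSub (rho cs (cs.wordProd l)) = ⊥ := by
  rw [Submodule.eq_bot_iff]
  intro v hv
  rw [mem_fixSub] at hv
  have hcoef : ∀ i, kf M v (Ev i) = 0 := fun i => fix_coef cs l hnd v hv i (hall i)
  by_contra hvne
  have hpos := kf_posdef cs (v := v) hvne
  have hzero : kf M v v = 0 := by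
    have h1 : kf M v v = kf M v (∑ b, v b • Ev b) := by rw [← expand_basis]
    rw [h1, kf_symm, kf_sum_left]
    refine Finset.sum_eq_zero fun b _ => ?_
    rw [kf_smul_left, kf_symm, hcoef b]
    ring
  linarith

end FixRank

section Words
variable {B : Type*} [DecidableEq B]
variable {W : Type*} [Group W] {M : CoxeterMatrix B} (cs : CoxeterSystem M W)

/-- noncommuting pair -/
def adjM (M : CoxeterMatrix B) (i j : B) : Prop := i ≠ j ∧ M i j ≠ 2

lemma adjM_symm {i j : B} (h : adjM M i j) : adjM M j i :=
  ⟨h.1.symm, by rw [M.symmetric j i]; exact h.2⟩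

/-- i occurs before j in l -/
def Before (l : List B) (i j : B) : Prop := [i, j].Sublist l

lemma before_mem_left {l : List B} {i j : B} (h : Before l i j) : i ∈ l :=
  h.subset (by simp)

lemma before_mem_right {l : List B} {i j : B} (h : Before l i j) : j ∈ l :=
  h.subset (by simp)

lemma before_cons {l : List B} {a i j : B} (h : Before l i j) : Before (a :: l) i j :=
  h.trans (List.sublist_cons_self a l)

lemma before_of_cons {l : List B} {a i j : B} (ha : a ∉ l) (h : Before (a :: l) i j)
    (hia : i ≠ a) : Before l i j := by
  cases h with
  | cons _ h' => exact h'
  | cons_cons => exact absurd rfl hia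

lemma before_head {l : List B} {a j : B} (hj : j ∈ l) : Before (a :: l) a j :=
  List.Sublist.cons_cons a (List.singleton_sublist.mpr hj)

lemma before_asymm : ∀ {l : List B}, l.Nodup → ∀ {i j : B}, i ≠ j →
    Before l i j → Before l j i → False := by
  intro l
  induction l with
  | nil => intro _ i j _ h; cases h
  | cons a t ih =>
    intro hnd i j hij h1 h2
    have hat : a ∉ t := (List.nodup_cons.mp hnd).1
    have hndt : t.Nodup := (List.nodup_cons.mp hnd).2
    cases h1 with
    | cons _ h1' =>
      cases h2 with
      | cons _ h2' => exact ih hndt hij h1' h2'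
      | cons_cons _ h2' =>
        -- j = a, [i] <+ t, but also [i,j] <+ t so j ∈ t, j = a ∈ t contradiction
        exact hat (before_mem_right h1')
    | cons_cons _ h1' =>
      -- i = a, [j] <+ t
      cases h2 with
      | cons _ h2' => exact hat (before_mem_right h2')
      | cons_cons _ h2' => exact hij rfl

lemma before_total {i j : B} (hij : i ≠ j) : ∀ {l : List B}, i ∈ l → j ∈ l →
    Before l i j ∨ Before l j i := by
  intro l
  induction l with
  | nil => intro h; cases h
  | cons a t ih =>
    intro hi hj
    by_cases hia : i = a
    · subst hia
      have hjt : j ∈ t := by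
        rcases List.mem_cons.mp hj with h | h
        · exact absurd h.symm hij
        · exact h
      exact Or.inl (before_head hjt)
    · by_cases hja : j = a
      · subst hja
        have hit : i ∈ t := by
          rcases List.mem_cons.mp hi with h | h
          · exact absurd h hia
          · exact h
        exact Or.inr (before_head hit)
      · have hit : i ∈ t := by
          rcases List.mem_cons.mp hi with h | h
          · exact absurd h hia
          · exact h
        have hjt : j ∈ t := by
          rcases List.mem_cons.mp hj with h | h
          · exact absurd h hja
          · exact h
        rcases ih hit hjt with h | h
        · exact Or.inl (before_cons h)
        · exact Or.inr (before_cons h)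

lemma sublist_erase {u l : List B} {b : B} (hnd : l.Nodup) (h : u.Sublist l) (hb : b ∉ u) :
    u.Sublist (l.erase b) := by
  rw [List.Nodup.erase_eq_filter hnd]
  have h1 : u.filter (· != b) = u := by
    rw [List.filter_eq_self]
    intro a ha
    simp only [bne_iff_ne, ne_eq]
    exact fun he => hb (he ▸ ha)
  have h2 := List.Sublist.filter (· != b) h
  rw [h1] at h2
  exact h2

lemma before_erase {l : List B} {b i j : B} (hnd : l.Nodup) (h : Before l i j)
    (hi : i ≠ b) (hj : j ≠ b) : Before (l.erase b) i j := by
  refine sublist_erase hnd h ?_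
  intro hmem
  rcases List.mem_cons.mp hmem with h' | h'
  · exact hi h'.symm
  · exact hj (List.mem_singleton.mp h').symm

lemma before_of_erase {l : List B} {b i j : B} (h : Before (l.erase b) i j) : Before l i j :=
  h.trans (List.erase_sublist)

/-- commuting generators commute -/
lemma simple_comm {i j : B} (h : M i j = 2) :
    cs.simple i * cs.simple j = cs.simple j * cs.simple i := by
  have hp := cs.simple_mul_simple_pow i j
  rw [h, pow_two] at hp
  have : cs.simple i * cs.simple j = (cs.simple i * cs.simple j)⁻¹ := by
    rw [eq_inv_iff_mul_eq_one]
    exact hp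
  rw [this, mul_inv_rev, cs.inv_simple, cs.inv_simple]

lemma simple_comm_wordProd {b : B} : ∀ {t : List B}, (∀ x ∈ t, M x b = 2) →
    cs.simple b * cs.wordProd t = cs.wordProd t * cs.simple b := by
  intro t
  induction t with
  | nil => intro _; simp [CoxeterSystem.wordProd_nil]
  | cons a t ih =>
    intro h
    rw [CoxeterSystem.wordProd_cons, ← mul_assoc, ← simple_comm cs (M.symmetric a b ▸ h a (List.mem_cons_self)), mul_assoc, ih (fun x hx => h x (List.mem_cons_of_mem a hx)), mul_assoc]

lemma pull_front : ∀ (l : List B), l.Nodup → ∀ b : B, b ∈ l →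
    (∀ x ∈ l, Before l x b → M x b = 2) →
    cs.wordProd l = cs.wordProd (b :: l.erase b) := by
  intro l
  induction l with
  | nil => intro _ b hb; cases hb
  | cons a t ih =>
    intro hnd b hb hcomm
    have hat : a ∉ t := (List.nodup_cons.mp hnd).1
    have hndt : t.Nodup := (List.nodup_cons.mp hnd).2
    by_cases hab : a = b
    · subst hab
      rw [List.erase_cons_head]
    · have hbt : b ∈ t := by
        rcases List.mem_cons.mp hb with h | h
        · exact absurd h.symm hab
        · exact h
      have hMab : M a b = 2 := hcomm a (List.mem_cons_self) (before_head hbt)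
      have hcommt : ∀ x ∈ t, Before t x b → M x b = 2 :=
        fun x hx hbef => hcomm x (List.mem_cons_of_mem a hx) (before_cons hbef)
      have herase : (a :: t).erase b = a :: t.erase b := by
        rw [List.erase_cons, if_neg (by simpa using hab)]
      rw [herase]
      rw [CoxeterSystem.wordProd_cons, ih hndt b hbt hcommt, CoxeterSystem.wordProd_cons]
      rw [CoxeterSystem.wordProd_cons, CoxeterSystem.wordProd_cons]
      rw [← mul_assoc, simple_comm cs hMab, mul_assoc]

lemma pull_back : ∀ (l : List B), l.Nodup → ∀ b : B, b ∈ l →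
    (∀ x ∈ l, Before l b x → M x b = 2) →
    cs.wordProd l = cs.wordProd (l.erase b ++ [b]) := by
  intro l
  induction l with
  | nil => intro _ b hb; cases hb
  | cons a t ih =>
    intro hnd b hb hcomm
    have hat : a ∉ t := (List.nodup_cons.mp hnd).1
    have hndt : t.Nodup := (List.nodup_cons.mp hnd).2
    by_cases hab : a = b
    · subst hab
      rw [List.erase_cons_head]
      have hcommt : ∀ x ∈ t, M x a = 2 := by
        intro x hx
        exact hcomm x (List.mem_cons_of_mem a hx) (before_head hx)
      rw [CoxeterSystem.wordProd_cons, simple_comm_wordProd cs hcommt]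
      rw [CoxeterSystem.wordProd_append]
      congr 1
      rw [CoxeterSystem.wordProd_singleton]
    · have hbt : b ∈ t := by
        rcases List.mem_cons.mp hb with h | h
        · exact absurd h.symm hab
        · exact h
      have hcommt : ∀ x ∈ t, Before t b x → M x b = 2 :=
        fun x hx hbef => hcomm x (List.mem_cons_of_mem a hx) (before_cons hbef)
      have herase : (a :: t).erase b = a :: t.erase b := by
        rw [List.erase_cons, if_neg (by simpa using hab)]
      rw [herase]
      rw [CoxeterSystem.wordProd_cons, ih hndt b hbt hcommt, ← CoxeterSystem.wordProd_cons]
      rfl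

/-- words with the same multiset of (distinct) letters and same relative order of
noncommuting pairs have the same product -/
lemma word_eq_of_sameOrient : ∀ (l1 l2 : List B), l1.Nodup → l1.Perm l2 →
    (∀ i j, adjM M i j → Before l1 i j → Before l2 i j) →
    cs.wordProd l1 = cs.wordProd l2 := by
  intro l1
  induction l1 with
  | nil =>
    intro l2 _ hperm _
    rw [List.Perm.eq_nil hperm.symm]
  | cons x r1 ih =>
    intro l2 hnd hperm horient
    have hx2 : x ∈ l2 := hperm.subset (List.mem_cons_self)
    have hnd2 : l2.Nodup := hperm.nodup hnd
    have hxr1 : x ∉ r1 := (List.nodup_cons.mp hnd).1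
    have hndr1 : r1.Nodup := (List.nodup_cons.mp hnd).2
    have hpred : ∀ y ∈ l2, Before l2 y x → M y x = 2 := by
      intro y hy hbef
      by_cases hyx : y = x
      · exfalso
        subst hyx
        have hdup : ([y, y]).Nodup := List.Nodup.sublist hbef hnd2
        simp at hdup
      · by_cases hM : M y x = 2
        · exact hM
        · exfalso
          have hadj : adjM M x y := adjM_symm ⟨hyx, hM⟩
          have hyel1 : y ∈ x :: r1 := hperm.symm.subset hy
          have hyr1 : y ∈ r1 := by
            rcases List.mem_cons.mp hyel1 with h | h
            · exact absurd h hyx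
            · exact h
          have hxy : Before l2 x y := horient x y hadj (before_head hyr1)
          exact before_asymm hnd2 (fun h => hyx h.symm) hxy hbef
    rw [pull_front cs l2 hnd2 x hx2 hpred]
    have hperm' : r1.Perm (l2.erase x) := by
      have h1 : l2.Perm (x :: l2.erase x) := List.perm_cons_erase hx2
      exact (List.perm_cons x).mp (hperm.trans h1)
    rw [CoxeterSystem.wordProd_cons, CoxeterSystem.wordProd_cons]
    congr 1
    refine ih (l2.erase x) hndr1 hperm' ?_
    intro i j hadj hbef
    have hi : i ∈ r1 := before_mem_left hbef
    have hj : j ∈ r1 := before_mem_right hbef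
    have hix : i ≠ x := fun h => hxr1 (h ▸ hi)
    have hjx : j ≠ x := fun h => hxr1 (h ▸ hj)
    exact before_erase hnd2 (horient i j hadj (before_cons hbef)) hix hjx

end Words

section Steps
variable {B : Type*} [DecidableEq B]
variable {W : Type*} [Group W] {M : CoxeterMatrix B} (cs : CoxeterSystem M W)

def StepO (M : CoxeterMatrix B) (l l' : List B) : Prop :=
  l.Nodup ∧ l.Perm l' ∧ ∀ i j, adjM M i j → Before l i j → Before l' i j

def StepF (M : CoxeterMatrix B) (l l' : List B) : Prop :=
  l.Nodup ∧ ∃ b ∈ l, (∀ x ∈ l, Before l x b → M x b = 2) ∧ l' = l.erase b ++ [b]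

def StepB (M : CoxeterMatrix B) (l l' : List B) : Prop :=
  l.Nodup ∧ ∃ b ∈ l, (∀ x ∈ l, Before l b x → M x b = 2) ∧ l' = b :: l.erase b

def Stp (M : CoxeterMatrix B) (l l' : List B) : Prop :=
  StepO M l l' ∨ StepF M l l' ∨ StepB M l l'

def Rch (M : CoxeterMatrix B) : List B → List B → Prop := Relation.ReflTransGen (Stp M)

lemma step_perm {l l' : List B} (h : Stp M l l') : l.Perm l' := by
  rcases h with ⟨_, hp, _⟩ | ⟨_, b, hb, _, rfl⟩ | ⟨_, b, hb, _, rfl⟩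
  · exact hp
  · exact (List.perm_cons_erase hb).trans (List.perm_append_singleton b _).symm
  · exact List.perm_cons_erase hb

lemma rch_perm {l l' : List B} (h : Rch M l l') : l.Perm l' := by
  induction h with
  | refl => exact List.Perm.refl l
  | tail _ hstep ih => exact ih.trans (step_perm hstep)

lemma step_conj {l l' : List B} (h : Stp M l l') :
    IsConj (cs.wordProd l) (cs.wordProd l') := by
  rcases h with ⟨hnd, hp, hor⟩ | ⟨hnd, b, hb, hcond, rfl⟩ | ⟨hnd, b, hb, hcond, rfl⟩
  · rw [word_eq_of_sameOrient cs l l' hnd hp hor]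
  · rw [pull_front cs l hnd b hb hcond]
    rw [CoxeterSystem.wordProd_cons, CoxeterSystem.wordProd_append,
      CoxeterSystem.wordProd_singleton]
    rw [isConj_iff]
    exact ⟨(cs.simple b)⁻¹, by group⟩
  · rw [pull_back cs l hnd b hb hcond]
    rw [CoxeterSystem.wordProd_cons, CoxeterSystem.wordProd_append,
      CoxeterSystem.wordProd_singleton]
    rw [isConj_iff]
    exact ⟨cs.simple b, by group⟩

lemma rch_conj {l l' : List B} (h : Rch M l l') :
    IsConj (cs.wordProd l) (cs.wordProd l') := by
  induction h with
  | refl => exact IsConj.refl _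
  | tail _ hstep ih => exact ih.trans (step_conj cs hstep)

end Steps

section Leaf
variable {B : Type*} [DecidableEq B] [Fintype B]
variable {W : Type*} [Group W] {M : CoxeterMatrix B}

lemma Km_nonpos (M : CoxeterMatrix B) {i j : B} (hij : i ≠ j) : Km M i j ≤ 0 := by
  unfold Km
  rcases Nat.eq_zero_or_pos (M i j) with h0 | hpos
  · rw [h0]
    norm_num
  · have h1 : M i j ≠ 1 := M.off_diagonal i j hij
    have h2 : 2 ≤ M i j := by omega
    have h2R : (2:ℝ) ≤ (M i j : ℝ) := by exact_mod_cast h2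
    have hc : 0 ≤ Real.cos (Real.pi / (M i j : ℝ)) := by
      apply Real.cos_nonneg_of_mem_Icc
      constructor
      · have : 0 < Real.pi / (M i j : ℝ) := div_pos Real.pi_pos (by linarith)
        linarith [Real.pi_pos]
      · rw [div_le_iff₀ (by linarith : (0:ℝ) < (M i j : ℝ))]
        nlinarith [Real.pi_pos]
    linarith

lemma Km_adj_le (M : CoxeterMatrix B) {i j : B} (h : adjM M i j) : Km M i j ≤ -(1/2) := by
  obtain ⟨hij, hM2⟩ := h
  unfold Km
  rcases Nat.eq_zero_or_pos (M i j) with h0 | hpos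
  · rw [h0]
    norm_num
  · have h1 : M i j ≠ 1 := M.off_diagonal i j hij
    have h3 : 3 ≤ M i j := by omega
    have h3R : (3:ℝ) ≤ (M i j : ℝ) := by exact_mod_cast h3
    have hcos : Real.cos (Real.pi / 3) ≤ Real.cos (Real.pi / (M i j : ℝ)) := by
      apply Real.cos_le_cos_of_nonneg_of_le_pi
      · positivity
      · have : Real.pi / 3 ≤ Real.pi := by linarith [Real.pi_pos]
        exact this
      · apply div_le_div_of_nonneg_left Real.pi_pos.le (by linarith) h3R
    rw [Real.cos_pi_div_three] at hcos
    linarith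

lemma leaf_exists {W2 : Type*} [Group W2] [Fintype W2] (cs2 : CoxeterSystem M W2)
    (S : Finset B) (hS : S.Nonempty) :
    ∃ b ∈ S, ∀ x ∈ S, ∀ y ∈ S, adjM M x b → adjM M y b → x = y := by
  by_contra hcon
  push_neg at hcon
  -- every b in S has two distinct neighbors in S
  set v : B → ℝ := fun b => if b ∈ S then 1 else 0 with hv
  have hvne : v ≠ 0 := by
    obtain ⟨b, hb⟩ := hS
    intro h
    have := congrFun h b
    simp only [hv, if_pos hb, Pi.zero_apply] at this
    norm_num at this
  have hpos := kf_posdef cs2 (v := v) hvne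
  have hexpand : kf M v v = ∑ i ∈ S, ∑ j ∈ S, Km M i j := by
    have h : kf M v v = ∑ i, ∑ j, v i * v j * Km M i j := rfl
    rw [h]
    rw [← Finset.sum_subset (Finset.subset_univ S) (fun i _ hi => ?_)]
    · refine Finset.sum_congr rfl fun i hi => ?_
      rw [← Finset.sum_subset (Finset.subset_univ S) (fun j _ hj => ?_)]
      · refine Finset.sum_congr rfl fun j hj => ?_
        simp [hv, if_pos hi, if_pos hj]
      · simp [hv, if_neg hj]
    · apply Finset.sum_eq_zero
      intro j _
      simp [hv, if_neg hi]
  have hrow : ∀ i ∈ S, ∑ j ∈ S, Km M i j ≤ 0 := by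
    intro i hi
    obtain ⟨x, hx, y, hy, hax, hay, hxy⟩ := hcon i hi
    have hxS : x ∈ S.erase i := Finset.mem_erase.mpr ⟨hax.1, hx⟩
    have hyS : y ∈ S.erase i := Finset.mem_erase.mpr ⟨hay.1, hy⟩
    have hsub : ({x, y} : Finset B) ⊆ S.erase i := by
      intro z hz
      rcases Finset.mem_insert.mp hz with rfl | hz'
      · exact hxS
      · rw [Finset.mem_singleton.mp hz']
        exact hyS
    have hsum1 : ∑ j ∈ S.erase i, Km M i j ≤ ∑ j ∈ ({x,y} : Finset B), Km M i j := by
      have hsd := Finset.sum_sdiff (f := fun j => Km M i j) hsub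
      have hnp : ∑ j ∈ (S.erase i) \ ({x,y} : Finset B), Km M i j ≤ 0 :=
        Finset.sum_nonpos fun j hj =>
          Km_nonpos M (Finset.mem_erase.mp (Finset.mem_sdiff.mp hj).1).1.symm
      linarith
    have hpair : ∑ j ∈ ({x,y} : Finset B), Km M i j = Km M i x + Km M i y := by
      rw [Finset.sum_pair hxy]
    have hKx : Km M i x ≤ -(1/2) := Km_adj_le M (adjM_symm hax)
    have hKy : Km M i y ≤ -(1/2) := Km_adj_le M (adjM_symm hay)
    have hii : Km M i i = 1 := Km_diag M i
    have hsplit : ∑ j ∈ S, Km M i j = Km M i i + ∑ j ∈ S.erase i, Km M i j :=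
      (Finset.add_sum_erase S _ hi).symm
    rw [hsplit, hii]
    linarith
  have : kf M v v ≤ 0 := by
    rw [hexpand]
    exact Finset.sum_nonpos hrow
  linarith

end Leaf

section Sim
variable {B : Type*} [DecidableEq B]
variable {M : CoxeterMatrix B}

lemma not_before_append_last {l : List B} {b x : B} (hb : b ∉ l) :
    ¬ Before (l ++ [b]) b x := by
  intro h
  rw [Before, List.sublist_append_iff] at h
  obtain ⟨u, v, huv, hu, hv⟩ := h
  rcases u with _ | ⟨a, u'⟩
  · simp only [List.nil_append] at huv
    subst huv
    have := hv.length_le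
    simp at this
  · have ha : a = b := by
      have := congrArg (fun t => t.head?) huv
      simp at this
      exact this.symm
    subst ha
    exact hb (hu.subset (List.mem_cons_self))

lemma sublist_of_append_singleton {u l : List B} {b : B} (hb : b ∉ u)
    (h : u.Sublist (l ++ [b])) : u.Sublist l := by
  rw [List.sublist_append_iff] at h
  obtain ⟨u1, u2, rfl, h1, h2⟩ := h
  rcases u2 with _ | ⟨c, u2'⟩
  · simpa using h1
  · exfalso
    have hc : c ∈ [b] := h2.subset (List.mem_cons_self)
    rw [List.mem_singleton] at hc
    subst hc
    exact hb (List.mem_append_right u1 (List.mem_cons_self))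

lemma sublist_of_cons {u l : List B} {b : B} (hb : b ∉ u) (h : u.Sublist (b :: l)) :
    u.Sublist l := by
  cases h with
  | cons _ h' => exact h'
  | cons_cons _ h' => exact absurd (List.mem_cons_self) hb

/-- leaf property for `b` relative to the letters of `l` -/
def Lf (M : CoxeterMatrix B) (b : B) (l : List B) : Prop :=
  ∀ x ∈ l, ∀ y ∈ l, adjM M x b → adjM M y b → x = y

lemma before_self_false {l : List B} {b : B} (hnd : l.Nodup) (h : Before l b b) : False := by
  have : ([b, b]).Nodup := List.Nodup.sublist h hnd
  simp at this

lemma before_cons_cases {l : List B} {a i j : B} (h : Before (a :: l) i j) :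
    (i = a ∧ j ∈ l) ∨ Before l i j := by
  cases h with
  | cons _ h' => exact Or.inr h'
  | cons_cons _ h' => exact Or.inl ⟨rfl, List.singleton_sublist.mp h'⟩

lemma step_lift {b : B} {lmid l2' w : List B} (hstep : Stp M lmid l2')
    (hw : w.erase b = lmid) (hbw : b ∈ w) (hnd : w.Nodup) (hlf : Lf M b w) :
    ∃ w2, Rch M w w2 ∧ w2.erase b = l2' := by
  have hndmid : lmid.Nodup := hw ▸ hnd.erase b
  have hbl : b ∉ lmid := by
    rw [← hw]
    intro hmem
    exact ((List.Nodup.mem_erase_iff hnd).mp hmem).1 rfl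
  have hmem_mid : ∀ x, x ∈ lmid ↔ (x ≠ b ∧ x ∈ w) := by
    intro x
    rw [← hw]
    exact List.Nodup.mem_erase_iff hnd
  rcases hstep with ⟨hndm, hperm, hor⟩ | ⟨hndm, v, hv, hcond, rfl⟩ | ⟨hndm, v, hv, hcond, rfl⟩
  · -- orientation step
    have hbl2 : b ∉ l2' := fun h => hbl (hperm.symm.subset h)
    by_cases Hc : ∃ a ∈ w, adjM M a b ∧ Before w a b
    · -- some neighbour of b comes before b : put b at the end
      obtain ⟨a, haw, haadj, habef⟩ := Hc
      refine ⟨l2' ++ [b], Relation.ReflTransGen.single (Or.inl ⟨hnd, ?_, ?_⟩), ?_⟩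
      · have h1 : w.Perm (b :: lmid) := by
          have := List.perm_cons_erase hbw
          rwa [hw] at this
        exact h1.trans ((List.Perm.cons b hperm).trans (List.perm_append_singleton b l2').symm)
      · intro i j hadj hbef
        by_cases hjb : j = b
        · rw [hjb] at hbef hadj ⊢
          have hib : i ≠ b := hadj.1
          have hiw : i ∈ w := before_mem_left hbef
          have hil : i ∈ l2' := hperm.subset ((hmem_mid i).mpr ⟨hib, hiw⟩)
          exact List.Sublist.append (List.singleton_sublist.mpr hil) (List.Sublist.refl [b])
        · by_cases hib : i = b
          · exfalso
            rw [hib] at hbef hadj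
            have hja : j = a := hlf j (before_mem_right hbef) a haw (adjM_symm hadj) haadj
            rw [hja] at hbef
            exact before_asymm hnd haadj.1 habef hbef
          · have h1 : Before lmid i j := by
              rw [← hw]
              exact before_erase hnd hbef hib hjb
            exact (hor i j hadj h1).trans (List.sublist_append_left l2' [b])
      · rw [List.erase_append_right _ hbl2, List.erase_cons_head, List.append_nil]
    · -- no neighbour of b before b : put b in front
      push_neg at Hc
      refine ⟨b :: l2', Relation.ReflTransGen.single (Or.inl ⟨hnd, ?_, ?_⟩), ?_⟩
      · have h1 : w.Perm (b :: lmid) := by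
          have := List.perm_cons_erase hbw
          rwa [hw] at this
        exact h1.trans (List.Perm.cons b hperm)
      · intro i j hadj hbef
        by_cases hib : i = b
        · rw [hib] at hbef hadj ⊢
          have hjb : j ≠ b := Ne.symm hadj.1
          have hjw : j ∈ w := before_mem_right hbef
          have hjl : j ∈ l2' := hperm.subset ((hmem_mid j).mpr ⟨hjb, hjw⟩)
          exact before_head hjl
        · by_cases hjb : j = b
          · rw [hjb] at hbef hadj
            exact absurd hbef (Hc i (before_mem_left hbef) hadj)
          · have h1 : Before lmid i j := by
              rw [← hw]
              exact before_erase hnd hbef hib hjb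
            exact before_cons (hor i j hadj h1)
      · rw [List.erase_cons_head]
  · -- source flip at v
    have hvb : v ≠ b := ((hmem_mid v).mp hv).1
    have hvw : v ∈ w := ((hmem_mid v).mp hv).2
    by_cases Hc : Before w b v ∧ M b v ≠ 2
    · -- b blocks : flip b first, then v
      have hadjbv : adjM M b v := ⟨fun h => hvb h.symm, Hc.2⟩
      have hcondb : ∀ x ∈ w, Before w x b → M x b = 2 := by
        intro x hx hbef
        by_cases hxb : x = b
        · exact absurd (hxb ▸ hbef) (fun h => before_self_false hnd h)
        · by_cases hxM : M x b = 2
          · exact hxM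
          · exfalso
            have hxv : x = v := hlf x hx v hvw ⟨hxb, hxM⟩ (adjM_symm hadjbv)
            subst hxv
            exact before_asymm hnd hxb hbef Hc.1
      have hstep1 : Stp M w (lmid ++ [b]) :=
        Or.inr (Or.inl ⟨hnd, b, hbw, hcondb, by rw [hw]⟩)
      have hnd1 : (lmid ++ [b]).Nodup := (step_perm hstep1).nodup hnd
      have hvw1 : v ∈ lmid ++ [b] := List.mem_append_left [b] hv
      have hcondv : ∀ x ∈ lmid ++ [b], Before (lmid ++ [b]) x v → M x v = 2 := by
        intro x hx hbef
        by_cases hxb : x = b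
        · subst hxb
          exact absurd hbef (not_before_append_last hbl)
        · have h1 : Before lmid x v :=
            sublist_of_append_singleton (by
              intro hmem
              rcases List.mem_cons.mp hmem with h | h
              · exact hxb h.symm
              · exact hvb (List.mem_singleton.mp h).symm) hbef
          exact hcond x ((hmem_mid x).mpr ⟨hxb, by
            have := before_mem_left hbef
            rcases List.mem_append.mp this with h | h
            · exact ((hmem_mid x).mp h).2
            · exact absurd (List.mem_singleton.mp h) hxb⟩) h1
      have hstep2 : Stp M (lmid ++ [b]) ((lmid ++ [b]).erase v ++ [v]) :=
        Or.inr (Or.inl ⟨hnd1, v, hvw1, hcondv, rfl⟩)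
      refine ⟨(lmid ++ [b]).erase v ++ [v],
        (Relation.ReflTransGen.single hstep1).tail hstep2, ?_⟩
      have hbev : b ∉ lmid.erase v := fun h => hbl (List.mem_of_mem_erase h)
      rw [List.erase_append_left _ hv]
      rw [List.erase_append_left _
        (List.mem_append_right (lmid.erase v) (List.mem_singleton_self b))]
      rw [List.erase_append_right _ hbev, List.erase_cons_head, List.append_nil]
    · -- flip v directly in w
      have hcondv : ∀ x ∈ w, Before w x v → M x v = 2 := by
        intro x hx hbef
        by_cases hxb : x = b
        · subst hxb
          by_cases hM : M x v = 2
          · exact hM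
          · exact absurd ⟨hbef, hM⟩ Hc
        · exact hcond x ((hmem_mid x).mpr ⟨hxb, hx⟩) (by
            rw [← hw]
            exact before_erase hnd hbef hxb hvb)
      refine ⟨w.erase v ++ [v], Relation.ReflTransGen.single
        (Or.inr (Or.inl ⟨hnd, v, hvw, hcondv, rfl⟩)), ?_⟩
      have hbev : b ∈ w.erase v := (List.Nodup.mem_erase_iff hnd).mpr ⟨Ne.symm hvb, hbw⟩
      rw [List.erase_append_left _ hbev, List.erase_comm, hw]
  · -- sink flip at v
    have hvb : v ≠ b := ((hmem_mid v).mp hv).1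
    have hvw : v ∈ w := ((hmem_mid v).mp hv).2
    by_cases Hc : Before w v b ∧ M b v ≠ 2
    · -- b blocks : flip b to the front first, then v
      have hadjvb : adjM M v b := ⟨hvb, by rw [M.symmetric v b]; exact Hc.2⟩
      have hcondb : ∀ x ∈ w, Before w b x → M x b = 2 := by
        intro x hx hbef
        by_cases hxb : x = b
        · exact absurd (hxb ▸ hbef) (fun h => before_self_false hnd h)
        · by_cases hxM : M x b = 2
          · exact hxM
          · exfalso
            have hxv : x = v := hlf x hx v hvw ⟨hxb, hxM⟩ hadjvb
            subst hxv
            exact before_asymm hnd hvb Hc.1 hbef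
      have hstep1 : Stp M w (b :: lmid) :=
        Or.inr (Or.inr ⟨hnd, b, hbw, hcondb, by rw [hw]⟩)
      have hnd1 : (b :: lmid).Nodup := (step_perm hstep1).nodup hnd
      have hvw1 : v ∈ b :: lmid := List.mem_cons_of_mem b hv
      have hcondv : ∀ x ∈ b :: lmid, Before (b :: lmid) v x → M x v = 2 := by
        intro x hx hbef
        rcases before_cons_cases hbef with ⟨hvb', _⟩ | hbef'
        · exact absurd hvb' hvb
        · by_cases hxb : x = b
          · subst hxb
            exact absurd (before_mem_right hbef') hbl
          · exact hcond x (before_mem_right hbef') hbef'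
      have hstep2 : Stp M (b :: lmid) (v :: (b :: lmid).erase v) :=
        Or.inr (Or.inr ⟨hnd1, v, hvw1, hcondv, rfl⟩)
      refine ⟨v :: (b :: lmid).erase v,
        (Relation.ReflTransGen.single hstep1).tail hstep2, ?_⟩
      have h1 : (b :: lmid).erase v = b :: lmid.erase v := by
        rw [List.erase_cons, if_neg (by simpa using Ne.symm hvb)]
      rw [h1]
      rw [List.erase_cons, if_neg (by simpa using hvb), List.erase_cons_head]
    · -- direct sink flip at v in w
      have hcondv : ∀ x ∈ w, Before w v x → M x v = 2 := by
        intro x hx hbef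
        by_cases hxb : x = b
        · by_cases hM : M x v = 2
          · exact hM
          · rw [hxb] at hbef hM
            exact absurd ⟨hbef, hM⟩ Hc
        · exact hcond x ((hmem_mid x).mpr ⟨hxb, hx⟩) (by
            rw [← hw]
            exact before_erase hnd hbef hvb hxb)
      refine ⟨v :: w.erase v, Relation.ReflTransGen.single
        (Or.inr (Or.inr ⟨hnd, v, hvw, hcondv, rfl⟩)), ?_⟩
      rw [List.erase_cons, if_neg (by simpa using hvb), List.erase_comm, hw]

end Sim

section SimTop
variable {B : Type*} [DecidableEq B]
variable {M : CoxeterMatrix B}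

lemma rch_lift {b : B} {l1' l2' : List B} (h : Rch M l1' l2') :
    ∀ w : List B, w.erase b = l1' → b ∈ w → w.Nodup → Lf M b w →
    ∃ w2, Rch M w w2 ∧ w2.erase b = l2' := by
  induction h with
  | refl => intro w hw _ _ _; exact ⟨w, Relation.ReflTransGen.refl, hw⟩
  | tail h1 hstep ih =>
    intro w hw hbw hnd hlf
    obtain ⟨wmid, hr, hwm⟩ := ih w hw hbw hnd hlf
    have hperm : w.Perm wmid := rch_perm hr
    have hbm : b ∈ wmid := hperm.subset hbw
    have hndm : wmid.Nodup := hperm.nodup hnd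
    have hlfm : Lf M b wmid := fun x hx y hy =>
      hlf x (hperm.symm.subset hx) y (hperm.symm.subset hy)
    obtain ⟨w2, hr2, hw2⟩ := step_lift hstep hwm hbm hndm hlfm
    exact ⟨w2, hr.trans hr2, hw2⟩

lemma coloring_exists {W2 : Type*} [Group W2] [Fintype W2] [Fintype B]
    (cs2 : CoxeterSystem M W2) :
    ∀ (n : ℕ) (S : Finset B), S.card = n →
    ∃ I : Finset B, I ⊆ S ∧ (∀ i ∈ I, ∀ j ∈ I, i ≠ j → M i j = 2) ∧
      (∀ i ∈ S, i ∉ I → ∀ j ∈ S, j ∉ I → i ≠ j → M i j = 2) := by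
  intro n
  induction n using Nat.strong_induction_on with
  | _ n ih =>
    intro S hcard
    rcases Finset.eq_empty_or_nonempty S with rfl | hS
    · exact ⟨∅, by simp, by simp, by simp⟩
    · obtain ⟨b, hbS, hleaf⟩ := leaf_exists cs2 S hS
      obtain ⟨I', hI'sub, hI'1, hI'2⟩ := ih (S.erase b).card
        (by
          have hpos : 0 < S.card := Finset.card_pos.mpr hS
          rw [Finset.card_erase_of_mem hbS]
          omega) (S.erase b) rfl
      have hbI' : b ∉ I' := fun h => (Finset.mem_erase.mp (hI'sub h)).1 rfl
      have hSsub : ∀ x ∈ S.erase b, x ∈ S := fun x hx => (Finset.mem_erase.mp hx).2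
      by_cases Hn : ∃ a ∈ I', adjM M a b
      · -- b's neighbour is in I' : put b in the complement
        obtain ⟨a, haI, haadj⟩ := Hn
        refine ⟨I', hI'sub.trans (Finset.erase_subset b S), hI'1, ?_⟩
        intro i hi hiI j hj hjI hij
        have haS : a ∈ S := hSsub a (hI'sub haI)
        by_cases hib : i = b
        · by_cases hM : M i j = 2
          · exact hM
          · exfalso
            have hjb : j ≠ b := fun h => hij (hib.trans h.symm)
            have hadjj : adjM M j b := ⟨hjb, fun h => hM (by rw [hib, M.symmetric b j]; exact h)⟩
            have hja : j = a := hleaf j hj a haS hadjj haadj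
            exact hjI (by rw [hja]; exact haI)
        · by_cases hjb : j = b
          · by_cases hM : M i j = 2
            · exact hM
            · exfalso
              have hadji : adjM M i b := ⟨hib, fun h => hM (by rw [hjb]; exact h)⟩
              have hia : i = a := hleaf i hi a haS hadji haadj
              exact hiI (by rw [hia]; exact haI)
          · exact hI'2 i (Finset.mem_erase.mpr ⟨hib, hi⟩) hiI
              j (Finset.mem_erase.mpr ⟨hjb, hj⟩) hjI hij
      · -- no neighbour in I' : put b into I'
        push_neg at Hn
        refine ⟨insert b I', ?_, ?_, ?_⟩
        · intro x hx
          rcases Finset.mem_insert.mp hx with rfl | hx'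
          · exact hbS
          · exact hSsub x (hI'sub hx')
        · intro i hi j hj hij
          rcases Finset.mem_insert.mp hi with rfl | hi'
          · -- i = b
            by_cases hM : M i j = 2
            · exact hM
            · exfalso
              rcases Finset.mem_insert.mp hj with rfl | hj'
              · exact hij rfl
              · exact Hn j hj' ⟨hij.symm, by rw [M.symmetric]; exact hM⟩
          · rcases Finset.mem_insert.mp hj with rfl | hj'
            · by_cases hM : M i j = 2
              · exact hM
              · exact absurd ⟨hij, hM⟩ (Hn i hi')
            · exact hI'1 i hi' j hj' hij
        · intro i hi hiI j hj hjI hij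
          have hib : i ≠ b := fun h => hiI (h ▸ Finset.mem_insert_self b I')
          have hjb : j ≠ b := fun h => hjI (h ▸ Finset.mem_insert_self b I')
          exact hI'2 i (Finset.mem_erase.mpr ⟨hib, hi⟩)
            (fun h => hiI (Finset.mem_insert_of_mem h))
            j (Finset.mem_erase.mpr ⟨hjb, hj⟩)
            (fun h => hjI (Finset.mem_insert_of_mem h)) hij

lemma rch_all {W2 : Type*} [Group W2] [Fintype W2] [Fintype B]
    (cs2 : CoxeterSystem M W2) :
    ∀ (n : ℕ) (S : Finset B), S.card = n → ∀ l1 l2 : List B, l1.Nodup → l2.Nodup →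
      l1.toFinset = S → l2.toFinset = S → Rch M l1 l2 := by
  intro n
  induction n using Nat.strong_induction_on with
  | _ n ih =>
    intro S hcard l1 l2 hnd1 hnd2 hS1 hS2
    rcases Finset.eq_empty_or_nonempty S with rfl | hS
    · have h1 : l1 = [] := by rwa [← List.toFinset_eq_empty_iff]
      have h2 : l2 = [] := by rwa [← List.toFinset_eq_empty_iff]
      rw [h1, h2]
      exact Relation.ReflTransGen.refl
    · obtain ⟨b, hbS, hleaf⟩ := leaf_exists cs2 S hS
      have hmem1 : ∀ x, x ∈ l1 ↔ x ∈ S := fun x => by rw [← List.mem_toFinset, hS1]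
      have hmem2 : ∀ x, x ∈ l2 ↔ x ∈ S := fun x => by rw [← List.mem_toFinset, hS2]
      have hb1 : b ∈ l1 := (hmem1 b).mpr hbS
      have hb2 : b ∈ l2 := (hmem2 b).mpr hbS
      have herase_toF : ∀ (l : List B), l.Nodup → l.toFinset = S →
          (l.erase b).toFinset = S.erase b := by
        intro l hnd hlS
        ext x
        rw [List.mem_toFinset, List.Nodup.mem_erase_iff hnd, Finset.mem_erase,
          ← hlS, List.mem_toFinset]
      have hIH : Rch M (l1.erase b) (l2.erase b) :=
        ih (S.erase b).card (by
          have hpos : 0 < S.card := Finset.card_pos.mpr hS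
          rw [Finset.card_erase_of_mem hbS]
          omega)
          (S.erase b) rfl (l1.erase b) (l2.erase b) (hnd1.erase b) (hnd2.erase b)
          (herase_toF l1 hnd1 hS1) (herase_toF l2 hnd2 hS2)
      have hlf1 : Lf M b l1 := fun x hx y hy =>
        hleaf x ((hmem1 x).mp hx) y ((hmem1 y).mp hy)
      obtain ⟨w2, hr, hw2⟩ := rch_lift hIH l1 rfl hb1 hnd1 hlf1
      have hpermw : l1.Perm w2 := rch_perm hr
      have hbw2 : b ∈ w2 := hpermw.subset hb1
      have hndw2 : w2.Nodup := hpermw.nodup hnd1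
      have hmemw2 : ∀ x, x ∈ w2 ↔ x ∈ S :=
        fun x => ⟨fun h => (hmem1 x).mp (hpermw.symm.subset h),
                  fun h => hpermw.subset ((hmem1 x).mpr h)⟩
      have hperm12 : w2.Perm l2 := by
        have h1 : w2.Perm (b :: w2.erase b) := List.perm_cons_erase hbw2
        rw [hw2] at h1
        exact h1.trans (List.perm_cons_erase hb2).symm
      by_cases Hor : ∀ i j, adjM M i j → Before w2 i j → Before l2 i j
      · exact hr.tail (Or.inl ⟨hndw2, hperm12, Hor⟩)
      · push_neg at Hor
        obtain ⟨i, j, hadj, hbef, hnbef⟩ := Hor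
        have hbnw2 : b ∉ w2.erase b := fun h => ((List.Nodup.mem_erase_iff hndw2).mp h).1 rfl
        have hij_b : i = b ∨ j = b := by
          by_contra hc
          push_neg at hc
          have h1 : Before (l2.erase b) i j := by
            rw [← hw2]
            exact before_erase hndw2 hbef hc.1 hc.2
          exact hnbef (before_of_erase h1)
        rcases hij_b with hib | hjb
        · -- i = b : b occurs before its neighbour j in w2 but after in l2
          rw [hib] at hbef hadj hnbef
          have hjw2 : j ∈ w2 := before_mem_right hbef
          have hjS : j ∈ S := (hmemw2 j).mp hjw2
          have hjl2 : j ∈ l2 := (hmem2 j).mpr hjS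
          have hcondb : ∀ x ∈ w2, Before w2 x b → M x b = 2 := by
            intro x hx hbefx
            by_cases hxb : x = b
            · exact absurd (hxb ▸ hbefx) (fun h => before_self_false hndw2 h)
            · by_cases hxM : M x b = 2
              · exact hxM
              · exfalso
                have hxj : x = j := hleaf x ((hmemw2 x).mp hx) j hjS ⟨hxb, hxM⟩ (adjM_symm hadj)
                rw [hxj] at hbefx
                exact before_asymm hndw2 hadj.1 hbef hbefx
          have hstepF : Stp M w2 (w2.erase b ++ [b]) :=
            Or.inr (Or.inl ⟨hndw2, b, hbw2, hcondb, rfl⟩)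
          have hjb' : Before l2 j b := by
            rcases before_total (fun h => hadj.1 h.symm : j ≠ b) hjl2 hb2 with h | h
            · exact h
            · exact absurd h hnbef
          have hstepO : Stp M (w2.erase b ++ [b]) l2 := by
            refine Or.inl ⟨(step_perm hstepF).nodup hndw2, ?_, ?_⟩
            · rw [hw2]
              exact (List.perm_append_singleton b _).trans (List.perm_cons_erase hb2).symm
            · intro i' j' hadj' hbef'
              by_cases hi'b : i' = b
              · rw [hi'b] at hbef'
                exact absurd hbef' (not_before_append_last hbnw2)
              · by_cases hj'b : j' = b
                · rw [hj'b] at hbef' hadj' ⊢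
                  have hi'w2 : i' ∈ w2 := by
                    have := before_mem_left hbef'
                    rcases List.mem_append.mp this with h | h
                    · exact List.mem_of_mem_erase h
                    · exact absurd (List.mem_singleton.mp h) hi'b
                  have hi'j : i' = j :=
                    hleaf i' ((hmemw2 i').mp hi'w2) j hjS hadj' (adjM_symm hadj)
                  rw [hi'j]
                  exact hjb'
                · have h1 : Before (w2.erase b) i' j' :=
                    sublist_of_append_singleton (by
                      intro hmem
                      rcases List.mem_cons.mp hmem with h | h
                      · exact hi'b h.symm
                      · exact hj'b (List.mem_singleton.mp h).symm) hbef'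
                  rw [hw2] at h1
                  exact before_of_erase h1
          exact (hr.tail hstepF).tail hstepO
        · -- j = b
          rw [hjb] at hbef hadj hnbef
          have hiw2 : i ∈ w2 := before_mem_left hbef
          have hiS : i ∈ S := (hmemw2 i).mp hiw2
          have hil2 : i ∈ l2 := (hmem2 i).mpr hiS
          have hcondb : ∀ x ∈ w2, Before w2 b x → M x b = 2 := by
            intro x hx hbefx
            by_cases hxb : x = b
            · exact absurd (hxb ▸ hbefx) (fun h => before_self_false hndw2 h)
            · by_cases hxM : M x b = 2
              · exact hxM
              · exfalso
                have hxi : x = i := hleaf x ((hmemw2 x).mp hx) i hiS ⟨hxb, hxM⟩ ⟨hadj.1, hadj.2⟩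
                rw [hxi] at hbefx
                exact before_asymm hndw2 hadj.1 hbef hbefx
          have hstepB : Stp M w2 (b :: w2.erase b) :=
            Or.inr (Or.inr ⟨hndw2, b, hbw2, hcondb, rfl⟩)
          have hbi' : Before l2 b i := by
            rcases before_total (hadj.1 : i ≠ b) hil2 hb2 with h | h
            · exact absurd h hnbef
            · exact h
          have hstepO : Stp M (b :: w2.erase b) l2 := by
            refine Or.inl ⟨(step_perm hstepB).nodup hndw2, ?_, ?_⟩
            · rw [hw2]
              exact (List.perm_cons_erase hb2).symm
            · intro i' j' hadj' hbef'
              rcases before_cons_cases hbef' with ⟨hi'b, hj'mem⟩ | hbef''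
              · -- i' = b
                rw [hi'b] at hadj' ⊢
                have hj'w2 : j' ∈ w2 := List.mem_of_mem_erase hj'mem
                have hj'i : j' = i :=
                  hleaf j' ((hmemw2 j').mp hj'w2) i hiS (adjM_symm hadj') hadj
                rw [hj'i]
                exact hbi'
              · have hi'm : i' ∈ w2.erase b := before_mem_left hbef''
                have hj'm : j' ∈ w2.erase b := before_mem_right hbef''
                have h1 : Before (l2.erase b) i' j' := by rw [← hw2]; exact hbef''
                exact before_of_erase h1
          exact (hr.tail hstepB).tail hstepO

end SimTop

section Final
variable {B : Type*} [DecidableEq B] [Fintype B]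
variable {W : Type*} [Group W] {M : CoxeterMatrix B} (cs : CoxeterSystem M W)

lemma conj_map_prod (g : W) (ts : List W) :
    (ts.map (fun t => g * t * g⁻¹)).prod = g * ts.prod * g⁻¹ := by
  induction ts with
  | nil => simp
  | cons t ts ih =>
    rw [List.map_cons, List.prod_cons, List.prod_cons, ih]
    group

lemma wordProd_eq_map_prod (ω : List B) : cs.wordProd ω = (ω.map cs.simple).prod := rfl

/-- any product of reflections equal to an element conjugate to the product
of all the distinct simple reflections has length at least `card B` -/
lemma conj_refl_list_long [Fintype W] (l : List B) (hnd : l.Nodup) (hall : ∀ b : B, b ∈ l)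
    {v : W} (hconj : IsConj (cs.wordProd l) v) (ts : List W)
    (hrefl : ∀ t ∈ ts, cs.IsReflection t) (hprod : ts.prod = v) :
    Fintype.card B ≤ ts.length := by
  obtain ⟨g, hg⟩ := isConj_iff.mp hconj
  set ts' := ts.map (fun t => g⁻¹ * t * g) with hts'
  have hprod' : ts'.prod = cs.wordProd l := by
    rw [hts']
    have : (fun t => g⁻¹ * t * g) = (fun t => g⁻¹ * t * (g⁻¹)⁻¹) := by
      funext t; rw [inv_inv]
    rw [this, conj_map_prod, hprod, ← hg]
    group
  have hrefl' : ∀ t ∈ ts', cs.IsReflection t := by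
    intro t ht
    rw [hts', List.mem_map] at ht
    obtain ⟨t0, ht0, rfl⟩ := ht
    have : g⁻¹ * t0 * g = g⁻¹ * t0 * (g⁻¹)⁻¹ := by rw [inv_inv]
    rw [this]
    exact CoxeterSystem.IsReflection.conj (hrefl t0 ht0) g⁻¹
  have hbound := card_le_finrank_fix_prod cs ts' hrefl'
  rw [hprod'] at hbound
  rw [fix_cox cs l hnd hall] at hbound
  rw [finrank_bot] at hbound
  rw [hts', List.length_map] at hbound
  omega

/-- any product of reflections equal to a product of commuting distinct simple
reflections indexed by `I` has length at least `I.card` -/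
lemma commuting_refl_list_long [Fintype W] (I : Finset B)
    (hI : ∀ i ∈ I, ∀ j ∈ I, i ≠ j → M i j = 2)
    (ts : List W) (hrefl : ∀ t ∈ ts, cs.IsReflection t)
    (hprod : ts.prod = cs.wordProd I.toList) :
    I.card ≤ ts.length := by
  classical
  set Φ : (B → ℝ) →ₗ[ℝ] (↥I → ℝ) := LinearMap.pi (fun i => kfun M i.val) with hΦ
  have hΦapp : ∀ v (i : ↥I), Φ v i = kf M v (Ev i.val) := fun v i => rfl
  have hsurj : Function.Surjective Φ := by
    intro f
    refine ⟨∑ i : ↥I, f i • Ev i.val, ?_⟩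
    funext j
    rw [hΦapp, kf_sum_left]
    rw [Finset.sum_eq_single j]
    · rw [kf_smul_left, kf_Ev_Ev, Km_diag, mul_one]
    · intro i _ hij
      rw [kf_smul_left, kf_Ev_Ev, Km_commuting M (hI i.val i.2 j.val j.2
        (fun h => hij (Subtype.ext h))), mul_zero]
    · intro h
      exact absurd (Finset.mem_univ j) h
  have hrank : Module.finrank ℝ (LinearMap.ker Φ) + I.card = Fintype.card B := by
    have h1 := LinearMap.finrank_range_add_finrank_ker Φ
    have h2 : LinearMap.range Φ = ⊤ := LinearMap.range_eq_top.mpr hsurj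
    rw [h2] at h1
    rw [finrank_top] at h1
    have h3 : Module.finrank ℝ (↥I → ℝ) = I.card := by
      rw [Module.finrank_fintype_fun_eq_card ℝ, Fintype.card_coe]
    have h4 : Module.finrank ℝ (B → ℝ) = Fintype.card B :=
      Module.finrank_fintype_fun_eq_card ℝ
    omega
  have hfix : fixSub (rho cs (cs.wordProd I.toList)) ≤ LinearMap.ker Φ := by
    intro v hv
    rw [mem_fixSub] at hv
    rw [LinearMap.mem_ker]
    funext i
    rw [hΦapp]
    exact fix_coef cs I.toList (Finset.nodup_toList I) v hv i.val
      (Finset.mem_toList.mpr i.2)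
    
  have hmono := Submodule.finrank_mono hfix
  have hbound := card_le_finrank_fix_prod cs ts hrefl
  rw [hprod] at hbound
  simp at hΦapp
  omega

lemma commuting_word_sq (L : List B) (hnd : L.Nodup)
    (hcomm : ∀ i ∈ L, ∀ j ∈ L, i ≠ j → M i j = 2) :
    cs.wordProd L * cs.wordProd L = 1 := by
  induction L with
  | nil => simp [CoxeterSystem.wordProd_nil]
  | cons a t ih =>
    have hat : a ∉ t := (List.nodup_cons.mp hnd).1
    have hndt : t.Nodup := (List.nodup_cons.mp hnd).2
    have hcommt : ∀ i ∈ t, ∀ j ∈ t, i ≠ j → M i j = 2 := fun i hi j hj =>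
      hcomm i (List.mem_cons_of_mem a hi) j (List.mem_cons_of_mem a hj)
    have hc : ∀ x ∈ t, M x a = 2 := fun x hx =>
      hcomm x (List.mem_cons_of_mem a hx) a (List.mem_cons_self)
        (fun h => hat (h ▸ hx))
    rw [CoxeterSystem.wordProd_cons]
    have hcs : cs.simple a * cs.wordProd t = cs.wordProd t * cs.simple a :=
      simple_comm_wordProd cs hc
    calc cs.simple a * cs.wordProd t * (cs.simple a * cs.wordProd t)
        = cs.simple a * (cs.wordProd t * cs.simple a) * cs.wordProd t := by group
      _ = cs.simple a * (cs.simple a * cs.wordProd t) * cs.wordProd t := by rw [hcs]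
      _ = (cs.simple a * cs.simple a) * (cs.wordProd t * cs.wordProd t) := by group
      _ = 1 := by rw [cs.simple_mul_simple_self, ih hndt hcommt, one_mul]

end Final

end CPX


/-- In a finite Coxeter group, the conjugacy class `X` of the Coxeter element
`s₁ s₂ ⋯ sₙ` contains an element of minimal length in `X` whose excess and reflection
excess are both zero. -/
theorem coxeterClass_exists_minimal_length_excess_zero
    {B W : Type*} [Group W] [Finite W] {M : CoxeterMatrix B}
    (cs : CoxeterSystem M W) (l : List B) (hnd : l.Nodup) (hall : ∀ b : B, b ∈ l) :
    ∃ w : W, IsConj (l.map cs.simple).prod w ∧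
      (∀ v : W, IsConj (l.map cs.simple).prod v → cs.length w ≤ cs.length v) ∧
      cs.excess w = 0 ∧ cs.reflExcess w = 0 := by
  classical
  haveI : Fintype B := ⟨l.toFinset, fun b => List.mem_toFinset.mpr (hall b)⟩
  haveI : Fintype W := Fintype.ofFinite W
  set N := Fintype.card B with hN
  have hceq : (l.map cs.simple).prod = cs.wordProd l := rfl
  have huniv : (Finset.univ : Finset B) = l.toFinset := by
    ext b
    simp [List.mem_toFinset, hall b]
  -- every conjugate of the Coxeter element has length at least N
  have hlow : ∀ v : W, IsConj (cs.wordProd l) v → N ≤ cs.length v := by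
    intro v hv
    obtain ⟨ω, hωlen, hωeq⟩ := cs.exists_reduced_word v
    have hts : ∀ t ∈ ω.map cs.simple, cs.IsReflection t := by
      intro t ht
      obtain ⟨i, _, rfl⟩ := List.mem_map.mp ht
      exact cs.isReflection_simple i
    have hb := CPX.conj_refl_list_long cs l hnd hall hv (ω.map cs.simple) hts
      (by rw [← CPX.wordProd_eq_map_prod, ← hωeq])
    rwa [List.length_map, ← (hωlen : cs.length (cs.wordProd ω) = ω.length), ← hωeq] at hb
  have hrlow : ∀ v : W, IsConj (cs.wordProd l) v → N ≤ cs.reflLength v := by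
    intro v hv
    have hne : {n : ℕ | ∃ ts : List W, (∀ t ∈ ts, cs.IsReflection t) ∧ ts.length = n ∧
        ts.prod = v}.Nonempty := by
      obtain ⟨ω, hωlen, hωeq⟩ := cs.exists_reduced_word v
      refine ⟨ω.length, ω.map cs.simple, ?_, List.length_map _, ?_⟩
      · intro t ht
        obtain ⟨i, _, rfl⟩ := List.mem_map.mp ht
        exact cs.isReflection_simple i
      · rw [← CPX.wordProd_eq_map_prod, ← hωeq]
    obtain ⟨ts, hts1, hts2, hts3⟩ := Nat.sInf_mem hne
    have hb := CPX.conj_refl_list_long cs l hnd hall hv ts hts1 hts3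
    rw [hts2] at hb
    exact hb
  -- the bipartite ordering
  obtain ⟨I, hIsub, hI1, hI2⟩ := CPX.coloring_exists cs N Finset.univ (by rw [Finset.card_univ])
  set lI := I.toList with hlI
  set lJ := Iᶜ.toList with hlJ
  set l2 := lI ++ lJ with hl2
  have hndlI : lI.Nodup := I.nodup_toList
  have hndlJ : lJ.Nodup := Iᶜ.nodup_toList
  have hnd2 : l2.Nodup := by
    rw [hl2, List.nodup_append]
    refine ⟨hndlI, hndlJ, ?_⟩
    intro a ha b ha'
    rw [hlI, Finset.mem_toList] at ha
    rw [hlJ, Finset.mem_toList, Finset.mem_compl] at ha'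
    rintro rfl; exact ha' ha
  have htoF2 : l2.toFinset = Finset.univ := by
    ext z
    simp only [Finset.mem_univ, iff_true, List.mem_toFinset, hl2, List.mem_append,
      hlI, hlJ, Finset.mem_toList, Finset.mem_compl]
    by_cases hz : z ∈ I
    · exact Or.inl hz
    · exact Or.inr hz
  have hrch := CPX.rch_all cs N Finset.univ (by rw [Finset.card_univ]) l l2 hnd hnd2
    huniv.symm htoF2
  have hconj : IsConj (cs.wordProd l) (cs.wordProd l2) := CPX.rch_conj cs hrch
  set x := cs.wordProd lI with hxdef
  set y := cs.wordProd lJ with hydef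
  set w := cs.wordProd l2 with hwdef
  have hw : w = x * y := cs.wordProd_append lI lJ
  have hcommI : ∀ i ∈ I, ∀ j ∈ I, i ≠ j → M i j = 2 := hI1
  have hcommJ : ∀ i ∈ Iᶜ, ∀ j ∈ Iᶜ, i ≠ j → M i j = 2 := by
    intro i hi j hj hij
    exact hI2 i (Finset.mem_univ i) (Finset.mem_compl.mp hi)
      j (Finset.mem_univ j) (Finset.mem_compl.mp hj) hij
  have hx2 : x * x = 1 := CPX.commuting_word_sq cs lI hndlI (fun i hi j hj =>
    hI1 i (Finset.mem_toList.mp hi) j (Finset.mem_toList.mp hj))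
  have hy2 : y * y = 1 := CPX.commuting_word_sq cs lJ hndlJ (fun i hi j hj =>
    hcommJ i (Finset.mem_toList.mp hi) j (Finset.mem_toList.mp hj))
  have hlen2 : l2.length = N := by
    rw [hl2, List.length_append, hlI, hlJ, Finset.length_toList, Finset.length_toList,
      Finset.card_add_card_compl, hN]
  -- length of w
  have hlw : cs.length w = N := by
    refine le_antisymm ?_ (hlow w hconj)
    calc cs.length w ≤ l2.length := cs.length_wordProd_le l2
      _ = N := hlen2
  -- length of x and y
  have hlx : cs.length x = I.card := by
    refine le_antisymm ?_ ?_
    · calc cs.length x ≤ lI.length := cs.length_wordProd_le lI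
        _ = I.card := Finset.length_toList I
    · obtain ⟨ω, hωlen, hωeq⟩ := cs.exists_reduced_word x
      have hb := CPX.commuting_refl_list_long cs I hI1 (ω.map cs.simple) (by
        intro t ht
        obtain ⟨i, _, rfl⟩ := List.mem_map.mp ht
        exact cs.isReflection_simple i) (by rw [← CPX.wordProd_eq_map_prod, ← hωeq])
      rwa [List.length_map, ← (hωlen : cs.length (cs.wordProd ω) = ω.length), ← hωeq] at hb
  have hly : cs.length y = Iᶜ.card := by
    refine le_antisymm ?_ ?_
    · calc cs.length y ≤ lJ.length := cs.length_wordProd_le lJ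
        _ = Iᶜ.card := Finset.length_toList Iᶜ
    · obtain ⟨ω, hωlen, hωeq⟩ := cs.exists_reduced_word y
      have hb := CPX.commuting_refl_list_long cs Iᶜ hcommJ (ω.map cs.simple) (by
        intro t ht
        obtain ⟨i, _, rfl⟩ := List.mem_map.mp ht
        exact cs.isReflection_simple i) (by rw [← CPX.wordProd_eq_map_prod, ← hωeq])
      rwa [List.length_map, ← (hωlen : cs.length (cs.wordProd ω) = ω.length), ← hωeq] at hb
  have hIcard : I.card + Iᶜ.card = N := by rw [Finset.card_add_card_compl, hN]
  -- reflection lengths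
  have hrup : ∀ (ω : List B), cs.reflLength (cs.wordProd ω) ≤ ω.length := by
    intro ω
    apply Nat.sInf_le
    refine ⟨ω.map cs.simple, ?_, List.length_map _, (CPX.wordProd_eq_map_prod cs ω).symm⟩
    intro t ht
    obtain ⟨i, _, rfl⟩ := List.mem_map.mp ht
    exact cs.isReflection_simple i
  have hrw : cs.reflLength w = N := by
    refine le_antisymm ?_ (hrlow w hconj)
    calc cs.reflLength w ≤ l2.length := hrup l2
      _ = N := hlen2
  have hrlge : ∀ (S : Finset B), (∀ i ∈ S, ∀ j ∈ S, i ≠ j → M i j = 2) →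
      S.card ≤ cs.reflLength (cs.wordProd S.toList) := by
    intro S hS
    have hne : {n : ℕ | ∃ ts : List W, (∀ t ∈ ts, cs.IsReflection t) ∧ ts.length = n ∧
        ts.prod = cs.wordProd S.toList}.Nonempty := by
      refine ⟨S.toList.length, S.toList.map cs.simple, ?_, List.length_map _,
        (CPX.wordProd_eq_map_prod cs S.toList).symm⟩
      intro t ht
      obtain ⟨i, _, rfl⟩ := List.mem_map.mp ht
      exact cs.isReflection_simple i
    obtain ⟨ts, hts1, hts2, hts3⟩ := Nat.sInf_mem hne
    have hb := CPX.commuting_refl_list_long cs S hS ts hts1 hts3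
    rw [hts2] at hb
    exact hb
  have hrx : cs.reflLength x = I.card := by
    refine le_antisymm ?_ (hrlge I hI1)
    calc cs.reflLength x ≤ lI.length := hrup lI
      _ = I.card := Finset.length_toList I
  have hry : cs.reflLength y = Iᶜ.card := by
    refine le_antisymm ?_ (hrlge Iᶜ hcommJ)
    calc cs.reflLength y ≤ lJ.length := hrup lJ
      _ = Iᶜ.card := Finset.length_toList Iᶜ
  refine ⟨w, by rw [hceq]; exact hconj, ?_, ?_, ?_⟩
  · intro v hv
    rw [hceq] at hv
    calc cs.length w = N := hlw
      _ ≤ cs.length v := hlow v hv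
  · apply Nat.sInf_eq_zero.mpr
    left
    exact ⟨x, y, hx2, hy2, hw, by rw [hlx, hly, hlw, hIcard, add_zero]⟩
  · apply Nat.sInf_eq_zero.mpr
    left
    exact ⟨x, y, hx2, hy2, hw, by rw [hrx, hry, hrw, hIcard],
      by rw [hlx, hly, hlw, hIcard, add_zero]⟩
end
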